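/- arXiv:1411.7581 — 4 statements merged into one kernel-verified Lean document; each statement's English description precedes it below -/
import Mathlib

section
/- Let x lie on the boundary of Ω, and suppose there exist l ∈ {1,…,k−1} and a permutation (s_1,…,s_{k−1}) of {1,…,k−1} such that Σ_{j=1}^{l} x_{s_j} = Σ_{j=1}^{l} Ā_j. Then Λ(x) = Λ₁(x) + Λ₂(x) + log( C(k,l) ), where C(k,l) is the binomial coefficient k!/(l!(k−l)!), Π̂₁ is the set of permutations of {1,…,l}, Π̂₂ is the set of permutations of {l+1,…,k}, Λ₁(x) = sup over (u_1,…,u_{l−1}) ∈ ℝ^{l−1} of [ Σ_{j=1}^{l−1} x_{s_j} u_j − (1/b) Σ_{i=1}^b log( (1/l!) Σ_{π̂₁∈Π̂₁} exp( Σ_{j=1}^{l−1} a_{i,π̂₁(j)} u_j ) ) ], and Λ₂(x) = sup over (u_{l+1},…,u_{k−1}) ∈ ℝ^{k−l−1} of [ Σ_{j=l+1}^{k−1} x_{s_j} u_j − (1/b) Σ_{i=1}^b log( (1/(k−l)!) Σ_{π̂₂∈Π̂₂} exp( Σ_{j=l+1}^{k−1} a_{i,π̂₂(j)} u_j ) )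 ]. -/
open Finset

/-- The set Π of injective maps from {1,…,k−1} into {1,…,k}
(the first k−1 values of permutations of {1,…,k}); it has cardinality k!. -/
noncomputable def Pis (k : ℕ) : Finset (Fin (k - 1) → Fin k) :=
  Finset.univ.filter Function.Injective

/-- The averaged cumulant generating function κ. -/
noncomputable def kappa (b k : ℕ) (a : Fin b → Fin k → ℝ) (t : Fin (k - 1) → ℝ) : ℝ :=
  (b : ℝ)⁻¹ * ∑ i : Fin b, Real.log ((k.factorial : ℝ)⁻¹ *
    ∑ π ∈ Pis k, Real.exp (∑ j : Fin (k - 1), t j * a i (π j)))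

/-- The quantity tᵀx − κ(t) whose supremum over t defines Λ(x). -/
noncomputable def lamArg (b k : ℕ) (a : Fin b → Fin k → ℝ) (x t : Fin (k - 1) → ℝ) : ℝ :=
  (∑ j : Fin (k - 1), t j * x j) - kappa b k a t

/-- Λ(x) = sup_t ( tᵀx − κ(t) ), valued in ℝ ∪ {+∞} (EReal). -/
noncomputable def Lam (b k : ℕ) (a : Fin b → Fin k → ℝ) (x : Fin (k - 1) → ℝ) : EReal :=
  ⨆ t : Fin (k - 1) → ℝ, ((lamArg b k a x t : ℝ) : EReal)

/-- The admissible domain Ω: points x at which the supremum defining Λ(x) is attained. -/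
def Omega (b k : ℕ) (a : Fin b → Fin k → ℝ) : Set (Fin (k - 1) → ℝ) :=
  {x | ∃ t : Fin (k - 1) → ℝ, ∀ s : Fin (k - 1) → ℝ, lamArg b k a x s ≤ lamArg b k a x t}

/-- The column means Ā_j of the matrix A. -/
noncomputable def Abar (b k : ℕ) (a : Fin b → Fin k → ℝ) (j : Fin k) : ℝ :=
  (b : ℝ)⁻¹ * ∑ i : Fin b, a i j

/-- The vertex Ā_π = (Ā_{π(1)}, …, Ā_{π(k−1)}). -/
noncomputable def AbarPi (b k : ℕ) (a : Fin b → Fin k → ℝ) (π : Fin (k - 1) → Fin k) :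
    Fin (k - 1) → ℝ :=
  fun j => Abar b k a (π j)

/-- The polytope 𝒫, the convex hull of the points Ā_π for π ∈ Π. -/
noncomputable def PolyP (b k : ℕ) (a : Fin b → Fin k → ℝ) : Set (Fin (k - 1) → ℝ) :=
  convexHull ℝ {x | ∃ π ∈ Pis k, AbarPi b k a π = x}

/-- Λ₁(x): the supremum over (u_1,…,u_{l−1}) of
Σ_{j=1}^{l−1} x_{s_j} u_j − (1/b) Σ_i log( (1/l!) Σ_{π̂₁ ∈ Π̂₁} exp( Σ_{j=1}^{l−1} a_{i,π̂₁(j)} u_j ) ),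
where Π̂₁ is the set of permutations of {1,…,l}.  (Indices are 0-based in Lean: the
variables u_1,…,u_{l−1} are the coordinates of u with index < l−1, and π̂₁ is realized as a
permutation of `Fin l`, i.e. of the first l columns.) -/
noncomputable def Lam1 (b k : ℕ) (a : Fin b → Fin k → ℝ) (l : ℕ) (hlk : l ≤ k)
    (s : Equiv.Perm (Fin (k - 1))) (x : Fin (k - 1) → ℝ) : EReal :=
  ⨆ u : Fin (k - 1) → ℝ,
    (((∑ j : Fin (l - 1), x (s (Fin.castLE (Nat.sub_le_sub_right hlk 1) j)) *
          u (Fin.castLE (Nat.sub_le_sub_right hlk 1) j)) -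
      (b : ℝ)⁻¹ * ∑ i : Fin b, Real.log ((l.factorial : ℝ)⁻¹ *
        ∑ π₁ : Equiv.Perm (Fin l), Real.exp
          (∑ j : Fin (l - 1), a i (Fin.castLE hlk (π₁ (Fin.castLE (Nat.sub_le l 1) j))) *
            u (Fin.castLE (Nat.sub_le_sub_right hlk 1) j)) : ℝ)) : EReal)

/-- Λ₂(x): the supremum over (u_{l+1},…,u_{k−1}) of
Σ_{j=l+1}^{k−1} x_{s_j} u_j − (1/b) Σ_i log( (1/(k−l)!) Σ_{π̂₂ ∈ Π̂₂} exp( Σ_{j=l+1}^{k−1} a_{i,π̂₂(j)} u_j ) ),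
where Π̂₂ is the set of permutations of {l+1,…,k}.  (0-based in Lean: the variables
u_{l+1},…,u_{k−1} are the coordinates of u with index in {l,…,k−2}, realized through
`Fin (k−1−l)` shifted by l, and π̂₂ is realized as a permutation of `Fin (k−l)`, i.e. of
the last k−l columns.) -/
noncomputable def Lam2 (b k : ℕ) (a : Fin b → Fin k → ℝ) (l : ℕ)
    (s : Equiv.Perm (Fin (k - 1))) (x : Fin (k - 1) → ℝ) : EReal :=
  ⨆ u : Fin (k - 1) → ℝ,
    (((∑ j : Fin (k - 1 - l), x (s ⟨l + j.val, by have := j.isLt; omega⟩) *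
          u ⟨l + j.val, by have := j.isLt; omega⟩) -
      (b : ℝ)⁻¹ * ∑ i : Fin b, Real.log (((k - l).factorial : ℝ)⁻¹ *
        ∑ π₂ : Equiv.Perm (Fin (k - l)), Real.exp
          (∑ j : Fin (k - 1 - l),
            a i (⟨l + (π₂ (Fin.castLE (Nat.sub_le_sub_right (Nat.sub_le k 1) l) j)).val,
                  by have := (π₂ (Fin.castLE (Nat.sub_le_sub_right (Nat.sub_le k 1) l) j)).isLt;
                     have := j.isLt; omega⟩ : Fin k) *
            u ⟨l + j.val, by have := j.isLt; omega⟩) : ℝ)) : EReal)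

section Aux
variable (b k l : ℕ) (a : Fin b → Fin k → ℝ)

noncomputable def S1 (hlk : l ≤ k) (i : Fin b) (u : Fin (k - 1) → ℝ) : ℝ :=
  ∑ π₁ : Equiv.Perm (Fin l), Real.exp
    (∑ j : Fin (l - 1), a i (Fin.castLE hlk (π₁ (Fin.castLE (Nat.sub_le l 1) j))) *
      u (Fin.castLE (Nat.sub_le_sub_right hlk 1) j))

noncomputable def S2 (i : Fin b) (u : Fin (k - 1) → ℝ) : ℝ :=
  ∑ π₂ : Equiv.Perm (Fin (k - l)), Real.exp
    (∑ j : Fin (k - 1 - l),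
      a i (⟨l + (π₂ (Fin.castLE (Nat.sub_le_sub_right (Nat.sub_le k 1) l) j)).val,
            by have := (π₂ (Fin.castLE (Nat.sub_le_sub_right (Nat.sub_le k 1) l) j)).isLt;
               have := j.isLt; omega⟩ : Fin k) *
        u ⟨l + j.val, by have := j.isLt; omega⟩)

variable (x : Fin (k - 1) → ℝ) (s : Equiv.Perm (Fin (k - 1)))

noncomputable def r1 (hlk : l ≤ k) (u : Fin (k - 1) → ℝ) : ℝ :=
  (∑ j : Fin (l - 1), x (s (Fin.castLE (Nat.sub_le_sub_right hlk 1) j)) *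
      u (Fin.castLE (Nat.sub_le_sub_right hlk 1) j)) -
    (b : ℝ)⁻¹ * ∑ i : Fin b, Real.log ((l.factorial : ℝ)⁻¹ * S1 b k l a hlk i u)

noncomputable def r2 (u : Fin (k - 1) → ℝ) : ℝ :=
  (∑ j : Fin (k - 1 - l), x (s ⟨l + j.val, by have := j.isLt; omega⟩) *
      u ⟨l + j.val, by have := j.isLt; omega⟩) -
    (b : ℝ)⁻¹ * ∑ i : Fin b, Real.log (((k - l).factorial : ℝ)⁻¹ * S2 b k l a i u)

lemma Lam1_eq (hlk : l ≤ k) :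
    Lam1 b k a l hlk s x = ⨆ u : Fin (k - 1) → ℝ, ((r1 b k l a x s hlk u : ℝ) : EReal) := rfl

lemma Lam2_eq :
    Lam2 b k a l s x = ⨆ u : Fin (k - 1) → ℝ, ((r2 b k l a x s u : ℝ) : EReal) := rfl

noncomputable def Gs (i : Fin b) (w : Fin (k - 1) → ℝ) : ℝ :=
  ∑ ρ ∈ Pis k, Real.exp (∑ j : Fin (k - 1), w j * a i (ρ j))

noncomputable def psi (w : Fin (k - 1) → ℝ) : ℝ :=
  (∑ j : Fin (k - 1), w j * x (s j)) -
    (b : ℝ)⁻¹ * ∑ i : Fin b, Real.log ((k.factorial : ℝ)⁻¹ * Gs b k a i w)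

noncomputable def Wf (u v : Fin (k - 1) → ℝ) (c : ℝ) : Fin (k - 1) → ℝ :=
  fun j => if (j : ℕ) < l - 1 then u j + c else if (j : ℕ) < l then c else v j

noncomputable def GoodS : Finset (Fin (k - 1) → Fin k) :=
  (Pis k).filter (fun ρ => ∀ j : Fin (k - 1), (j : ℕ) < l → ((ρ j : ℕ) < l))

noncomputable def Al (i : Fin b) : ℝ := ∑ m ∈ univ.filter (fun m : Fin k => (m : ℕ) < l), a i m

noncomputable def joinP (hl2 : l ≤ k - 1)
    (p : Equiv.Perm (Fin l) × Equiv.Perm (Fin (k - l))) : Fin (k - 1) → Fin k := fun j =>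
  if h : (j : ℕ) < l then Fin.castLE (by omega) (p.1 ⟨(j : ℕ), h⟩)
  else ⟨l + (p.2 ⟨(j : ℕ) - l, by have := j.isLt; omega⟩).val,
    by have := (p.2 ⟨(j : ℕ) - l, by have := j.isLt; omega⟩).isLt; have := j.isLt; omega⟩

end Aux

lemma map_castLEEmb_eq {N M : ℕ} (h : M ≤ N) :
    (univ : Finset (Fin M)).map (Fin.castLEEmb h) = univ.filter (fun j : Fin N => (j : ℕ) < M) := by
  ext j
  simp only [Finset.mem_map, Finset.mem_univ, true_and, Finset.mem_filter, Fin.castLEEmb_apply]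
  constructor
  · rintro ⟨m, rfl⟩; exact m.isLt
  · intro hj; exact ⟨⟨(j : ℕ), hj⟩, rfl⟩

lemma sum_filter_lt_eq {N M : ℕ} (h : M ≤ N) (f : Fin N → ℝ) :
    ∑ j ∈ univ.filter (fun j : Fin N => (j : ℕ) < M), f j = ∑ m : Fin M, f (Fin.castLE h m) := by
  rw [← map_castLEEmb_eq h, Finset.sum_map]; rfl

lemma sum_filter_ge_eq {N M : ℕ} (h : M ≤ N) (f : Fin N → ℝ) :
    ∑ j ∈ univ.filter (fun j : Fin N => ¬ (j : ℕ) < M), f j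
      = ∑ m : Fin (N - M), f ⟨M + (m : ℕ), by omega⟩ := by
  refine (Finset.sum_bij' (fun (m : Fin (N - M)) (_ : m ∈ univ) => (⟨M + (m : ℕ), by omega⟩ : Fin N))
    (fun (j : Fin N) (hj : j ∈ univ.filter _) => (⟨(j : ℕ) - M, by
      have := (Finset.mem_filter.mp hj).2; omega⟩ : Fin (N - M))) ?_ ?_ ?_ ?_ ?_).symm
  · intro m _; simp only [Finset.mem_filter, Finset.mem_univ, true_and]; omega
  · intro j hj; exact Finset.mem_univ _
  · intro m _; ext; simp
  · intro j hj; have := (Finset.mem_filter.mp hj).2; ext; simp; omega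
  · intro m _; rfl

lemma mem_Pis_iff {k : ℕ} {ρ : Fin (k - 1) → Fin k} : ρ ∈ Pis k ↔ Function.Injective ρ := by
  simp [Pis]

lemma lamArg_comp (b k : ℕ) (a : Fin b → Fin k → ℝ) (x : Fin (k - 1) → ℝ)
    (s : Equiv.Perm (Fin (k - 1))) (w : Fin (k - 1) → ℝ) :
    lamArg b k a x (fun j => w (s.symm j)) = psi b k a x s w := by
  have h1 : (∑ j : Fin (k - 1), w (s.symm j) * x j) = ∑ j : Fin (k - 1), w j * x (s j) := by
    rw [← Equiv.sum_comp s (fun j => w (s.symm j) * x j)]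
    simp
  have h2 : ∀ i : Fin b, (∑ ρ ∈ Pis k, Real.exp (∑ j : Fin (k - 1), w (s.symm j) * a i (ρ j)))
      = Gs b k a i w := by
    intro i
    rw [Gs]
    refine Finset.sum_bij' (fun π _ => π ∘ ⇑s) (fun ρ _ => ρ ∘ ⇑s.symm) ?_ ?_ ?_ ?_ ?_
    · intro π hπ
      exact mem_Pis_iff.mpr ((mem_Pis_iff.mp hπ).comp s.injective)
    · intro ρ hρ
      exact mem_Pis_iff.mpr ((mem_Pis_iff.mp hρ).comp s.symm.injective)
    · intro π _; funext j; simp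
    · intro ρ _; funext j; simp
    · intro π _
      congr 1
      rw [← Equiv.sum_comp s (fun j => w (s.symm j) * a i (π j))]
      simp
  simp only [lamArg, psi, kappa, h1, h2]

lemma lam_eq_psi (b k : ℕ) (a : Fin b → Fin k → ℝ) (x : Fin (k - 1) → ℝ)
    (s : Equiv.Perm (Fin (k - 1))) :
    Lam b k a x = ⨆ w : Fin (k - 1) → ℝ, ((psi b k a x s w : ℝ) : EReal) := by
  rw [Lam, ← Equiv.iSup_comp (g := fun t => ((lamArg b k a x t : ℝ) : EReal))
    (Equiv.arrowCongr s (Equiv.refl ℝ))]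
  refine iSup_congr fun w => ?_
  have h : (Equiv.arrowCongr s (Equiv.refl ℝ)) w = fun j => w (s.symm j) := rfl
  rw [h, lamArg_comp]

lemma card_filter_lt (k l : ℕ) (h : l ≤ k) :
    (univ.filter (fun m : Fin k => (m : ℕ) < l)).card = l := by
  rw [← map_castLEEmb_eq h, Finset.card_map, Finset.card_univ, Fintype.card_fin]

lemma mem_GoodS_iff {k l : ℕ} {ρ : Fin (k - 1) → Fin k} :
    ρ ∈ GoodS k l ↔ Function.Injective ρ ∧ ∀ j : Fin (k - 1), (j : ℕ) < l → ((ρ j : ℕ) < l) := by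
  simp [GoodS, Pis, and_assoc]

lemma good_ge {k l : ℕ} (hl2 : l ≤ k - 1) {ρ : Fin (k - 1) → Fin k} (hρ : ρ ∈ GoodS k l)
    {j : Fin (k - 1)} (hj : ¬ (j : ℕ) < l) : l ≤ (ρ j : ℕ) := by
  obtain ⟨hinj, hgood⟩ := mem_GoodS_iff.mp hρ
  by_contra hlt
  push_neg at hlt
  have hlk1 : l ≤ k - 1 := hl2
  -- the image of the first l indices fills the first l columns
  set T : Finset (Fin k) := (univ : Finset (Fin l)).image (fun m => ρ (Fin.castLE hlk1 m)) with hT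
  have hsub : T ⊆ univ.filter (fun m : Fin k => (m : ℕ) < l) := by
    intro y hy
    obtain ⟨m, _, rfl⟩ := Finset.mem_image.mp hy
    exact Finset.mem_filter.mpr ⟨Finset.mem_univ _, hgood _ m.isLt⟩
  have hcard : T.card = l := by
    rw [hT, Finset.card_image_of_injective _ (fun m₁ m₂ h => by
      have := hinj h
      exact Fin.ext (by simpa [Fin.ext_iff] using this))]
    simp
  have hTeq : T = univ.filter (fun m : Fin k => (m : ℕ) < l) := by
    apply Finset.eq_of_subset_of_card_le hsub
    rw [hcard, card_filter_lt k l (by omega)]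
  have hmem : ρ j ∈ T := by
    rw [hTeq]
    exact Finset.mem_filter.mpr ⟨Finset.mem_univ _, hlt⟩
  obtain ⟨m, _, hm⟩ := Finset.mem_image.mp hmem
  have := hinj hm
  rw [← this] at hj
  exact hj (by simpa using m.isLt)

lemma joinP_mem_GoodS {k l : ℕ} (hl1 : 1 ≤ l) (hl2 : l ≤ k - 1)
    (p : Equiv.Perm (Fin l) × Equiv.Perm (Fin (k - l))) :
    joinP k l hl2 p ∈ GoodS k l := by
  refine mem_GoodS_iff.mpr ⟨?_, ?_⟩
  · intro j₁ j₂ heq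
    by_cases h1 : (j₁ : ℕ) < l <;> by_cases h2 : (j₂ : ℕ) < l <;>
      simp only [joinP, h1, h2, dif_pos, dif_neg, not_false_iff] at heq
    · have : (p.1 ⟨(j₁ : ℕ), h1⟩) = (p.1 ⟨(j₂ : ℕ), h2⟩) := by
        apply Fin.ext
        simpa [Fin.ext_iff] using heq
      have := p.1.injective this
      exact Fin.ext (by simpa [Fin.ext_iff] using this)
    · exfalso
      have hv1 : ((Fin.castLE (by omega) (p.1 ⟨(j₁ : ℕ), h1⟩) : Fin k) : ℕ) < l :=
        (p.1 ⟨(j₁ : ℕ), h1⟩).isLt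
      rw [heq] at hv1
      simp at hv1
    · exfalso
      have hv1 : ((Fin.castLE (by omega) (p.1 ⟨(j₂ : ℕ), h2⟩) : Fin k) : ℕ) < l :=
        (p.1 ⟨(j₂ : ℕ), h2⟩).isLt
      rw [← heq] at hv1
      simp at hv1
    · have : (p.2 ⟨(j₁ : ℕ) - l, by have := j₁.isLt; omega⟩)
          = (p.2 ⟨(j₂ : ℕ) - l, by have := j₂.isLt; omega⟩) := by
        apply Fin.ext
        have := congrArg Fin.val heq
        simpa using this
      have := p.2.injective this
      have hval : (j₁ : ℕ) - l = (j₂ : ℕ) - l := by simpa [Fin.ext_iff] using this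
      exact Fin.ext (by omega)
  · intro j hj
    simp only [joinP, hj, dif_pos]
    simpa using (p.1 ⟨(j : ℕ), hj⟩).isLt

lemma perm_eq_of_agree_off {α : Type*} [DecidableEq α] (σ τ : Equiv.Perm α) (m : α)
    (h : ∀ y, y ≠ m → σ y = τ y) : σ = τ := by
  have hm : σ m = τ m := by
    by_cases hy : τ.symm (σ m) = m
    · have := congrArg τ hy
      rw [Equiv.apply_symm_apply] at this
      exact this
    · have h1 : σ (τ.symm (σ m)) = τ (τ.symm (σ m)) := h _ hy
      rw [Equiv.apply_symm_apply] at h1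
      exact absurd (σ.injective h1) hy
  ext y
  by_cases hy : y = m
  · rw [hy]; exact hm
  · exact h y hy

lemma joinP_injective {k l : ℕ} (hl1 : 1 ≤ l) (hl2 : l ≤ k - 1) :
    Function.Injective (joinP k l hl2) := by
  intro p p' heq
  have hk1 : l ≤ k - 1 := hl2
  have h1 : p.1 = p'.1 := by
    ext m
    have hm : (m : ℕ) < k - 1 := by have := m.isLt; omega
    have := congrFun heq ⟨(m : ℕ), hm⟩
    simp only [joinP, m.isLt, dif_pos] at this
    have hv := congrArg Fin.val this
    simpa using hv
  have h2 : p.2 = p'.2 := by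
    apply perm_eq_of_agree_off _ _ ⟨k - 1 - l, by omega⟩
    intro y hy
    have hyval : (y : ℕ) < k - 1 - l := by
      have h1 := y.isLt
      have : (y : ℕ) ≠ k - 1 - l := fun h => hy (Fin.ext h)
      omega
    have hj : l + (y : ℕ) < k - 1 := by omega
    have := congrFun heq ⟨l + (y : ℕ), hj⟩
    have hnl : ¬ ((⟨l + (y : ℕ), hj⟩ : Fin (k - 1)) : ℕ) < l := by simp
    simp only [joinP, hnl, dif_neg, not_false_iff] at this
    have hv := congrArg Fin.val this
    simp only [Fin.val_mk, add_right_inj] at hv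
    have hyy : (⟨l + (y : ℕ) - l, by omega⟩ : Fin (k - l)) = y := Fin.ext (by simp)
    have : p.2 ⟨l + (y : ℕ) - l, by omega⟩ = p'.2 ⟨l + (y : ℕ) - l, by omega⟩ :=
      Fin.ext (by simpa using hv)
    rwa [hyy] at this
  exact Prod.ext h1 h2

lemma joinP_surj {k l : ℕ} (hl1 : 1 ≤ l) (hl2 : l ≤ k - 1) {ρ : Fin (k - 1) → Fin k}
    (hρ : ρ ∈ GoodS k l) : ∃ p, joinP k l hl2 p = ρ := by
  obtain ⟨hinj, hgood⟩ := mem_GoodS_iff.mp hρ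
  have hk1 : l ≤ k - 1 := hl2
  have hk2 : 2 ≤ k := by omega
  -- first block permutation
  have hinj1 : Function.Injective
      (fun m : Fin l => (⟨(ρ (Fin.castLE (by omega) m) : ℕ), hgood _ m.isLt⟩ : Fin l)) := by
    intro m₁ m₂ h
    have h2 : ρ (Fin.castLE (by omega) m₁) = ρ (Fin.castLE (by omega) m₂) :=
      Fin.ext (by simpa [Fin.ext_iff] using h)
    have := hinj h2
    exact Fin.ext (by simpa [Fin.ext_iff] using this)
  let π₁ : Equiv.Perm (Fin l) :=
    Equiv.ofBijective _ (Finite.injective_iff_bijective.mp hinj1)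
  -- second block injection
  let g : Fin (k - 1 - l) → Fin (k - l) := fun m =>
    ⟨(ρ ⟨l + (m : ℕ), by have := m.isLt; omega⟩ : ℕ) - l,
      by have := (ρ ⟨l + (m : ℕ), by have := m.isLt; omega⟩).isLt; omega⟩
  have hg_ge : ∀ m : Fin (k - 1 - l), l ≤ (ρ ⟨l + (m : ℕ), by have := m.isLt; omega⟩ : ℕ) := by
    intro m
    exact good_ge hl2 hρ (by simp)
  have hg_inj : Function.Injective g := by
    intro m₁ m₂ h
    have hv : (ρ ⟨l + (m₁ : ℕ), by have := m₁.isLt; omega⟩ : ℕ)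
        = (ρ ⟨l + (m₂ : ℕ), by have := m₂.isLt; omega⟩ : ℕ) := by
      have h1 := hg_ge m₁
      have h2 := hg_ge m₂
      have := congrArg Fin.val h
      simp only [g] at this
      omega
    have := hinj (Fin.ext hv)
    exact Fin.ext (by simpa [Fin.ext_iff] using this)
  set img := (univ : Finset (Fin (k - 1 - l))).image g with himg
  have hne : ((univ : Finset (Fin (k - l))) \ img).Nonempty := by
    rw [Finset.sdiff_nonempty]
    intro hsub
    have h1 : (univ : Finset (Fin (k - l))).card ≤ img.card := Finset.card_le_card hsub
    have h2 : img.card ≤ (univ : Finset (Fin (k - 1 - l))).card := Finset.card_image_le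
    simp only [Finset.card_univ, Fintype.card_fin] at h1 h2
    omega
  set z := ((univ : Finset (Fin (k - l))) \ img).min' hne with hzdef
  have hz : z ∉ img := (Finset.mem_sdiff.mp (Finset.min'_mem _ hne)).2
  let f₂ : Fin (k - l) → Fin (k - l) := fun m =>
    if h : (m : ℕ) < k - 1 - l then g ⟨(m : ℕ), h⟩ else z
  have hinj2 : Function.Injective f₂ := by
    intro m₁ m₂ h
    by_cases h1 : (m₁ : ℕ) < k - 1 - l <;> by_cases h2 : (m₂ : ℕ) < k - 1 - l <;>
      simp only [f₂, h1, h2, dif_pos, dif_neg, not_false_iff] at h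
    · have := hg_inj h
      exact Fin.ext (by simpa [Fin.ext_iff] using this)
    · exact absurd (h ▸ Finset.mem_image_of_mem g (Finset.mem_univ _)) hz
    · exact absurd (h ▸ Finset.mem_image_of_mem g (Finset.mem_univ _)) (by rw [h] at hz ⊢; exact hz)
    · have e1 := m₁.isLt
      have e2 := m₂.isLt
      exact Fin.ext (by omega)
  let π₂ : Equiv.Perm (Fin (k - l)) :=
    Equiv.ofBijective _ (Finite.injective_iff_bijective.mp hinj2)
  refine ⟨(π₁, π₂), ?_⟩
  funext j
  by_cases hj : (j : ℕ) < l
  · simp only [joinP, hj, dif_pos]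
    apply Fin.ext
    have hπ : π₁ ⟨(j : ℕ), hj⟩ = ⟨(ρ (Fin.castLE (by omega) ⟨(j : ℕ), hj⟩) : ℕ),
        hgood _ (by simpa using hj)⟩ := Equiv.ofBijective_apply _ _ _
    rw [hπ]
    have hcast : (Fin.castLE (by omega : l ≤ k - 1) ⟨(j : ℕ), hj⟩) = j := Fin.ext rfl
    simp [hcast]
  · simp only [joinP, hj, dif_neg, not_false_iff]
    have hlt : (j : ℕ) - l < k - 1 - l := by have := j.isLt; omega
    have hge : l ≤ (ρ j : ℕ) := good_ge hl2 hρ hj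
    have hjeq : (⟨l + ((j : ℕ) - l), by have := j.isLt; omega⟩ : Fin (k - 1)) = j :=
      Fin.ext (by simp; omega)
    have hgv : (g ⟨(j : ℕ) - l, hlt⟩ : ℕ) = (ρ j : ℕ) - l := by
      simp only [g]
      rw [show (⟨l + ((j : ℕ) - l), by have := j.isLt; omega⟩ : Fin (k - 1)) = j from hjeq]
    have hπval : ∀ (pf : (j : ℕ) - l < k - l),
        l + ((π₂ (⟨(j : ℕ) - l, pf⟩ : Fin (k - l))) : ℕ) = (ρ j : ℕ) := by
      intro pf
      have hπ : π₂ (⟨(j : ℕ) - l, pf⟩ : Fin (k - l)) = g ⟨(j : ℕ) - l, hlt⟩ := by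
        have hrfl : π₂ (⟨(j : ℕ) - l, pf⟩ : Fin (k - l)) = f₂ ⟨(j : ℕ) - l, pf⟩ := rfl
        rw [hrfl]
        simp only [f₂]
        rw [dif_pos hlt]
      rw [hπ]
      omega
    apply Fin.ext
    exact hπval _

lemma sum_GoodS {k l : ℕ} (hl1 : 1 ≤ l) (hl2 : l ≤ k - 1) (F : (Fin (k - 1) → Fin k) → ℝ) :
    ∑ ρ ∈ GoodS k l, F ρ
      = ∑ p : Equiv.Perm (Fin l) × Equiv.Perm (Fin (k - l)), F (joinP k l hl2 p) := by
  refine (Finset.sum_nbij (fun p => joinP k l hl2 p) ?_ ?_ ?_ (fun p _ => rfl)).symm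
  · intro p _
    exact joinP_mem_GoodS hl1 hl2 p
  · exact (joinP_injective hl1 hl2).injOn
  · intro ρ hρ
    obtain ⟨p, hp⟩ := joinP_surj hl1 hl2 (by simpa using hρ)
    exact ⟨p, by simp, hp⟩

lemma Wf_dot {k l : ℕ} (hl1 : 1 ≤ l) (u v y : Fin (k - 1) → ℝ) (c : ℝ) :
    ∑ j : Fin (k - 1), Wf k l u v c j * y j
      = c * (∑ j ∈ univ.filter (fun j : Fin (k - 1) => (j : ℕ) < l), y j)
        + ((∑ j ∈ univ.filter (fun j : Fin (k - 1) => (j : ℕ) < l - 1), u j * y j)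
          + (∑ j ∈ univ.filter (fun j : Fin (k - 1) => ¬ (j : ℕ) < l), v j * y j)) := by
  rw [← Finset.sum_filter_add_sum_filter_not univ (fun j : Fin (k - 1) => (j : ℕ) < l)
    (fun j => Wf k l u v c j * y j)]
  have h1 : ∑ j ∈ univ.filter (fun j : Fin (k - 1) => (j : ℕ) < l), Wf k l u v c j * y j
      = c * (∑ j ∈ univ.filter (fun j : Fin (k - 1) => (j : ℕ) < l), y j)
        + ∑ j ∈ univ.filter (fun j : Fin (k - 1) => (j : ℕ) < l - 1), u j * y j := by
    have hterm : ∀ j ∈ univ.filter (fun j : Fin (k - 1) => (j : ℕ) < l),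
        Wf k l u v c j * y j = c * y j + (if (j : ℕ) < l - 1 then u j * y j else 0) := by
      intro j hj
      have hjl := (Finset.mem_filter.mp hj).2
      by_cases h : (j : ℕ) < l - 1
      · simp only [Wf, h, if_true, if_pos, hjl]
        ring
      · simp only [Wf, h, if_false, if_pos hjl]
        ring
    rw [Finset.sum_congr rfl hterm, Finset.sum_add_distrib, ← Finset.mul_sum]
    congr 1
    rw [← Finset.sum_filter, Finset.filter_filter]
    apply Finset.sum_congr _ (fun _ _ => rfl)
    ext j
    simp only [Finset.mem_filter, Finset.mem_univ, true_and]
    omega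
  have h2 : ∑ j ∈ univ.filter (fun j : Fin (k - 1) => ¬ (j : ℕ) < l), Wf k l u v c j * y j
      = ∑ j ∈ univ.filter (fun j : Fin (k - 1) => ¬ (j : ℕ) < l), v j * y j := by
    apply Finset.sum_congr rfl
    intro j hj
    have hjl := (Finset.mem_filter.mp hj).2
    have h1' : ¬ (j : ℕ) < l - 1 := by omega
    simp only [Wf, h1', if_false, if_neg hjl]
  rw [h1, h2]
  ring

lemma block1_sum {k l : ℕ} (hl1 : 1 ≤ l) (hl2 : l ≤ k - 1)
    (p : Equiv.Perm (Fin l) × Equiv.Perm (Fin (k - l))) (f : Fin k → ℝ) :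
    ∑ j ∈ univ.filter (fun j : Fin (k - 1) => (j : ℕ) < l), f (joinP k l hl2 p j)
      = ∑ m ∈ univ.filter (fun m : Fin k => (m : ℕ) < l), f m := by
  rw [sum_filter_lt_eq (show l ≤ k - 1 by omega) (fun j => f (joinP k l hl2 p j)),
    sum_filter_lt_eq (show l ≤ k by omega) f]
  have hstep : ∀ m : Fin l, f (joinP k l hl2 p (Fin.castLE (by omega) m))
      = f (Fin.castLE (by omega : l ≤ k) (p.1 m)) := by
    intro m
    have hm : ((Fin.castLE (by omega : l ≤ k - 1) m : Fin (k - 1)) : ℕ) < l := m.isLt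
    simp only [joinP, hm, dif_pos]
    congr 1
  rw [Finset.sum_congr rfl (fun m _ => hstep m)]
  exact Equiv.sum_comp p.1 (fun m => f (Fin.castLE (by omega : l ≤ k) m))

lemma block1_sum_u {b k l : ℕ} (hl1 : 1 ≤ l) (hl2 : l ≤ k - 1) (a : Fin b → Fin k → ℝ) (i : Fin b)
    (p : Equiv.Perm (Fin l) × Equiv.Perm (Fin (k - l))) (u : Fin (k - 1) → ℝ) :
    ∑ j ∈ univ.filter (fun j : Fin (k - 1) => (j : ℕ) < l - 1), u j * a i (joinP k l hl2 p j)
      = ∑ j : Fin (l - 1),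
          a i (Fin.castLE (by omega : l ≤ k) (p.1 (Fin.castLE (Nat.sub_le l 1) j))) *
            u (Fin.castLE (Nat.sub_le_sub_right (by omega : l ≤ k) 1) j) := by
  rw [sum_filter_lt_eq (show l - 1 ≤ k - 1 by omega)
    (fun j => u j * a i (joinP k l hl2 p j))]
  apply Finset.sum_congr rfl
  intro m _
  have hm : ((Fin.castLE (show l - 1 ≤ k - 1 by omega) m : Fin (k - 1)) : ℕ) < l := by
    have := m.isLt; simp only [Fin.coe_castLE]; omega
  simp only [joinP, hm, dif_pos]
  rw [mul_comm]
  congr 2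

lemma block2_sum_v {b k l : ℕ} (hl1 : 1 ≤ l) (hl2 : l ≤ k - 1) (a : Fin b → Fin k → ℝ) (i : Fin b)
    (p : Equiv.Perm (Fin l) × Equiv.Perm (Fin (k - l))) (v : Fin (k - 1) → ℝ) :
    ∑ j ∈ univ.filter (fun j : Fin (k - 1) => ¬ (j : ℕ) < l), v j * a i (joinP k l hl2 p j)
      = ∑ j : Fin (k - 1 - l),
          a i (⟨l + (p.2 (Fin.castLE (Nat.sub_le_sub_right (Nat.sub_le k 1) l) j)).val,
                by have := (p.2 (Fin.castLE (Nat.sub_le_sub_right (Nat.sub_le k 1) l) j)).isLt;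
                   have := j.isLt; omega⟩ : Fin k) *
            v ⟨l + j.val, by have := j.isLt; omega⟩ := by
  rw [sum_filter_ge_eq (show l ≤ k - 1 by omega) (fun j => v j * a i (joinP k l hl2 p j))]
  apply Finset.sum_congr rfl
  intro m _
  have hm : ¬ ((⟨l + (m : ℕ), by have := m.isLt; omega⟩ : Fin (k - 1)) : ℕ) < l := by simp
  simp only [joinP, hm, dif_neg, not_false_iff]
  rw [mul_comm]
  congr 2
  apply Fin.ext
  simp only [Fin.val_mk, add_right_inj]
  have harg : (⟨((⟨l + (m : ℕ), by have := m.isLt; omega⟩ : Fin (k - 1)) : ℕ) - l,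
      by have := m.isLt; omega⟩ : Fin (k - l))
      = Fin.castLE (Nat.sub_le_sub_right (Nat.sub_le k 1) l) m := by
    apply Fin.ext; simp
  rw [harg]

lemma sum_good_exp {b k l : ℕ} (hl1 : 1 ≤ l) (hl2 : l ≤ k - 1) (a : Fin b → Fin k → ℝ)
    (i : Fin b) (u v : Fin (k - 1) → ℝ) (c : ℝ) :
    ∑ ρ ∈ GoodS k l, Real.exp (∑ j : Fin (k - 1), Wf k l u v c j * a i (ρ j))
      = Real.exp (c * Al b k l a i) * S1 b k l a (by omega) i u * S2 b k l a i v := by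
  rw [sum_GoodS hl1 hl2]
  have hterm : ∀ p : Equiv.Perm (Fin l) × Equiv.Perm (Fin (k - l)),
      Real.exp (∑ j : Fin (k - 1), Wf k l u v c j * a i (joinP k l hl2 p j))
        = Real.exp (c * Al b k l a i) *
          Real.exp (∑ j : Fin (l - 1),
            a i (Fin.castLE (by omega : l ≤ k) (p.1 (Fin.castLE (Nat.sub_le l 1) j))) *
              u (Fin.castLE (Nat.sub_le_sub_right (by omega : l ≤ k) 1) j)) *
          Real.exp (∑ j : Fin (k - 1 - l),
            a i (⟨l + (p.2 (Fin.castLE (Nat.sub_le_sub_right (Nat.sub_le k 1) l) j)).val,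
                  by have := (p.2 (Fin.castLE (Nat.sub_le_sub_right (Nat.sub_le k 1) l) j)).isLt;
                     have := j.isLt; omega⟩ : Fin k) *
              v ⟨l + j.val, by have := j.isLt; omega⟩) := by
    intro p
    rw [Wf_dot hl1 u v (fun j => a i (joinP k l hl2 p j)) c]
    rw [block1_sum hl1 hl2 p (a i), block1_sum_u hl1 hl2 a i p u, block2_sum_v hl1 hl2 a i p v]
    rw [← Real.exp_add, ← Real.exp_add]
    congr 1
    rw [Al]
    ring
  rw [Finset.sum_congr rfl (fun p _ => hterm p)]
  rw [Fintype.sum_prod_type, S1, S2, mul_assoc, Finset.sum_mul_sum, Finset.mul_sum]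
  apply Finset.sum_congr rfl
  intro π₁ _
  rw [Finset.mul_sum]
  apply Finset.sum_congr rfl
  intro π₂ _
  ring

lemma strictMono_fin_le {N M : ℕ} {f : Fin M → Fin N} (hf : StrictMono f) (m : Fin M) :
    (m : ℕ) ≤ (f m : ℕ) := by
  have key : ∀ n : ℕ, ∀ hn : n < M, n ≤ (f ⟨n, hn⟩ : ℕ) := by
    intro n
    induction n with
    | zero => intro hn; exact Nat.zero_le _
    | succ r ih =>
      intro hn
      have hr : r < M := by omega
      have h1 := ih hr
      have h2 : f ⟨r, hr⟩ < f ⟨r + 1, hn⟩ := hf (by simp [Fin.lt_def])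
      rw [Fin.lt_def] at h2
      omega
  have := key (m : ℕ) m.isLt
  simpa using this

lemma S1_pos {b k l : ℕ} (a : Fin b → Fin k → ℝ) (hlk : l ≤ k) (i : Fin b)
    (u : Fin (k - 1) → ℝ) : 0 < S1 b k l a hlk i u := by
  rw [S1]
  exact Finset.sum_pos (fun π _ => Real.exp_pos _) ⟨1, Finset.mem_univ _⟩

lemma S2_pos {b k l : ℕ} (a : Fin b → Fin k → ℝ) (i : Fin b)
    (v : Fin (k - 1) → ℝ) : 0 < S2 b k l a i v := by
  rw [S2]
  exact Finset.sum_pos (fun π _ => Real.exp_pos _) ⟨1, Finset.mem_univ _⟩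

lemma Gs_pos {b k : ℕ} (a : Fin b → Fin k → ℝ) (i : Fin b) (w : Fin (k - 1) → ℝ) :
    0 < Gs b k a i w := by
  rw [Gs]
  refine Finset.sum_pos (fun ρ _ => Real.exp_pos _) ⟨fun j => Fin.castLE (Nat.sub_le k 1) j, ?_⟩
  exact mem_Pis_iff.mpr (fun j₁ j₂ h => Fin.ext (by simpa [Fin.ext_iff] using h))

lemma bad_gt {b k l : ℕ} (hl1 : 1 ≤ l) (hl2 : l ≤ k - 1) (a : Fin b → Fin k → ℝ) (i : Fin b)
    (ha : StrictMono (a i)) {ρ : Fin (k - 1) → Fin k} (hρ : ρ ∈ Pis k) (hbad : ρ ∉ GoodS k l) :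
    Al b k l a i < ∑ j ∈ univ.filter (fun j : Fin (k - 1) => (j : ℕ) < l), a i (ρ j) := by
  have hinj := mem_Pis_iff.mp hρ
  have hlk1 : l ≤ k - 1 := hl2
  set T : Finset (Fin k) := (univ : Finset (Fin l)).image (fun m => ρ (Fin.castLE hlk1 m))
    with hT
  have hinjT : Function.Injective (fun m : Fin l => ρ (Fin.castLE hlk1 m)) := by
    intro m₁ m₂ h
    have := hinj h
    exact Fin.ext (by simpa [Fin.ext_iff] using this)
  have hcard : T.card = l := by
    rw [hT, Finset.card_image_of_injective _ hinjT]
    simp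
  set e := T.orderIsoOfFin hcard with he
  -- rewrite both sums over Fin l
  have hL : ∑ j ∈ univ.filter (fun j : Fin (k - 1) => (j : ℕ) < l), a i (ρ j)
      = ∑ m : Fin l, a i ((e m : Fin k)) := by
    rw [sum_filter_lt_eq hlk1 (fun j => a i (ρ j))]
    rw [← Finset.sum_image (f := a i) (g := fun m : Fin l => ρ (Fin.castLE hlk1 m))
      (fun m₁ _ m₂ _ h => hinjT h)]
    rw [← hT, ← Finset.sum_coe_sort T (a i)]
    exact (Fintype.sum_equiv e.toEquiv _ _ (fun m => rfl)).symm
  have hR : Al b k l a i = ∑ m : Fin l, a i (Fin.castLE (by omega : l ≤ k) m) := by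
    rw [Al, sum_filter_lt_eq]
  rw [hL, hR]
  -- a bad index
  have hbad' : ∃ j : Fin (k - 1), (j : ℕ) < l ∧ ¬ ((ρ j : ℕ) < l) := by
    by_contra hcon
    push_neg at hcon
    exact hbad (mem_GoodS_iff.mpr ⟨hinj, fun j hj => hcon j hj⟩)
  obtain ⟨j₀, hj₀l, hj₀⟩ := hbad'
  have hmemT : ρ j₀ ∈ T := by
    rw [hT]
    refine Finset.mem_image.mpr ⟨⟨(j₀ : ℕ), hj₀l⟩, Finset.mem_univ _, ?_⟩
    congr 1
  set m₀ := e.symm ⟨ρ j₀, hmemT⟩ with hm₀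
  have hem₀ : (e m₀ : Fin k) = ρ j₀ := by rw [hm₀]; simp
  refine Finset.sum_lt_sum (fun m _ => ?_) ⟨m₀, Finset.mem_univ _, ?_⟩
  · refine ha.monotone ?_
    rw [Fin.le_def]
    simpa using strictMono_fin_le (fun m₁ m₂ h => by
      have : (e m₁ : Fin k) < e m₂ := by exact_mod_cast e.strictMono (by exact_mod_cast h)
      exact this) m
  · refine ha ?_
    rw [Fin.lt_def]
    have h1 : ((e m₀ : Fin k) : ℕ) = (ρ j₀ : ℕ) := by rw [hem₀]
    have h2 : (m₀ : ℕ) < l := m₀.isLt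
    simp only [Fin.coe_castLE]
    omega

lemma Abar_sum_eq {b k l : ℕ} (a : Fin b → Fin k → ℝ) :
    ∑ j ∈ univ.filter (fun j : Fin k => (j : ℕ) < l), Abar b k a j
      = (b : ℝ)⁻¹ * ∑ i : Fin b, Al b k l a i := by
  simp only [Abar, Al, Finset.mul_sum]
  rw [Finset.sum_comm]

lemma log_split {b k l : ℕ} (hl1 : 1 ≤ l) (hl2 : l ≤ k - 1) (hk : 2 ≤ k)
    (a : Fin b → Fin k → ℝ) (i : Fin b) (u v : Fin (k - 1) → ℝ) :
    Real.log ((k.factorial : ℝ)⁻¹ * (S1 b k l a (by omega) i u * S2 b k l a i v))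
      = -(Real.log (k.choose l)) + Real.log ((l.factorial : ℝ)⁻¹ * S1 b k l a (by omega) i u)
        + Real.log (((k - l).factorial : ℝ)⁻¹ * S2 b k l a i v) := by
  have hS1 := S1_pos a (show l ≤ k by omega) i u
  have hS2 := S2_pos (l := l) a i v
  have hkf : (k.factorial : ℝ) ≠ 0 := by positivity
  have hlf : (l.factorial : ℝ) ≠ 0 := by positivity
  have hklf : ((k - l).factorial : ℝ) ≠ 0 := by positivity
  have hch : (0 : ℝ) < (k.choose l : ℝ) := by
    exact_mod_cast Nat.choose_pos (show l ≤ k by omega)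
  rw [Real.log_mul (inv_ne_zero hkf) (by positivity),
    Real.log_mul hS1.ne' hS2.ne',
    Real.log_mul (inv_ne_zero hlf) hS1.ne',
    Real.log_mul (inv_ne_zero hklf) hS2.ne',
    Real.log_inv, Real.log_inv, Real.log_inv]
  have hfac : Real.log (k.factorial : ℝ)
      = Real.log (k.choose l : ℝ) + Real.log (l.factorial : ℝ)
        + Real.log ((k - l).factorial : ℝ) := by
    rw [← Real.log_mul hch.ne' hlf, ← Real.log_mul (by positivity) hklf]
    congr 1
    exact_mod_cast (Nat.choose_mul_factorial_mul_factorial (show l ≤ k by omega)).symm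
  rw [hfac]
  ring

lemma Xu_eq {k l : ℕ} (hl1 : 1 ≤ l) (hl2 : l ≤ k - 1) (hk : 2 ≤ k)
    (x : Fin (k - 1) → ℝ) (s : Equiv.Perm (Fin (k - 1))) (u : Fin (k - 1) → ℝ) :
    ∑ j ∈ univ.filter (fun j : Fin (k - 1) => (j : ℕ) < l - 1), u j * x (s j)
      = ∑ j : Fin (l - 1), x (s (Fin.castLE (Nat.sub_le_sub_right (show l ≤ k by omega) 1) j)) *
          u (Fin.castLE (Nat.sub_le_sub_right (show l ≤ k by omega) 1) j) := by
  rw [sum_filter_lt_eq (show l - 1 ≤ k - 1 by omega) (fun j => u j * x (s j))]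
  exact Finset.sum_congr rfl (fun m _ => mul_comm _ _)

lemma Xv_eq {k l : ℕ} (hl1 : 1 ≤ l) (hl2 : l ≤ k - 1) (hk : 2 ≤ k)
    (x : Fin (k - 1) → ℝ) (s : Equiv.Perm (Fin (k - 1))) (v : Fin (k - 1) → ℝ) :
    ∑ j ∈ univ.filter (fun j : Fin (k - 1) => ¬ (j : ℕ) < l), v j * x (s j)
      = ∑ j : Fin (k - 1 - l), x (s ⟨l + j.val, by have := j.isLt; omega⟩) *
          v ⟨l + j.val, by have := j.isLt; omega⟩ := by
  rw [sum_filter_ge_eq (show l ≤ k - 1 by omega) (fun j => v j * x (s j))]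
  exact Finset.sum_congr rfl (fun m _ => mul_comm _ _)

lemma key_ident {b k l : ℕ} (hb : 1 ≤ b) (hl1 : 1 ≤ l) (hl2 : l ≤ k - 1) (hk : 2 ≤ k)
    (a : Fin b → Fin k → ℝ) (x : Fin (k - 1) → ℝ) (s : Equiv.Perm (Fin (k - 1)))
    (u v : Fin (k - 1) → ℝ) :
    (∑ j ∈ univ.filter (fun j : Fin (k - 1) => (j : ℕ) < l - 1), u j * x (s j))
      + (∑ j ∈ univ.filter (fun j : Fin (k - 1) => ¬ (j : ℕ) < l), v j * x (s j))
      - (b : ℝ)⁻¹ * ∑ i : Fin b,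
          Real.log ((k.factorial : ℝ)⁻¹ * (S1 b k l a (by omega) i u * S2 b k l a i v))
      = r1 b k l a x s (by omega) u + r2 b k l a x s v + Real.log (k.choose l) := by
  have hbne : (b : ℝ) ≠ 0 := by positivity
  have hsum : ∑ i : Fin b,
      Real.log ((k.factorial : ℝ)⁻¹ * (S1 b k l a (by omega) i u * S2 b k l a i v))
      = ∑ i : Fin b, (-(Real.log (k.choose l))
          + Real.log ((l.factorial : ℝ)⁻¹ * S1 b k l a (by omega) i u)
          + Real.log (((k - l).factorial : ℝ)⁻¹ * S2 b k l a i v)) :=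
    Finset.sum_congr rfl (fun i _ => log_split hl1 hl2 hk a i u v)
  rw [hsum]
  simp only [Finset.sum_add_distrib, Finset.sum_const, Finset.sum_neg_distrib,
    Finset.card_univ, Fintype.card_fin, nsmul_eq_mul]
  rw [r1, r2, Xu_eq hl1 hl2 hk x s u, Xv_eq hl1 hl2 hk x s v]
  field_simp
  ring

lemma psi_le {b k l : ℕ} (hb : 1 ≤ b) (hl1 : 1 ≤ l) (hl2 : l ≤ k - 1) (hk : 2 ≤ k)
    (a : Fin b → Fin k → ℝ) (x : Fin (k - 1) → ℝ) (s : Equiv.Perm (Fin (k - 1)))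
    (hsum : (∑ j ∈ Finset.univ.filter (fun j : Fin (k - 1) => (j : ℕ) < l), x (s j)) =
            ∑ j ∈ Finset.univ.filter (fun j : Fin k => (j : ℕ) < l), Abar b k a j)
    (w : Fin (k - 1) → ℝ) :
    psi b k a x s w ≤ r1 b k l a x s (by omega) (fun j => w j - w ⟨l - 1, by omega⟩)
      + r2 b k l a x s w + Real.log (k.choose l) := by
  set c := w ⟨l - 1, by omega⟩ with hc
  set u : Fin (k - 1) → ℝ := fun j => w j - c with hu
  have hW : Wf k l u w c = w := by
    funext j
    by_cases h1 : (j : ℕ) < l - 1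
    · simp only [Wf, hu, h1, if_true]; ring
    · by_cases h2 : (j : ℕ) < l
      · have hjeq : j = ⟨l - 1, by omega⟩ := Fin.ext (by simp only [Fin.val_mk]; omega)
        simp only [Wf, h1, if_false, h2, if_true]
        rw [hc, hjeq]
      · simp only [Wf, h1, h2, if_false]
  have hX : ∑ j : Fin (k - 1), w j * x (s j)
      = c * (∑ j ∈ univ.filter (fun j : Fin (k - 1) => (j : ℕ) < l), x (s j))
        + ((∑ j ∈ univ.filter (fun j : Fin (k - 1) => (j : ℕ) < l - 1), u j * x (s j))
          + (∑ j ∈ univ.filter (fun j : Fin (k - 1) => ¬ (j : ℕ) < l), w j * x (s j))) := by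
    conv_lhs => rw [← hW]
    exact Wf_dot hl1 u w (fun j => x (s j)) c
  have hXA : (∑ j ∈ univ.filter (fun j : Fin (k - 1) => (j : ℕ) < l), x (s j))
      = (b : ℝ)⁻¹ * ∑ i : Fin b, Al b k l a i := by
    rw [hsum]; exact Abar_sum_eq a
  have hlog : ∀ i : Fin b,
      c * Al b k l a i
        + Real.log ((k.factorial : ℝ)⁻¹ * (S1 b k l a (by omega) i u * S2 b k l a i w))
      ≤ Real.log ((k.factorial : ℝ)⁻¹ * Gs b k a i w) := by
    intro i
    have hS1 := S1_pos a (show l ≤ k by omega) i u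
    have hS2 := S2_pos (l := l) a i w
    have hGood_le : ∑ ρ ∈ GoodS k l, Real.exp (∑ j : Fin (k - 1), w j * a i (ρ j))
        ≤ Gs b k a i w := by
      rw [Gs]
      refine Finset.sum_le_sum_of_subset_of_nonneg (Finset.filter_subset _ _) ?_
      intro ρ _ _; positivity
    have hGoodval : ∑ ρ ∈ GoodS k l, Real.exp (∑ j : Fin (k - 1), w j * a i (ρ j))
        = Real.exp (c * Al b k l a i) * S1 b k l a (by omega) i u * S2 b k l a i w := by
      conv_lhs => rw [← hW]
      exact sum_good_exp hl1 hl2 a i u w c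
    have hstep : (k.factorial : ℝ)⁻¹ * (Real.exp (c * Al b k l a i) * S1 b k l a (by omega) i u
        * S2 b k l a i w)
        = Real.exp (c * Al b k l a i)
          * ((k.factorial : ℝ)⁻¹ * (S1 b k l a (by omega) i u * S2 b k l a i w)) := by ring
    have hle : (k.factorial : ℝ)⁻¹ * (Real.exp (c * Al b k l a i) * S1 b k l a (by omega) i u
        * S2 b k l a i w) ≤ (k.factorial : ℝ)⁻¹ * Gs b k a i w := by
      refine mul_le_mul_of_nonneg_left ?_ (by positivity)
      rw [← hGoodval]
      exact hGood_le
    calc c * Al b k l a i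
          + Real.log ((k.factorial : ℝ)⁻¹ * (S1 b k l a (by omega) i u * S2 b k l a i w))
        = Real.log ((k.factorial : ℝ)⁻¹ * (Real.exp (c * Al b k l a i)
            * S1 b k l a (by omega) i u * S2 b k l a i w)) := by
          rw [hstep, Real.log_mul (Real.exp_ne_zero _) (by positivity), Real.log_exp]
      _ ≤ Real.log ((k.factorial : ℝ)⁻¹ * Gs b k a i w) := by
          refine Real.log_le_log (by positivity) hle
  have hineq : ∑ i : Fin b, (c * Al b k l a i
      + Real.log ((k.factorial : ℝ)⁻¹ * (S1 b k l a (by omega) i u * S2 b k l a i w)))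
      ≤ ∑ i : Fin b, Real.log ((k.factorial : ℝ)⁻¹ * Gs b k a i w) :=
    Finset.sum_le_sum (fun i _ => hlog i)
  have h2 : (b : ℝ)⁻¹ * ∑ i : Fin b, (c * Al b k l a i
      + Real.log ((k.factorial : ℝ)⁻¹ * (S1 b k l a (by omega) i u * S2 b k l a i w)))
      ≤ (b : ℝ)⁻¹ * ∑ i : Fin b, Real.log ((k.factorial : ℝ)⁻¹ * Gs b k a i w) :=
    mul_le_mul_of_nonneg_left hineq (by positivity)
  have hexp : (b : ℝ)⁻¹ * ∑ i : Fin b, (c * Al b k l a i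
      + Real.log ((k.factorial : ℝ)⁻¹ * (S1 b k l a (by omega) i u * S2 b k l a i w)))
      = c * ((b : ℝ)⁻¹ * ∑ i : Fin b, Al b k l a i)
        + (b : ℝ)⁻¹ * ∑ i : Fin b,
            Real.log ((k.factorial : ℝ)⁻¹ * (S1 b k l a (by omega) i u * S2 b k l a i w)) := by
    rw [Finset.sum_add_distrib, ← Finset.mul_sum]
    ring
  have hki := key_ident hb hl1 hl2 hk a x s u w
  rw [psi, hX]
  have hgoal : r1 b k l a x s (by omega : l ≤ k) (fun j => w j - w ⟨l - 1, by omega⟩)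
      = r1 b k l a x s (by omega : l ≤ k) u := rfl
  rw [hgoal]
  rw [hXA]
  linarith [h2, hexp, hki]

lemma psi_tendsto {b k l : ℕ} (hb : 1 ≤ b) (hl1 : 1 ≤ l) (hl2 : l ≤ k - 1) (hk : 2 ≤ k)
    (a : Fin b → Fin k → ℝ) (ha : ∀ i : Fin b, StrictMono (a i))
    (x : Fin (k - 1) → ℝ) (s : Equiv.Perm (Fin (k - 1)))
    (hsum : (∑ j ∈ Finset.univ.filter (fun j : Fin (k - 1) => (j : ℕ) < l), x (s j)) =
            ∑ j ∈ Finset.univ.filter (fun j : Fin k => (j : ℕ) < l), Abar b k a j)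
    (u v : Fin (k - 1) → ℝ) :
    Filter.Tendsto (fun c => psi b k a x s (Wf k l u v c)) Filter.atBot
      (nhds (r1 b k l a x s (by omega) u + r2 b k l a x s v + Real.log (k.choose l))) := by
  classical
  set P : (Fin (k - 1) → Fin k) → Prop :=
    fun ρ => ∀ j : Fin (k - 1), (j : ℕ) < l → ((ρ j : ℕ) < l) with hP
  set Bad : Finset (Fin (k - 1) → Fin k) := (Pis k).filter (fun ρ => ¬ P ρ) with hBad
  set D : Fin b → (Fin (k - 1) → Fin k) → ℝ := fun i ρ =>
    (∑ j ∈ univ.filter (fun j : Fin (k - 1) => (j : ℕ) < l - 1), u j * a i (ρ j))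
      + (∑ j ∈ univ.filter (fun j : Fin (k - 1) => ¬ (j : ℕ) < l), v j * a i (ρ j)) with hD
  set B : Fin b → (Fin (k - 1) → Fin k) → ℝ := fun i ρ =>
    ∑ j ∈ univ.filter (fun j : Fin (k - 1) => (j : ℕ) < l), a i (ρ j) with hB
  set Rf : Fin b → ℝ → ℝ := fun i c =>
    ∑ ρ ∈ Bad, Real.exp (D i ρ + c * (B i ρ - Al b k l a i)) with hRf
  have hRf_nonneg : ∀ i c, 0 ≤ Rf i c := by
    intro i c
    exact Finset.sum_nonneg (fun ρ _ => (Real.exp_pos _).le)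
  have hXA : (∑ j ∈ univ.filter (fun j : Fin (k - 1) => (j : ℕ) < l), x (s j))
      = (b : ℝ)⁻¹ * ∑ i : Fin b, Al b k l a i := by
    rw [hsum]; exact Abar_sum_eq a
  -- pointwise identity
  have hpw : ∀ c : ℝ, psi b k a x s (Wf k l u v c)
      = (∑ j ∈ univ.filter (fun j : Fin (k - 1) => (j : ℕ) < l - 1), u j * x (s j))
        + (∑ j ∈ univ.filter (fun j : Fin (k - 1) => ¬ (j : ℕ) < l), v j * x (s j))
        - (b : ℝ)⁻¹ * ∑ i : Fin b, Real.log ((k.factorial : ℝ)⁻¹ *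
            (S1 b k l a (by omega) i u * S2 b k l a i v + Rf i c)) := by
    intro c
    have hGs : ∀ i : Fin b,
        Real.log ((k.factorial : ℝ)⁻¹ * Gs b k a i (Wf k l u v c))
          = c * Al b k l a i + Real.log ((k.factorial : ℝ)⁻¹ *
              (S1 b k l a (by omega) i u * S2 b k l a i v + Rf i c)) := by
      intro i
      have hS1 := S1_pos a (show l ≤ k by omega) i u
      have hS2 := S2_pos (l := l) a i v
      have hsplit : Gs b k a i (Wf k l u v c)
          = Real.exp (c * Al b k l a i)
            * (S1 b k l a (by omega) i u * S2 b k l a i v + Rf i c) := by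
        rw [Gs, ← Finset.sum_filter_add_sum_filter_not (Pis k) P
          (fun ρ => Real.exp (∑ j : Fin (k - 1), Wf k l u v c j * a i (ρ j)))]
        have h1 : ∑ ρ ∈ (Pis k).filter P,
            Real.exp (∑ j : Fin (k - 1), Wf k l u v c j * a i (ρ j))
            = Real.exp (c * Al b k l a i) * S1 b k l a (by omega) i u * S2 b k l a i v := by
          exact sum_good_exp hl1 hl2 a i u v c
        have h2 : ∑ ρ ∈ (Pis k).filter (fun ρ => ¬ P ρ),
            Real.exp (∑ j : Fin (k - 1), Wf k l u v c j * a i (ρ j))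
            = Real.exp (c * Al b k l a i) * Rf i c := by
          rw [hRf, Finset.mul_sum]
          apply Finset.sum_congr rfl
          intro ρ hρ
          rw [Wf_dot hl1 u v (fun j => a i (ρ j)) c, ← Real.exp_add]
          congr 1
          rw [hD, hB]
          ring
        rw [h1, h2]
        ring
      rw [hsplit,
        show (k.factorial : ℝ)⁻¹ * (Real.exp (c * Al b k l a i)
            * (S1 b k l a (by omega) i u * S2 b k l a i v + Rf i c))
          = Real.exp (c * Al b k l a i) * ((k.factorial : ℝ)⁻¹ *
            (S1 b k l a (by omega) i u * S2 b k l a i v + Rf i c)) by ring,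
        Real.log_mul (Real.exp_ne_zero _) (by
          have := hRf_nonneg i c
          positivity), Real.log_exp]
    rw [psi, Wf_dot hl1 u v (fun j => x (s j)) c]
    rw [Finset.sum_congr rfl (fun i _ => hGs i), Finset.sum_add_distrib, ← Finset.mul_sum]
    rw [hXA]
    ring
  -- limit of Rf
  have hRf_tendsto : ∀ i : Fin b, Filter.Tendsto (Rf i) Filter.atBot (nhds 0) := by
    intro i
    rw [hRf]
    rw [show (0 : ℝ) = ∑ ρ ∈ Bad, (0 : ℝ) by simp]
    apply tendsto_finset_sum
    intro ρ hρ
    have hρPis : ρ ∈ Pis k := (Finset.mem_filter.mp hρ).1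
    have hρnot : ρ ∉ GoodS k l := by
      intro hmem
      exact (Finset.mem_filter.mp hρ).2 ((Finset.mem_filter.mp hmem).2)
    have hδ : 0 < B i ρ - Al b k l a i := by
      have := bad_gt hl1 hl2 a i (ha i) hρPis hρnot
      rw [hB]
      simp only [sub_pos]
      exact this
    have harg : Filter.Tendsto (fun c : ℝ => D i ρ + c * (B i ρ - Al b k l a i))
        Filter.atBot Filter.atBot := by
      apply Filter.tendsto_atBot_add_const_left
      exact Filter.Tendsto.atBot_mul_const hδ Filter.tendsto_id
    exact Real.tendsto_exp_atBot.comp harg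
  -- assemble the limit
  have hlim : Filter.Tendsto (fun c => psi b k a x s (Wf k l u v c)) Filter.atBot
      (nhds ((∑ j ∈ univ.filter (fun j : Fin (k - 1) => (j : ℕ) < l - 1), u j * x (s j))
        + (∑ j ∈ univ.filter (fun j : Fin (k - 1) => ¬ (j : ℕ) < l), v j * x (s j))
        - (b : ℝ)⁻¹ * ∑ i : Fin b, Real.log ((k.factorial : ℝ)⁻¹ *
            (S1 b k l a (by omega) i u * S2 b k l a i v)))) := by
    refine Filter.Tendsto.congr (fun c => (hpw c).symm) ?_
    refine Filter.Tendsto.sub tendsto_const_nhds ?_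
    refine Filter.Tendsto.const_mul _ ?_
    have : ∀ i : Fin b, Filter.Tendsto (fun c => Real.log ((k.factorial : ℝ)⁻¹ *
        (S1 b k l a (by omega) i u * S2 b k l a i v + Rf i c))) Filter.atBot
        (nhds (Real.log ((k.factorial : ℝ)⁻¹ *
          (S1 b k l a (by omega) i u * S2 b k l a i v)))) := by
      intro i
      have hS1 := S1_pos a (show l ≤ k by omega) i u
      have hS2 := S2_pos (l := l) a i v
      have h1 : Filter.Tendsto (fun c => (k.factorial : ℝ)⁻¹ *
          (S1 b k l a (by omega) i u * S2 b k l a i v + Rf i c)) Filter.atBot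
          (nhds ((k.factorial : ℝ)⁻¹ *
            (S1 b k l a (by omega) i u * S2 b k l a i v + 0))) :=
        Filter.Tendsto.const_mul _ (Filter.Tendsto.const_add _ (hRf_tendsto i))
      rw [add_zero] at h1
      exact Filter.Tendsto.log h1 (by positivity)
    have hsum' := tendsto_finset_sum univ (fun i _ => this i)
    exact hsum'
  have hEq := key_ident hb hl1 hl2 hk a x s u v
  rw [← hEq]
  exact hlim

private theorem stmt_6' (b k : ℕ) (hb : 1 ≤ b) (hk : 2 ≤ k) (a : Fin b → Fin k → ℝ)
    (ha : ∀ i : Fin b, StrictMono (a i))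
    (x : Fin (k - 1) → ℝ)
    (l : ℕ) (hl1 : 1 ≤ l) (hl2 : l ≤ k - 1)
    (s : Equiv.Perm (Fin (k - 1)))
    (hsum : (∑ j ∈ Finset.univ.filter (fun j : Fin (k - 1) => (j : ℕ) < l), x (s j)) =
            ∑ j ∈ Finset.univ.filter (fun j : Fin k => (j : ℕ) < l), Abar b k a j) :
    Lam b k a x =
      Lam1 b k a l (hl2.trans (Nat.sub_le k 1)) s x + Lam2 b k a l s x +
        ((Real.log (k.choose l) : ℝ) : EReal) := by
  set C : ℝ := Real.log (k.choose l) with hC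
  have hlk : l ≤ k := hl2.trans (Nat.sub_le k 1)
  have hL1 : Lam1 b k a l hlk s x
      = ⨆ u : Fin (k - 1) → ℝ, ((r1 b k l a x s hlk u : ℝ) : EReal) := Lam1_eq b k l a x s hlk
  have hL2 : Lam2 b k a l s x
      = ⨆ u : Fin (k - 1) → ℝ, ((r2 b k l a x s u : ℝ) : EReal) := Lam2_eq b k l a x s
  -- upper bound
  have hup : Lam b k a x ≤ Lam1 b k a l hlk s x + Lam2 b k a l s x + (C : EReal) := by
    rw [lam_eq_psi b k a x s]
    apply iSup_le
    intro w
    have h := psi_le hb hl1 hl2 hk a x s hsum w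
    calc ((psi b k a x s w : ℝ) : EReal)
        ≤ ((r1 b k l a x s (by omega) (fun j => w j - w ⟨l - 1, by omega⟩)
            + r2 b k l a x s w + C : ℝ) : EReal) := EReal.coe_le_coe_iff.mpr h
      _ = ((r1 b k l a x s hlk (fun j => w j - w ⟨l - 1, by omega⟩) : ℝ) : EReal)
            + ((r2 b k l a x s w : ℝ) : EReal) + (C : EReal) := by
          rw [EReal.coe_add, EReal.coe_add]
      _ ≤ Lam1 b k a l hlk s x + Lam2 b k a l s x + (C : EReal) := by
          refine add_le_add (add_le_add ?_ ?_) le_rfl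
          · rw [hL1]
            exact le_iSup (fun u => ((r1 b k l a x s hlk u : ℝ) : EReal)) _
          · rw [hL2]
            exact le_iSup (fun u => ((r2 b k l a x s u : ℝ) : EReal)) _
  -- each candidate value is below Lam
  have hcand : ∀ u v : Fin (k - 1) → ℝ,
      ((r1 b k l a x s hlk u + r2 b k l a x s v + C : ℝ) : EReal) ≤ Lam b k a x := by
    intro u v
    by_contra hlt
    rw [not_le] at hlt
    obtain ⟨y, hy1, hy2⟩ := EReal.exists_between_coe_real hlt
    have hT := psi_tendsto hb hl1 hl2 hk a ha x s hsum u v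
    have hy2' : y < r1 b k l a x s hlk u + r2 b k l a x s v + C := by
      exact_mod_cast hy2
    have hev := hT.eventually (eventually_gt_nhds hy2')
    obtain ⟨c, hc⟩ := hev.exists
    have hle : ((psi b k a x s (Wf k l u v c) : ℝ) : EReal) ≤ Lam b k a x := by
      rw [lam_eq_psi b k a x s]
      exact le_iSup (fun w => ((psi b k a x s w : ℝ) : EReal)) _
    have : (y : EReal) < Lam b k a x :=
      lt_of_lt_of_le (EReal.coe_lt_coe_iff.mpr hc) hle
    exact absurd hy1 (not_lt.mpr this.le)
  -- lower bound
  have hdown : Lam1 b k a l hlk s x + Lam2 b k a l s x + (C : EReal) ≤ Lam b k a x := by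
    by_cases htop : Lam b k a x = ⊤
    · rw [htop]; exact le_top
    have hbot : Lam b k a x ≠ ⊥ := by
      have := hcand 0 0
      exact (lt_of_lt_of_le (EReal.bot_lt_coe _) this).ne'
    set M : ℝ := (Lam b k a x).toReal with hM
    have hMeq : ((M : ℝ) : EReal) = Lam b k a x := EReal.coe_toReal htop hbot
    have hreal : ∀ u v : Fin (k - 1) → ℝ,
        r1 b k l a x s hlk u + r2 b k l a x s v + C ≤ M := by
      intro u v
      have := hcand u v
      rw [← hMeq] at this
      exact_mod_cast this
    -- Lam1 is a real number
    have hLam1_le : ∀ v : Fin (k - 1) → ℝ,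
        Lam1 b k a l hlk s x ≤ ((M - C - r2 b k l a x s v : ℝ) : EReal) := by
      intro v
      rw [hL1]
      apply iSup_le
      intro u
      exact EReal.coe_le_coe_iff.mpr (by linarith [hreal u v])
    have hLam1_ne_top : Lam1 b k a l hlk s x ≠ ⊤ :=
      (lt_of_le_of_lt (hLam1_le 0) (EReal.coe_lt_top _)).ne
    have hLam1_ne_bot : Lam1 b k a l hlk s x ≠ ⊥ := by
      have : ((r1 b k l a x s hlk 0 : ℝ) : EReal) ≤ Lam1 b k a l hlk s x := by
        rw [hL1]; exact le_iSup (fun u => ((r1 b k l a x s hlk u : ℝ) : EReal)) _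
      exact (lt_of_lt_of_le (EReal.bot_lt_coe _) this).ne'
    set L1 : ℝ := (Lam1 b k a l hlk s x).toReal with hL1r
    have hL1eq : ((L1 : ℝ) : EReal) = Lam1 b k a l hlk s x :=
      EReal.coe_toReal hLam1_ne_top hLam1_ne_bot
    have hL1le : ∀ v : Fin (k - 1) → ℝ, L1 ≤ M - C - r2 b k l a x s v := by
      intro v
      have := hLam1_le v
      rw [← hL1eq] at this
      exact_mod_cast this
    -- Lam2 is a real number
    have hLam2_le : Lam2 b k a l s x ≤ ((M - C - L1 : ℝ) : EReal) := by
      rw [hL2]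
      apply iSup_le
      intro v
      exact EReal.coe_le_coe_iff.mpr (by linarith [hL1le v])
    have hLam2_ne_top : Lam2 b k a l s x ≠ ⊤ :=
      (lt_of_le_of_lt hLam2_le (EReal.coe_lt_top _)).ne
    have hLam2_ne_bot : Lam2 b k a l s x ≠ ⊥ := by
      have : ((r2 b k l a x s 0 : ℝ) : EReal) ≤ Lam2 b k a l s x := by
        rw [hL2]; exact le_iSup (fun u => ((r2 b k l a x s u : ℝ) : EReal)) _
      exact (lt_of_lt_of_le (EReal.bot_lt_coe _) this).ne'
    set L2 : ℝ := (Lam2 b k a l s x).toReal with hL2r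
    have hL2eq : ((L2 : ℝ) : EReal) = Lam2 b k a l s x :=
      EReal.coe_toReal hLam2_ne_top hLam2_ne_bot
    have hL2le : L2 ≤ M - C - L1 := by
      have := hLam2_le
      rw [← hL2eq] at this
      exact_mod_cast this
    rw [← hL1eq, ← hL2eq, ← hMeq, ← EReal.coe_add, ← EReal.coe_add]
    exact EReal.coe_le_coe_iff.mpr (by linarith)
  exact le_antisymm hup hdown

/-- if x lies on the boundary of Ω and there are l ∈ {1,…,k−1} and a
permutation (s_1,…,s_{k−1}) of {1,…,k−1} with Σ_{j=1}^{l} x_{s_j} = Σ_{j=1}^{l} Ā_j, then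
Λ(x) = Λ₁(x) + Λ₂(x) + log C(k,l). -/
theorem stmt_6 (b k : ℕ) (hb : 1 ≤ b) (hk : 2 ≤ k) (a : Fin b → Fin k → ℝ)
    (ha : ∀ i : Fin b, StrictMono (a i))
    (x : Fin (k - 1) → ℝ) (hx : x ∈ frontier (Omega b k a))
    (l : ℕ) (hl1 : 1 ≤ l) (hl2 : l ≤ k - 1)
    (s : Equiv.Perm (Fin (k - 1)))
    (hsum : (∑ j ∈ Finset.univ.filter (fun j : Fin (k - 1) => (j : ℕ) < l), x (s j)) =
            ∑ j ∈ Finset.univ.filter (fun j : Fin k => (j : ℕ) < l), Abar b k a j) :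
    Lam b k a x =
      Lam1 b k a l (hl2.trans (Nat.sub_le k 1)) s x + Lam2 b k a l s x +
        ((Real.log (k.choose l) : ℝ) : EReal) := by
  exact stmt_6' b k hb hk a ha x l hl1 hl2 s hsum
end

section
/- The boundary of the polytope 𝒫 consists exactly of those x ∈ 𝒫 for which there exist an integer l ∈ {1,…,k−1} and distinct indices s_1,…,s_l ∈ {1,…,k−1} satisfying at least one of the equalities Σ_{j=1}^{l} x_{s_j} = Σ_{j=1}^{l} Ā_j or Σ_{j=1}^{l} x_{s_j} = Σ_{j=1}^{l} Ā_{k−j+1}. -/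
open Finset

lemma abel_id (v w : ℕ → ℝ) (n : ℕ) :
    ∑ i ∈ Finset.range n, v i * w i
      = (∑ m ∈ Finset.range n, (v m - v (m+1)) * (∑ i ∈ Finset.range (m+1), w i))
        + v n * ∑ i ∈ Finset.range n, w i := by
  induction n with
  | zero => simp
  | succ n ih =>
    rw [Finset.sum_range_succ _ n, ih,
        Finset.sum_range_succ (fun m => (v m - v (m+1)) * (∑ i ∈ Finset.range (m+1), w i)) n,
        Finset.sum_range_succ w n]
    ring

lemma sm_le_apply {l k : ℕ} {g : Fin l → Fin k} (hg : StrictMono g) :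
    ∀ v : ℕ, ∀ hv : v < l, v ≤ (g ⟨v, hv⟩ : ℕ) := by
  intro v
  induction v with
  | zero => intro _; exact Nat.zero_le _
  | succ v ih =>
    intro hv
    have h1 : v < l := by omega
    have h2 : g ⟨v, h1⟩ < g ⟨v+1, hv⟩ := hg (by simp [Fin.lt_def])
    have h3 := ih h1
    have h4 : (g ⟨v, h1⟩ : ℕ) < (g ⟨v+1, hv⟩ : ℕ) := h2
    omega

lemma sm_apply_le {l k : ℕ} {g : Fin l → Fin k} (hg : StrictMono g) (hlk : l ≤ k) (m : Fin l) :
    (g m : ℕ) ≤ k - l + m := by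
  have hrev : StrictMono (fun q : Fin l => (g q.rev).rev) := by
    intro q q' hq
    have : q'.rev < q.rev := Fin.rev_lt_rev.mpr hq
    exact Fin.rev_lt_rev.mpr (hg this)
  have := sm_le_apply hrev (m.rev : ℕ) (m.rev.isLt)
  simp only [Fin.eta] at this
  rw [Fin.rev_rev] at this
  have h1 : ((g m).rev : ℕ) = k - 1 - (g m : ℕ) := by
    rw [Fin.val_rev]; omega
  have h2 : (m.rev : ℕ) = l - 1 - (m : ℕ) := by rw [Fin.val_rev]; omega
  have h3 := (g m).isLt
  have h4 := m.isLt
  omega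

lemma abar_sm {b k : ℕ} (hb : 1 ≤ b) (a : Fin b → Fin k → ℝ)
    (ha : ∀ i : Fin b, StrictMono (a i)) : StrictMono (Abar b k a) := by
  intro j j' hjj
  unfold Abar
  have hb0 : (0:ℝ) < (b:ℝ)⁻¹ := by
    have : (0:ℝ) < (b:ℝ) := by exact_mod_cast hb
    positivity
  apply mul_lt_mul_of_pos_left _ hb0
  have : Nonempty (Fin b) := ⟨⟨0, hb⟩⟩
  exact Finset.sum_lt_sum_of_nonempty Finset.univ_nonempty (fun i _ => ha i hjj)

noncomputable def Ld (b k : ℕ) (a : Fin b → Fin k → ℝ) (l : ℕ) : ℝ :=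
  ∑ j ∈ Finset.univ.filter (fun j : Fin k => (j : ℕ) < l), Abar b k a j

noncomputable def Ud (b k : ℕ) (a : Fin b → Fin k → ℝ) (l : ℕ) : ℝ :=
  ∑ j ∈ Finset.univ.filter (fun j : Fin k => k - l ≤ (j : ℕ)), Abar b k a j

lemma Ld_eq {b k l : ℕ} (a : Fin b → Fin k → ℝ) (hlk : l ≤ k) :
    Ld b k a l = ∑ m : Fin l, Abar b k a ⟨(m : ℕ), lt_of_lt_of_le m.isLt hlk⟩ := by
  rw [Ld]
  rw [show Finset.univ.filter (fun j : Fin k => (j : ℕ) < l)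
      = Finset.univ.image (fun m : Fin l => (⟨(m : ℕ), lt_of_lt_of_le m.isLt hlk⟩ : Fin k)) by
    ext j
    simp only [Finset.mem_filter, Finset.mem_univ, true_and, Finset.mem_image]
    constructor
    · intro hj; exact ⟨⟨(j : ℕ), hj⟩, Fin.ext rfl⟩
    · rintro ⟨m, rfl⟩; exact m.isLt]
  rw [Finset.sum_image]
  intro u _ v _ h
  exact Fin.ext (by simpa using congrArg Fin.val h)

lemma Ud_eq {b k l : ℕ} (a : Fin b → Fin k → ℝ) (hl : 1 ≤ l) (hlk : l ≤ k) :
    Ud b k a l = ∑ m : Fin l, Abar b k a ⟨k - l + (m : ℕ), by have := m.isLt; omega⟩ := by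
  rw [Ud]
  rw [show Finset.univ.filter (fun j : Fin k => k - l ≤ (j : ℕ))
      = Finset.univ.image (fun m : Fin l =>
          (⟨k - l + (m : ℕ), by have := m.isLt; omega⟩ : Fin k)) by
    ext j
    simp only [Finset.mem_filter, Finset.mem_univ, true_and, Finset.mem_image]
    constructor
    · intro hj
      have hjk := j.isLt
      exact ⟨⟨(j : ℕ) - (k - l), by omega⟩, Fin.ext (by simp; omega)⟩
    · rintro ⟨m, rfl⟩; simp]
  rw [Finset.sum_image]
  intro u hu v hv h
  have h2 : k - l + (u : ℕ) = k - l + (v : ℕ) := by simpa using congrArg Fin.val h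
  exact Fin.ext (by omega)

lemma Ud_eq_rev {b k l : ℕ} (a : Fin b → Fin k → ℝ) (hl : 1 ≤ l) (hlk : l ≤ k) :
    Ud b k a l = ∑ m : Fin l, Abar b k a ⟨k - 1 - (m : ℕ), by omega⟩ := by
  have hrev := Equiv.sum_comp (Fin.revPerm (n := l))
      (fun m : Fin l => Abar b k a ⟨k - 1 - (m : ℕ), by omega⟩)
  rw [Ud_eq a hl hlk, ← hrev]
  apply Finset.sum_congr rfl
  intro m _
  congr 1
  apply Fin.ext
  simp only [Fin.revPerm_apply, Fin.val_rev]
  have := m.isLt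
  omega

lemma sum_bounds {b k l : ℕ} (a : Fin b → Fin k → ℝ) (hb : 1 ≤ b)
    (ha : ∀ i : Fin b, StrictMono (a i)) (hl : 1 ≤ l) (hlk : l ≤ k)
    (f : Fin l → Fin k) (hf : Function.Injective f) :
    Ld b k a l ≤ ∑ m : Fin l, Abar b k a (f m)
      ∧ ∑ m : Fin l, Abar b k a (f m) ≤ Ud b k a l := by
  have hc : Monotone (Abar b k a) := (abar_sm hb a ha).monotone
  set T : Finset (Fin k) := Finset.univ.image f with hT
  have hTcard : T.card = l := by
    rw [hT, Finset.card_image_of_injective _ hf, Finset.card_univ, Fintype.card_fin]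
  set g := T.orderEmbOfFin hTcard with hg
  have hgsm : StrictMono g := (T.orderEmbOfFin hTcard).strictMono
  have himg : Finset.univ.image (g : Fin l → Fin k) = T := by
    ext j
    simp only [Finset.mem_image, Finset.mem_univ, true_and]
    constructor
    · rintro ⟨m, rfl⟩; exact Finset.orderEmbOfFin_mem T hTcard m
    · intro hj
      have : j ∈ Set.range (T.orderEmbOfFin hTcard) := by
        rw [Finset.range_orderEmbOfFin]; exact hj
      obtain ⟨m, hm⟩ := this; exact ⟨m, hm⟩
  have hsum : ∑ m : Fin l, Abar b k a (f m) = ∑ m : Fin l, Abar b k a (g m) := by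
    rw [← Finset.sum_image (f := Abar b k a) (g := f)
        (fun u _ v _ h => hf h), ← hT, ← himg,
        Finset.sum_image (fun u _ v _ h => (T.orderEmbOfFin hTcard).injective h)]
  constructor
  · rw [hsum, Ld_eq a hlk]
    apply Finset.sum_le_sum
    intro m _
    apply hc
    rw [Fin.le_def]
    have h := sm_le_apply hgsm (m : ℕ) m.isLt
    simpa using h
  · rw [hsum, Ud_eq a hl hlk]
    apply Finset.sum_le_sum
    intro m _
    apply hc
    rw [Fin.le_def]
    exact sm_apply_le hgsm hlk m

lemma polyP_bounds {b k l : ℕ} (a : Fin b → Fin k → ℝ) (hb : 1 ≤ b)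
    (ha : ∀ i : Fin b, StrictMono (a i)) {x : Fin (k - 1) → ℝ} (hx : x ∈ PolyP b k a)
    (hl : 1 ≤ l) (hlk : l ≤ k - 1)
    (s : Fin l → Fin (k - 1)) (hs : Function.Injective s) :
    Ld b k a l ≤ ∑ m : Fin l, x (s m) ∧ ∑ m : Fin l, x (s m) ≤ Ud b k a l := by
  have hlk' : l ≤ k := le_trans hlk (Nat.sub_le k 1)
  have hlin : IsLinearMap ℝ (fun y : Fin (k - 1) → ℝ => ∑ m : Fin l, y (s m)) :=
    ⟨fun u v => by simp [Finset.sum_add_distrib], fun r u => by simp [Finset.mul_sum]⟩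
  have hconv : Convex ℝ {y : Fin (k - 1) → ℝ |
      Ld b k a l ≤ ∑ m : Fin l, y (s m) ∧ ∑ m : Fin l, y (s m) ≤ Ud b k a l} := by
    rw [Set.setOf_and]
    exact (convex_halfSpace_ge hlin _).inter (convex_halfSpace_le hlin _)
  refine convexHull_min ?_ hconv hx
  rintro y ⟨π, hπ, rfl⟩
  have hπinj : Function.Injective π := (Finset.mem_filter.mp hπ).2
  exact sum_bounds a hb ha hl hlk' (fun m => π (s m)) (hπinj.comp hs)

lemma vertex_mem {b k : ℕ} (a : Fin b → Fin k → ℝ) (π : Fin (k-1) → Fin k)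
    (hπ : Function.Injective π) : AbarPi b k a π ∈ PolyP b k a :=
  subset_convexHull ℝ _ ⟨π, Finset.mem_filter.mpr ⟨Finset.mem_univ _, hπ⟩, rfl⟩

lemma not_mem_interior {b k l : ℕ} (a : Fin b → Fin k → ℝ) (hb : 1 ≤ b) (hk : 2 ≤ k)
    (ha : ∀ i : Fin b, StrictMono (a i)) {x : Fin (k-1) → ℝ}
    (hl : 1 ≤ l) (hlk : l ≤ k - 1) (s : Fin l → Fin (k-1)) (hs : Function.Injective s)
    (hcase : (∑ m : Fin l, x (s m)) = Ld b k a l ∨ (∑ m : Fin l, x (s m)) = Ud b k a l) :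
    x ∉ interior (PolyP b k a) := by
  intro hint
  have hlin : IsLinearMap ℝ (fun y : Fin (k-1) → ℝ => ∑ m : Fin l, y (s m)) :=
    ⟨fun u v => by simp [Finset.sum_add_distrib], fun r u => by simp [Finset.mul_sum]⟩
  have hπ₁i : Function.Injective (fun j : Fin (k-1) => (⟨(j:ℕ), by have := j.isLt; omega⟩ : Fin k)) :=
    fun u v h => Fin.ext (by simpa using congrArg Fin.val h)
  have hπ₂i : Function.Injective (fun j : Fin (k-1) =>
      if j = s ⟨0, hl⟩ then (⟨k-1, by omega⟩ : Fin k)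
      else ⟨(j:ℕ), by have := j.isLt; omega⟩) := by
    intro u v h
    by_cases hu : u = s ⟨0, hl⟩ <;> by_cases hv : v = s ⟨0, hl⟩ <;>
      simp only [if_pos, if_neg, hu, hv, if_true, if_false] at h
    · rw [hu, hv]
    · exfalso; have h2 := congrArg Fin.val h; simp only at h2; have := v.isLt; omega
    · exfalso; have h2 := congrArg Fin.val h; simp only at h2; have := u.isLt; omega
    · exact Fin.ext (by simpa using congrArg Fin.val h)
  have hv1 := vertex_mem a _ hπ₁i
  have hv2 := vertex_mem a _ hπ₂i
  have hcsm : StrictMono (Abar b k a) := abar_sm hb a ha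
  have hb1 := polyP_bounds a hb ha hv1 hl hlk s hs
  have hb2 := polyP_bounds a hb ha hv2 hl hlk s hs
  have hlt : (∑ m : Fin l, AbarPi b k a (fun j => ⟨(j:ℕ), by have := j.isLt; omega⟩) (s m))
      < ∑ m : Fin l, AbarPi b k a (fun j => if j = s ⟨0, hl⟩ then (⟨k-1, by omega⟩ : Fin k)
          else ⟨(j:ℕ), by have := j.isLt; omega⟩) (s m) := by
    simp only [AbarPi]
    apply Finset.sum_lt_sum
    · intro m _
      by_cases hm : s m = s ⟨0, hl⟩
      · rw [if_pos hm]
        apply hcsm.monotone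
        rw [Fin.le_def]
        have := (s m).isLt
        simp only
        omega
      · rw [if_neg hm]
    · refine ⟨⟨0, hl⟩, Finset.mem_univ _, ?_⟩
      rw [if_pos rfl]
      apply hcsm
      rw [Fin.lt_def]
      have := (s ⟨0, hl⟩).isLt
      simp only
      omega
  rw [mem_interior_iff_mem_nhds, Metric.mem_nhds_iff] at hint
  obtain ⟨ε, hε, hball⟩ := hint
  have step : ∀ z : Fin (k-1) → ℝ, ∃ δ : ℝ, 0 < δ ∧ x + δ • (x - z) ∈ PolyP b k a := by
    intro z
    refine ⟨ε / (2 * (‖x - z‖ + 1)), by positivity, ?_⟩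
    apply hball
    rw [Metric.mem_ball, dist_eq_norm, add_sub_cancel_left, norm_smul]
    have h1 : ‖x - z‖ ≤ ‖x - z‖ + 1 := by linarith
    calc ‖ε / (2 * (‖x - z‖ + 1))‖ * ‖x - z‖
        = ε / (2 * (‖x - z‖ + 1)) * ‖x - z‖ := by
          rw [Real.norm_eq_abs, abs_of_pos (by positivity)]
      _ ≤ ε / (2 * (‖x - z‖ + 1)) * (‖x - z‖ + 1) := by
          apply mul_le_mul_of_nonneg_left h1 (by positivity)
      _ = ε / 2 := by field_simp
      _ < ε := by linarith
  have hfw : ∀ (z : Fin (k-1) → ℝ) (δ : ℝ), (∑ m : Fin l, (x + δ • (x - z)) (s m))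
      = (∑ m : Fin l, x (s m)) + δ * ((∑ m : Fin l, x (s m)) - ∑ m : Fin l, z (s m)) := by
    intro z δ
    have h1 := hlin.map_add x (δ • (x - z))
    have h2 := hlin.map_smul δ (x - z)
    have h3 := hlin.map_sub x z
    rw [h1, h2, h3, smul_eq_mul]
  rcases hcase with hc | hc
  · obtain ⟨δ, hδ, hw⟩ := step (AbarPi b k a fun j => if j = s ⟨0, hl⟩ then (⟨k-1, by omega⟩ : Fin k)
      else ⟨(j:ℕ), by have := j.isLt; omega⟩)
    have hwb := (polyP_bounds a hb ha hw hl hlk s hs).1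
    have hfw' := hfw (AbarPi b k a fun j => if j = s ⟨0, hl⟩ then (⟨k-1, by omega⟩ : Fin k)
      else ⟨(j:ℕ), by have := j.isLt; omega⟩) δ
    have hdn : Ld b k a l - (∑ m : Fin l,
        AbarPi b k a (fun j => if j = s ⟨0, hl⟩ then (⟨k-1, by omega⟩ : Fin k)
          else ⟨(j:ℕ), by have := j.isLt; omega⟩) (s m)) < 0 := by
      linarith [hb1.1, hlt]
    have := mul_neg_of_pos_of_neg hδ hdn
    rw [hc] at hfw'
    linarith [hwb, hfw']
  · obtain ⟨δ, hδ, hw⟩ := step (AbarPi b k a fun j => (⟨(j:ℕ), by have := j.isLt; omega⟩ : Fin k))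
    have hwb := (polyP_bounds a hb ha hw hl hlk s hs).2
    have hfw' := hfw (AbarPi b k a fun j => (⟨(j:ℕ), by have := j.isLt; omega⟩ : Fin k)) δ
    have hdn : (0:ℝ) < Ud b k a l - (∑ m : Fin l,
        AbarPi b k a (fun j => (⟨(j:ℕ), by have := j.isLt; omega⟩ : Fin k)) (s m)) := by
      linarith [hb2.2, hlt]
    have := mul_pos hδ hdn
    rw [hc] at hfw'
    linarith [hwb, hfw']

lemma exists_support {E : Type*} [NormedAddCommGroup E] [NormedSpace ℝ E]
    [FiniteDimensional ℝ E] {P : Set E} (hconv : Convex ℝ P) (hclosed : IsClosed P)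
    (hne : P.Nonempty) {x : E} (hxi : x ∉ interior P) :
    ∃ F : E →L[ℝ] ℝ, F ≠ 0 ∧ ∀ p ∈ P, F p ≤ F x := by
  have hy : ∀ j : ℕ, ∃ y : E, y ∈ Metric.ball x (1/(j+1)) ∧ y ∉ P := by
    intro j
    by_contra hcon
    push_neg at hcon
    apply hxi
    rw [mem_interior_iff_mem_nhds]
    have hrpos : (0:ℝ) < 1/((j:ℝ)+1) := by positivity
    apply Filter.mem_of_superset (Metric.ball_mem_nhds x hrpos)
    intro y hyb
    exact hcon y hyb
  choose y hyball hyP using hy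
  have hsep : ∀ j : ℕ, ∃ f : E →L[ℝ] ℝ, (∀ p ∈ P, f p < f (y j)) ∧ f ≠ 0 := by
    intro j
    obtain ⟨f, u, hfa, hfu⟩ := geometric_hahn_banach_closed_point hconv hclosed (hyP j)
    refine ⟨f, fun p hp => lt_trans (hfa p hp) hfu, ?_⟩
    intro h0
    obtain ⟨p0, hp0⟩ := hne
    have := lt_trans (hfa p0 hp0) hfu
    rw [h0] at this
    simp at this
  choose f hfP hf0 using hsep
  set F : ℕ → E →L[ℝ] ℝ := fun j => ‖f j‖⁻¹ • f j with hF
  have hFnorm : ∀ j, ‖F j‖ = 1 := by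
    intro j
    exact norm_smul_inv_norm (hf0 j)
  have hFP : ∀ j, ∀ p ∈ P, F j p ≤ F j (y j) := by
    intro j p hp
    rw [hF]
    simp only [ContinuousLinearMap.smul_apply, smul_eq_mul]
    have hpos : (0:ℝ) ≤ ‖f j‖⁻¹ := by positivity
    exact mul_le_mul_of_nonneg_left (le_of_lt (hfP j p hp)) hpos
  have hsphere : IsCompact (Metric.sphere (0 : E →L[ℝ] ℝ) 1) := isCompact_sphere _ _
  obtain ⟨G, hGs, φ, hφ, hGt⟩ := hsphere.tendsto_subseq
    (fun j => by rw [mem_sphere_zero_iff_norm]; exact hFnorm j)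
  have hG0 : G ≠ 0 := by
    intro h
    rw [h] at hGs
    rw [mem_sphere_zero_iff_norm] at hGs
    simp at hGs
  have hyx : Filter.Tendsto y Filter.atTop (nhds x) := by
    rw [tendsto_iff_dist_tendsto_zero]
    apply squeeze_zero (g := fun j : ℕ => 1/((j:ℝ)+1)) (fun j => dist_nonneg)
      (fun j => le_of_lt (by have := hyball j; rwa [Metric.mem_ball] at this))
    exact tendsto_one_div_add_atTop_nhds_zero_nat
  refine ⟨G, hG0, fun p hp => ?_⟩
  have h1 : Filter.Tendsto (fun j => F (φ j) p) Filter.atTop (nhds (G p)) := by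
    have hev : Continuous fun g : E →L[ℝ] ℝ => g p :=
      (ContinuousLinearMap.apply ℝ ℝ p).continuous
    exact (hev.tendsto G).comp hGt
  have h2 : Filter.Tendsto (fun j => F (φ j) (y (φ j))) Filter.atTop (nhds (G x)) := by
    rw [← tendsto_sub_nhds_zero_iff]
    apply squeeze_zero_norm (a := fun j => ‖y (φ j) - x‖ + ‖F (φ j) - G‖ * ‖x‖)
    · intro j
      have : F (φ j) (y (φ j)) - G x
          = F (φ j) (y (φ j) - x) + (F (φ j) - G) x := by
        simp [map_sub, ContinuousLinearMap.sub_apply]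
        try ring
      rw [this]
      apply le_trans (norm_add_le _ _)
      gcongr
      · calc ‖F (φ j) (y (φ j) - x)‖ ≤ ‖F (φ j)‖ * ‖y (φ j) - x‖ :=
            ContinuousLinearMap.le_opNorm _ _
          _ = ‖y (φ j) - x‖ := by rw [hFnorm]; ring
      · exact ContinuousLinearMap.le_opNorm _ _
    · have ha1 : Filter.Tendsto (fun j => ‖y (φ j) - x‖) Filter.atTop (nhds 0) := by
        have h := tendsto_iff_norm_sub_tendsto_zero.mp (hyx.comp (hφ.tendsto_atTop))
        simpa [Function.comp] using h
      have ha2 : Filter.Tendsto (fun j => ‖F (φ j) - G‖ * ‖x‖) Filter.atTop (nhds 0) := by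
        have : Filter.Tendsto (fun j => ‖F (φ j) - G‖) Filter.atTop (nhds 0) := by
          have h := tendsto_iff_norm_sub_tendsto_zero.mp hGt
          simpa [Function.comp] using h
        simpa using this.mul_const ‖x‖
      simpa using ha1.add ha2
  exact le_of_tendsto_of_tendsto' h1 h2 (fun j => hFP (φ j) p hp)

lemma tele (f : ℕ → ℝ) (p : ℕ) : ∀ q, p ≤ q →
    ∑ m ∈ Finset.Ico p q, (f m - f (m+1)) = f p - f q := by
  intro q
  induction q with
  | zero => intro h; interval_cases p; simp
  | succ q ih =>
    intro h
    rcases Nat.lt_or_ge p (q+1) with h1 | h1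
    · have h2 : p ≤ q := by omega
      rw [Finset.sum_Ico_succ_top h2, ih h2]
      ring
    · have : p = q + 1 := by omega
      subst this
      simp

lemma tight_of_max {b k : ℕ} (a : Fin b → Fin k → ℝ) (hb : 1 ≤ b) (hk : 2 ≤ k)
    (ha : ∀ i : Fin b, StrictMono (a i)) {x : Fin (k-1) → ℝ}
    (hxP : x ∈ PolyP b k a) (t : Fin (k-1) → ℝ) (ht : t ≠ 0)
    (hmax : ∀ p ∈ PolyP b k a,
      (∑ j : Fin (k-1), t j * p j) ≤ ∑ j : Fin (k-1), t j * x j) :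
    ∃ l : ℕ, 1 ≤ l ∧ l ≤ k - 1 ∧ ∃ s : Fin l → Fin (k-1), Function.Injective s ∧
      ((∑ m : Fin l, x (s m)) = Ld b k a l ∨ (∑ m : Fin l, x (s m)) = Ud b k a l) := by
  have hcsm : StrictMono (Abar b k a) := abar_sm hb a ha
  set σ : Equiv.Perm (Fin (k-1)) := Tuple.sort (fun m => -(t m)) with hσ
  have hanti : ∀ (i j : ℕ) (hij : i ≤ j) (hj : j < k-1),
      t (σ ⟨j, hj⟩) ≤ t (σ ⟨i, by omega⟩) := by
    intro i j hij hj
    have hmono := Tuple.monotone_sort (fun m => -(t m))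
    have := hmono (show (⟨i, by omega⟩ : Fin (k-1)) ≤ ⟨j, hj⟩ by
      rw [Fin.le_def]; exact hij)
    simp only [Function.comp_apply, neg_le_neg_iff] at this
    exact this
  set uu : ℕ → ℝ := fun i => if h : i < k-1 then t (σ ⟨i, h⟩) else 0 with huu
  have huupos : ∀ i (h : i < k-1), uu i = t (σ ⟨i, h⟩) := fun i h => dif_pos h
  have huu0 : ∀ i, k-1 ≤ i → uu i = 0 := fun i h => dif_neg (by omega)
  have huuanti : ∀ i j : ℕ, i ≤ j → j < k-1 → uu j ≤ uu i := by
    intro i j hij hj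
    rw [huupos i (by omega), huupos j hj]
    exact hanti i j hij hj
  set up : ℕ → ℝ := fun i => max (uu i) 0 with hup
  set um : ℕ → ℝ := fun i => max (-(uu i)) 0 with hum
  set um' : ℕ → ℝ := fun i => if i < k-1 then um (k-1-1-i) else 0 with hum'
  have hupanti : ∀ i j : ℕ, i ≤ j → up j ≤ up i := by
    intro i j hij
    rcases Nat.lt_or_ge j (k-1) with hj | hj
    · exact max_le_max (huuanti i j hij hj) le_rfl
    · rw [hup]; simp only
      rw [huu0 j hj]
      simp
  have hupnn : ∀ i, 0 ≤ up i := fun i => le_max_right _ _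
  have hum'nn : ∀ i, 0 ≤ um' i := by
    intro i
    rw [hum']; simp only
    split
    · exact le_max_right _ _
    · exact le_rfl
  have hum'anti : ∀ i j : ℕ, i ≤ j → um' j ≤ um' i := by
    intro i j hij
    rcases Nat.lt_or_ge j (k-1) with hj | hj
    · have hi : i < k-1 := by omega
      rw [hum']; simp only
      rw [if_pos hj, if_pos hi, hum]; simp only
      apply max_le_max _ le_rfl
      simp only [neg_le_neg_iff]
      exact huuanti (k-1-1-j) (k-1-1-i) (by omega) (by omega)
    · rw [hum']; simp only
      rw [if_neg (by omega)]
      exact hum'nn i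
  have hupkn : up (k-1) = 0 := by
    rw [hup]; simp only
    rw [huu0 (k-1) le_rfl]
    simp
  have hum'kn : um' (k-1) = 0 := by
    rw [hum']; simp only
    rw [if_neg (by omega)]
  set Yf : (Fin (k-1) → ℝ) → ℕ → ℝ :=
    fun y i => if h : i < k-1 then y (σ ⟨i, h⟩) else 0 with hYf
  set Yrf : (Fin (k-1) → ℝ) → ℕ → ℝ :=
    fun y i => if h : i < k-1 then y (σ ⟨k-1-1-i, by omega⟩) else 0 with hYrf
  have hsplitmax : ∀ r : ℝ, max r 0 - max (-r) 0 = r := by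
    intro r
    rcases le_total r 0 with h | h
    · rw [max_eq_right h, max_eq_left (neg_nonneg.mpr h)]; ring
    · rw [max_eq_left h, max_eq_right (neg_nonpos.mpr h)]; ring
  have hkey : ∀ y : Fin (k-1) → ℝ, (∑ j : Fin (k-1), t j * y j) =
      ∑ m ∈ Finset.range (k-1),
        ((up m - up (m+1)) * (∑ i ∈ Finset.range (m+1), Yf y i)
          - (um' m - um' (m+1)) * (∑ i ∈ Finset.range (m+1), Yrf y i)) := by
    intro y
    have e1 : (∑ j : Fin (k-1), t j * y j) = ∑ i ∈ Finset.range (k-1), uu i * Yf y i := by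
      rw [← Equiv.sum_comp σ (fun j => t j * y j), ← Fin.sum_univ_eq_sum_range]
      apply Finset.sum_congr rfl
      intro i _
      have h1 : uu (i:ℕ) = t (σ i) := by
        rw [huupos (i:ℕ) i.isLt]
      have h2 : Yf y (i:ℕ) = y (σ i) := by
        rw [hYf]; simp only
        rw [dif_pos i.isLt]
      rw [h1, h2]
    have e2 : ∑ i ∈ Finset.range (k-1), uu i * Yf y i
        = (∑ i ∈ Finset.range (k-1), up i * Yf y i)
          - ∑ i ∈ Finset.range (k-1), um i * Yf y i := by
      rw [← Finset.sum_sub_distrib]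
      apply Finset.sum_congr rfl
      intro i _
      rw [hup, hum]; simp only
      rw [← sub_mul, hsplitmax]
    have e3 : ∑ i ∈ Finset.range (k-1), um i * Yf y i
        = ∑ i ∈ Finset.range (k-1), um' i * Yrf y i := by
      rw [← Finset.sum_range_reflect (fun i => um i * Yf y i) (k-1)]
      apply Finset.sum_congr rfl
      intro i hi
      rw [Finset.mem_range] at hi
      rw [hum']; simp only
      rw [if_pos hi, hYf, hYrf]; simp only
      rw [dif_pos (show k-1-1-i < k-1 by omega), dif_pos hi]
    have e4 := abel_id up (Yf y) (k-1)
    have e5 := abel_id um' (Yrf y) (k-1)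
    rw [hupkn] at e4
    rw [hum'kn] at e5
    rw [e1, e2, e3, e4, e5]
    rw [zero_mul, add_zero, zero_mul, add_zero, ← Finset.sum_sub_distrib]
  -- injective index tuples
  have hsTopInj : ∀ (m : ℕ) (hm : m < k-1), Function.Injective
      (fun q : Fin (m+1) => σ (⟨(q:ℕ), by have := q.isLt; omega⟩ : Fin (k-1))) := by
    intro m hm q1 q2 h
    have := σ.injective h
    have := congrArg Fin.val this
    simp only at this
    exact Fin.ext this
  have hsBotInj : ∀ (m : ℕ) (hm : m < k-1), Function.Injective
      (fun q : Fin (m+1) => σ (⟨k-1-1-(q:ℕ), by have := q.isLt; omega⟩ : Fin (k-1))) := by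
    intro m hm q1 q2 h
    have := σ.injective h
    have h2 := congrArg Fin.val this
    simp only at h2
    have hq1 := q1.isLt
    have hq2 := q2.isLt
    exact Fin.ext (by omega)
  -- prefix sum conversions
  have hSPconv : ∀ (y : Fin (k-1) → ℝ) (m : ℕ) (hm : m < k-1),
      (∑ i ∈ Finset.range (m+1), Yf y i)
        = ∑ q : Fin (m+1), y (σ (⟨(q:ℕ), by have := q.isLt; omega⟩ : Fin (k-1))) := by
    intro y m hm
    rw [← Fin.sum_univ_eq_sum_range (fun i => Yf y i) (m+1)]
    apply Finset.sum_congr rfl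
    intro q _
    rw [hYf]; simp only
    rw [dif_pos (show (q:ℕ) < k-1 by have := q.isLt; omega)]
  have hSRconv : ∀ (y : Fin (k-1) → ℝ) (m : ℕ) (hm : m < k-1),
      (∑ i ∈ Finset.range (m+1), Yrf y i)
        = ∑ q : Fin (m+1), y (σ (⟨k-1-1-(q:ℕ), by have := q.isLt; omega⟩ : Fin (k-1))) := by
    intro y m hm
    rw [← Fin.sum_univ_eq_sum_range (fun i => Yrf y i) (m+1)]
    apply Finset.sum_congr rfl
    intro q _
    rw [hYrf]; simp only
    rw [dif_pos (show (q:ℕ) < k-1 by have := q.isLt; omega)]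
  -- bounds for x
  have hSPx : ∀ m : ℕ, m < k-1 →
      (∑ i ∈ Finset.range (m+1), Yf x i) ≤ Ud b k a (m+1) := by
    intro m hm
    rw [hSPconv x m hm]
    exact (polyP_bounds a hb ha hxP (by omega) (by omega) _ (hsTopInj m hm)).2
  have hSRx : ∀ m : ℕ, m < k-1 →
      Ld b k a (m+1) ≤ ∑ i ∈ Finset.range (m+1), Yrf x i := by
    intro m hm
    rw [hSRconv x m hm]
    exact (polyP_bounds a hb ha hxP (by omega) (by omega) _ (hsBotInj m hm)).1
  -- the optimal vertex
  set tstar : Fin (k-1) → Fin k := fun j =>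
    if 0 < t j then (⟨k-1-((σ.symm j : ℕ)), by have := (σ.symm j).isLt; omega⟩ : Fin k)
    else ⟨k-1-1-((σ.symm j : ℕ)), by omega⟩ with hts
  have htsval : ∀ j : Fin (k-1), uu ((σ.symm j : ℕ)) = t j := by
    intro j
    rw [huupos _ (σ.symm j).isLt]
    simp only [Fin.eta, Equiv.apply_symm_apply]
  have htsinj : Function.Injective tstar := by
    intro j1 j2 h
    have h1 := (σ.symm j1).isLt
    have h2 := (σ.symm j2).isLt
    have key : ((σ.symm j1 : ℕ)) = ((σ.symm j2 : ℕ)) := by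
      by_cases c1 : 0 < t j1 <;> by_cases c2 : 0 < t j2
      · rw [hts] at h; simp only [if_pos c1, if_pos c2] at h
        have h3 := congrArg Fin.val h; simp only at h3; omega
      · rw [hts] at h; simp only [if_pos c1, if_neg c2] at h
        have h3 := congrArg Fin.val h; simp only at h3
        exfalso
        have hle : ((σ.symm j2 : ℕ)) ≤ ((σ.symm j1 : ℕ)) := by omega
        have := huuanti _ _ hle h1
        rw [htsval j1, htsval j2] at this
        push_neg at c2
        linarith
      · rw [hts] at h; simp only [if_neg c1, if_pos c2] at h
        have h3 := congrArg Fin.val h; simp only at h3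
        exfalso
        have hle : ((σ.symm j1 : ℕ)) ≤ ((σ.symm j2 : ℕ)) := by omega
        have := huuanti _ _ hle h2
        rw [htsval j1, htsval j2] at this
        push_neg at c1
        linarith
      · rw [hts] at h; simp only [if_neg c1, if_neg c2] at h
        have h3 := congrArg Fin.val h; simp only at h3; omega
    exact σ.symm.injective (Fin.ext key)
  have hvsP : AbarPi b k a tstar ∈ PolyP b k a := vertex_mem a tstar htsinj
  -- values of the vertex coordinates
  have hYv : ∀ (i : ℕ) (hi : i < k-1), 0 < uu i →
      Yf (AbarPi b k a tstar) i = Abar b k a ⟨k-1-i, by omega⟩ := by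
    intro i hi hpos
    rw [hYf]; simp only
    rw [dif_pos hi]
    show Abar b k a (tstar (σ ⟨i, hi⟩)) = _
    rw [hts]; simp only
    have hsym : σ.symm (σ ⟨i, hi⟩) = ⟨i, hi⟩ := Equiv.symm_apply_apply σ _
    have hcond : 0 < t (σ ⟨i, hi⟩) := by rw [← huupos i hi]; exact hpos
    rw [if_pos hcond]
    congr 1
    apply Fin.ext
    simp only [hsym]
  have hYrv : ∀ (i : ℕ) (hi : i < k-1), uu (k-1-1-i) < 0 →
      Yrf (AbarPi b k a tstar) i = Abar b k a ⟨i, by omega⟩ := by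
    intro i hi hneg
    rw [hYrf]; simp only
    rw [dif_pos hi]
    show Abar b k a (tstar (σ ⟨k-1-1-i, _⟩)) = _
    rw [hts]; simp only
    have hsym : σ.symm (σ ⟨k-1-1-i, by omega⟩) = ⟨k-1-1-i, by omega⟩ :=
      Equiv.symm_apply_apply σ _
    have hcond : ¬ (0 < t (σ ⟨k-1-1-i, by omega⟩)) := by
      rw [← huupos (k-1-1-i) (by omega)]
      linarith
    rw [if_neg hcond]
    congr 1
    apply Fin.ext
    simp only [hsym]
    omega
  -- prefix sums of the vertex
  have hSPv : ∀ m : ℕ, m < k-1 → 0 < uu m →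
      (∑ i ∈ Finset.range (m+1), Yf (AbarPi b k a tstar) i) = Ud b k a (m+1) := by
    intro m hm hpos
    rw [Ud_eq_rev a (by omega) (by omega)]
    rw [← Fin.sum_univ_eq_sum_range (fun i => Yf (AbarPi b k a tstar) i) (m+1)]
    apply Finset.sum_congr rfl
    intro q _
    have hq : (q : ℕ) < k-1 := by have := q.isLt; omega
    have hqpos : 0 < uu (q : ℕ) := lt_of_lt_of_le hpos (huuanti (q:ℕ) m (by have := q.isLt; omega) hm)
    rw [hYv (q:ℕ) hq hqpos]
  have hSRv : ∀ m : ℕ, m < k-1 → uu (k-1-1-m) < 0 →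
      (∑ i ∈ Finset.range (m+1), Yrf (AbarPi b k a tstar) i) = Ld b k a (m+1) := by
    intro m hm hneg
    rw [Ld_eq a (by omega)]
    rw [← Fin.sum_univ_eq_sum_range (fun i => Yrf (AbarPi b k a tstar) i) (m+1)]
    apply Finset.sum_congr rfl
    intro q _
    have hq : (q : ℕ) < k-1 := by have := q.isLt; omega
    have hqneg : uu (k-1-1-(q:ℕ)) < 0 := by
      apply lt_of_le_of_lt _ hneg
      exact huuanti (k-1-1-m) (k-1-1-(q:ℕ)) (by have := q.isLt; omega) (by omega)
    rw [hYrv (q:ℕ) hq hqneg]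
  -- master comparison
  have hdiff : 0 ≤ (∑ m ∈ Finset.range (k-1),
      ((up m - up (m+1)) * (∑ i ∈ Finset.range (m+1), Yf x i)
        - (um' m - um' (m+1)) * (∑ i ∈ Finset.range (m+1), Yrf x i)))
      - ∑ m ∈ Finset.range (k-1),
      ((up m - up (m+1)) * (∑ i ∈ Finset.range (m+1), Yf (AbarPi b k a tstar) i)
        - (um' m - um' (m+1)) * (∑ i ∈ Finset.range (m+1), Yrf (AbarPi b k a tstar) i)) := by
    have := hmax (AbarPi b k a tstar) hvsP
    rw [hkey x, hkey (AbarPi b k a tstar)] at this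
    linarith
  rw [← Finset.sum_sub_distrib] at hdiff
  have hterm : ∀ m ∈ Finset.range (k-1),
      (((up m - up (m+1)) * (∑ i ∈ Finset.range (m+1), Yf x i)
        - (um' m - um' (m+1)) * (∑ i ∈ Finset.range (m+1), Yrf x i))
      - ((up m - up (m+1)) * (∑ i ∈ Finset.range (m+1), Yf (AbarPi b k a tstar) i)
        - (um' m - um' (m+1)) * (∑ i ∈ Finset.range (m+1), Yrf (AbarPi b k a tstar) i)))
      = (up m - up (m+1)) * ((∑ i ∈ Finset.range (m+1), Yf x i)
            - ∑ i ∈ Finset.range (m+1), Yf (AbarPi b k a tstar) i)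
        - (um' m - um' (m+1)) * ((∑ i ∈ Finset.range (m+1), Yrf x i)
            - ∑ i ∈ Finset.range (m+1), Yrf (AbarPi b k a tstar) i) := by
    intro m _
    ring
  rw [Finset.sum_congr rfl hterm] at hdiff
  have hAle : ∀ m ∈ Finset.range (k-1),
      (up m - up (m+1)) * ((∑ i ∈ Finset.range (m+1), Yf x i)
          - ∑ i ∈ Finset.range (m+1), Yf (AbarPi b k a tstar) i) ≤ 0 := by
    intro m hm
    rw [Finset.mem_range] at hm
    rcases eq_or_lt_of_le (sub_nonneg.mpr (hupanti m (m+1) (by omega))) with he | hlt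
    · rw [← he, zero_mul]
    · have hupm : 0 < up m := lt_of_lt_of_le hlt (by linarith [hupnn (m+1)])
      have huum : 0 < uu m := by
        rcases max_cases (uu m) 0 with ⟨h1, h2⟩ | ⟨h1, h2⟩
        · rw [hup] at hupm; simp only at hupm; rw [h1] at hupm; exact hupm
        · exfalso; rw [hup] at hupm; simp only at hupm; rw [h1] at hupm; exact lt_irrefl _ hupm
      rw [hSPv m hm huum]
      have := hSPx m hm
      apply mul_nonpos_of_nonneg_of_nonpos (le_of_lt hlt)
      linarith
  have hBge : ∀ m ∈ Finset.range (k-1),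
      0 ≤ (um' m - um' (m+1)) * ((∑ i ∈ Finset.range (m+1), Yrf x i)
          - ∑ i ∈ Finset.range (m+1), Yrf (AbarPi b k a tstar) i) := by
    intro m hm
    rw [Finset.mem_range] at hm
    rcases eq_or_lt_of_le (sub_nonneg.mpr (hum'anti m (m+1) (by omega))) with he | hlt
    · rw [← he, zero_mul]
    · have humm : 0 < um' m := lt_of_lt_of_le hlt (by linarith [hum'nn (m+1)])
      have huum : uu (k-1-1-m) < 0 := by
        rw [hum'] at humm; simp only at humm
        rw [if_pos hm, hum] at humm; simp only at humm
        rcases max_cases (-(uu (k-1-1-m))) 0 with ⟨h1, h2⟩ | ⟨h1, h2⟩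
        · rw [h1] at humm; linarith
        · exfalso; rw [h1] at humm; exact lt_irrefl _ humm
      rw [hSRv m hm huum]
      have := hSRx m hm
      apply mul_nonneg (le_of_lt hlt)
      linarith
  have hzero : ∀ m ∈ Finset.range (k-1),
      ((up m - up (m+1)) * ((∑ i ∈ Finset.range (m+1), Yf x i)
            - ∑ i ∈ Finset.range (m+1), Yf (AbarPi b k a tstar) i)
        - (um' m - um' (m+1)) * ((∑ i ∈ Finset.range (m+1), Yrf x i)
            - ∑ i ∈ Finset.range (m+1), Yrf (AbarPi b k a tstar) i)) = 0 := by
    have hnp : ∀ m ∈ Finset.range (k-1),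
        ((up m - up (m+1)) * ((∑ i ∈ Finset.range (m+1), Yf x i)
              - ∑ i ∈ Finset.range (m+1), Yf (AbarPi b k a tstar) i)
          - (um' m - um' (m+1)) * ((∑ i ∈ Finset.range (m+1), Yrf x i)
              - ∑ i ∈ Finset.range (m+1), Yrf (AbarPi b k a tstar) i)) ≤ 0 := by
      intro m hm
      have := hAle m hm
      have := hBge m hm
      linarith
    have hsle : (∑ m ∈ Finset.range (k-1),
        ((up m - up (m+1)) * ((∑ i ∈ Finset.range (m+1), Yf x i)
              - ∑ i ∈ Finset.range (m+1), Yf (AbarPi b k a tstar) i)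
          - (um' m - um' (m+1)) * ((∑ i ∈ Finset.range (m+1), Yrf x i)
              - ∑ i ∈ Finset.range (m+1), Yrf (AbarPi b k a tstar) i))) = 0 :=
      le_antisymm (Finset.sum_nonpos hnp) hdiff
    intro m hm
    have hneg : ∀ m ∈ Finset.range (k-1), 0 ≤
        -(((up m - up (m+1)) * ((∑ i ∈ Finset.range (m+1), Yf x i)
              - ∑ i ∈ Finset.range (m+1), Yf (AbarPi b k a tstar) i)
          - (um' m - um' (m+1)) * ((∑ i ∈ Finset.range (m+1), Yrf x i)
              - ∑ i ∈ Finset.range (m+1), Yrf (AbarPi b k a tstar) i))) := by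
      intro m hm
      have := hnp m hm
      linarith
    have hsneg : (∑ m ∈ Finset.range (k-1),
        -(((up m - up (m+1)) * ((∑ i ∈ Finset.range (m+1), Yf x i)
              - ∑ i ∈ Finset.range (m+1), Yf (AbarPi b k a tstar) i)
          - (um' m - um' (m+1)) * ((∑ i ∈ Finset.range (m+1), Yrf x i)
              - ∑ i ∈ Finset.range (m+1), Yrf (AbarPi b k a tstar) i)))) = 0 := by
      rw [Finset.sum_neg_distrib, hsle, neg_zero]
    have := (Finset.sum_eq_zero_iff_of_nonneg hneg).mp hsneg m hm
    linarith
  -- the two tightness consequences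
  have hUt : ∀ m ∈ Finset.range (k-1), 0 < up m - up (m+1) →
      (∑ i ∈ Finset.range (m+1), Yf x i) = Ud b k a (m+1) := by
    intro m hm hd
    have hz := hzero m hm
    have hA := hAle m hm
    have hB := hBge m hm
    have hA0 : (up m - up (m+1)) * ((∑ i ∈ Finset.range (m+1), Yf x i)
        - ∑ i ∈ Finset.range (m+1), Yf (AbarPi b k a tstar) i) = 0 := by linarith
    have hfac := mul_eq_zero.mp hA0
    rcases hfac with h1 | h2
    · exfalso; linarith
    · rw [Finset.mem_range] at hm
      have hupm : 0 < up m := lt_of_lt_of_le hd (by linarith [hupnn (m+1)])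
      have huum : 0 < uu m := by
        rcases max_cases (uu m) 0 with ⟨h1, _⟩ | ⟨h1, _⟩
        · rw [hup] at hupm; simp only at hupm; rw [h1] at hupm; exact hupm
        · exfalso; rw [hup] at hupm; simp only at hupm; rw [h1] at hupm; exact lt_irrefl _ hupm
      rw [← hSPv m hm huum]
      linarith
  have hLt : ∀ m ∈ Finset.range (k-1), 0 < um' m - um' (m+1) →
      (∑ i ∈ Finset.range (m+1), Yrf x i) = Ld b k a (m+1) := by
    intro m hm hd
    have hz := hzero m hm
    have hA := hAle m hm
    have hB := hBge m hm
    have hB0 : (um' m - um' (m+1)) * ((∑ i ∈ Finset.range (m+1), Yrf x i)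
        - ∑ i ∈ Finset.range (m+1), Yrf (AbarPi b k a tstar) i) = 0 := by linarith
    rcases mul_eq_zero.mp hB0 with h1 | h2
    · exfalso; linarith
    · rw [Finset.mem_range] at hm
      have humm : 0 < um' m := lt_of_lt_of_le hd (by linarith [hum'nn (m+1)])
      have huum : uu (k-1-1-m) < 0 := by
        rw [hum'] at humm; simp only at humm
        rw [if_pos hm, hum] at humm; simp only at humm
        rcases max_cases (-(uu (k-1-1-m))) 0 with ⟨h1, _⟩ | ⟨h1, _⟩
        · rw [h1] at humm; linarith
        · exfalso; rw [h1] at humm; exact lt_irrefl _ humm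
      rw [← hSRv m hm huum]
      linarith
  -- find a nonzero coefficient
  obtain ⟨j0, hj0⟩ := Function.ne_iff.mp ht
  have hj0' : t j0 ≠ 0 := by simpa using hj0
  set i0 : ℕ := ((σ.symm j0 : ℕ)) with hi0
  have hi0lt : i0 < k-1 := (σ.symm j0).isLt
  have hti0 : uu i0 = t j0 := htsval j0
  rcases lt_or_gt_of_ne hj0' with hneg | hpos
  · -- t j0 < 0 : lower tightness
    have humi0 : 0 < um i0 := by
      rw [hum]; simp only
      rw [hti0]
      rw [max_eq_left (by linarith)]
      linarith
    set r0 : ℕ := k-1-1-i0 with hr0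
    have hr0lt : r0 < k-1 := by omega
    have hum'r0 : um' r0 = um i0 := by
      rw [hum']; simp only
      rw [if_pos hr0lt]
      congr 1
      omega
    have htel := tele um' r0 (k-1) (by omega)
    rw [hum'kn, hum'r0, sub_zero] at htel
    have hsumpos : (∑ m ∈ Finset.Ico r0 (k-1), (um' m - um' (m+1))) ≠ 0 := by
      rw [htel]; linarith
    obtain ⟨m, hmIco, hmne⟩ := Finset.exists_ne_zero_of_sum_ne_zero hsumpos
    rw [Finset.mem_Ico] at hmIco
    have hmlt : m < k-1 := hmIco.2
    have hd : 0 < um' m - um' (m+1) :=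
      lt_of_le_of_ne (sub_nonneg.mpr (hum'anti m (m+1) (by omega))) (Ne.symm hmne)
    have htight := hLt m (Finset.mem_range.mpr hmlt) hd
    rw [hSRconv x m hmlt] at htight
    exact ⟨m+1, by omega, by omega, _, hsBotInj m hmlt, Or.inl htight⟩
  · -- 0 < t j0 : upper tightness
    have hupi0 : 0 < up i0 := by
      rw [hup]; simp only
      rw [hti0]
      rw [max_eq_left (by linarith)]
      linarith
    have htel := tele up i0 (k-1) (by omega)
    rw [hupkn, sub_zero] at htel
    have hsumpos : (∑ m ∈ Finset.Ico i0 (k-1), (up m - up (m+1))) ≠ 0 := by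
      rw [htel]; linarith
    obtain ⟨m, hmIco, hmne⟩ := Finset.exists_ne_zero_of_sum_ne_zero hsumpos
    rw [Finset.mem_Ico] at hmIco
    have hmlt : m < k-1 := hmIco.2
    have hd : 0 < up m - up (m+1) :=
      lt_of_le_of_ne (sub_nonneg.mpr (hupanti m (m+1) (by omega))) (Ne.symm hmne)
    have htight := hUt m (Finset.mem_range.mpr hmlt) hd
    rw [hSPconv x m hmlt] at htight
    exact ⟨m+1, by omega, by omega, _, hsTopInj m hmlt, Or.inr htight⟩

lemma polyP_isClosed {b k : ℕ} (a : Fin b → Fin k → ℝ) : IsClosed (PolyP b k a) := by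
  have hfin : Set.Finite {x : Fin (k-1) → ℝ | ∃ π ∈ Pis k, AbarPi b k a π = x} := by
    have heq : {x : Fin (k-1) → ℝ | ∃ π ∈ Pis k, AbarPi b k a π = x}
        = (fun π => AbarPi b k a π) '' ↑(Pis k) := rfl
    rw [heq]
    exact ((Pis k).finite_toSet).image _
  exact hfin.isClosed_convexHull (𝕜 := ℝ)

/-- the boundary of 𝒫 consists exactly of those x ∈ 𝒫 for which there exist
l ∈ {1,…,k−1} and distinct indices s_1,…,s_l ∈ {1,…,k−1} with
Σ_{j=1}^{l} x_{s_j} = Σ_{j=1}^{l} Ā_j or Σ_{j=1}^{l} x_{s_j} = Σ_{j=1}^{l} Ā_{k−j+1}. -/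
theorem stmt_7 (b k : ℕ) (hb : 1 ≤ b) (hk : 2 ≤ k) (a : Fin b → Fin k → ℝ)
    (ha : ∀ i : Fin b, StrictMono (a i)) :
    frontier (PolyP b k a) =
      {x | x ∈ PolyP b k a ∧ ∃ l : ℕ, 1 ≤ l ∧ l ≤ k - 1 ∧
        ∃ s : Fin l → Fin (k - 1), Function.Injective s ∧
          ((∑ m : Fin l, x (s m)) =
              (∑ j ∈ Finset.univ.filter (fun j : Fin k => (j : ℕ) < l), Abar b k a j) ∨
           (∑ m : Fin l, x (s m)) =
              ∑ j ∈ Finset.univ.filter (fun j : Fin k => k - l ≤ (j : ℕ)), Abar b k a j)} := by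
  have hclosed := polyP_isClosed a
  have hconv : Convex ℝ (PolyP b k a) := convex_convexHull ℝ _
  have hne : (PolyP b k a).Nonempty :=
    ⟨_, vertex_mem a (fun j => ⟨(j:ℕ), by have := j.isLt; omega⟩)
      (fun u v h => Fin.ext (by simpa using congrArg Fin.val h))⟩
  ext x
  simp only [Set.mem_setOf_eq]
  constructor
  · intro hx
    have hxP : x ∈ PolyP b k a := by
      have h1 : x ∈ closure (PolyP b k a) := frontier_subset_closure hx
      rwa [hclosed.closure_eq] at h1
    have hxi : x ∉ interior (PolyP b k a) := hx.2
    obtain ⟨F, hF0, hFsup⟩ := exists_support hconv hclosed hne hxi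
    set t : Fin (k-1) → ℝ := fun j => F (fun i => if j = i then (1:ℝ) else 0) with htdef
    have hrep : ∀ y : Fin (k-1) → ℝ, F y = ∑ j : Fin (k-1), t j * y j := by
      intro y
      conv_lhs => rw [pi_eq_sum_univ y]
      rw [map_sum]
      apply Finset.sum_congr rfl
      intro j _
      rw [map_smul, smul_eq_mul, htdef]
      simp only
      ring
    have ht0 : t ≠ 0 := by
      intro h
      apply hF0
      apply ContinuousLinearMap.ext
      intro y
      rw [hrep y, h]
      simp
    have hmax : ∀ p ∈ PolyP b k a,
        (∑ j : Fin (k-1), t j * p j) ≤ ∑ j : Fin (k-1), t j * x j := by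
      intro p hp
      rw [← hrep p, ← hrep x]
      exact hFsup p hp
    obtain ⟨l, hl1, hl2, s, hs, hcase⟩ := tight_of_max a hb hk ha hxP t ht0 hmax
    exact ⟨hxP, l, hl1, hl2, s, hs, hcase⟩
  · rintro ⟨hxP, l, hl1, hl2, s, hs, hcase⟩
    rw [frontier, Set.mem_diff]
    refine ⟨by rw [hclosed.closure_eq]; exact hxP, ?_⟩
    exact not_mem_interior a hb hk ha hl1 hl2 s hs hcase
end

section
/- The function κ is strictly convex on ℝ^{k−1}; indeed, for every t ∈ ℝ^{k−1} the Hessian matrix κ″(t) is positive definite (equivalently, −κ″(t) is negative definite), so that for each x ∈ ℝ^{k−1} the function t ↦ tᵀx − κ(t) is strictly concave. -/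
open Finset

/-! ### Auxiliary lemmas -/

private lemma Pis_nonempty {k : ℕ} (hk : 2 ≤ k) : (Pis k).Nonempty :=
  ⟨Fin.castLE (Nat.sub_le k 1), Finset.mem_filter.2 ⟨Finset.mem_univ _, Fin.castLE_injective _⟩⟩

private lemma hasDerivAt_expsum {A : Type*} (S : Finset A) (α β γ : A → ℝ) (u : ℝ) :
    HasDerivAt (fun u : ℝ => ∑ π ∈ S, γ π * Real.exp (α π + u * β π))
      (∑ π ∈ S, γ π * β π * Real.exp (α π + u * β π)) u := by
  apply HasDerivAt.fun_sum
  intro π _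
  have h1 : HasDerivAt (fun u : ℝ => α π + u * β π) (β π) u := by
    simpa using ((hasDerivAt_id u).mul_const (β π)).const_add (α π)
  have h2 := h1.exp.const_mul (γ π)
  refine h2.congr_deriv ?_
  ring

private lemma variance_pos {A : Type*} (S : Finset A) (w β : A → ℝ)
    (hw : ∀ π ∈ S, 0 < w π)
    (hne : ∃ π ∈ S, ∃ σ ∈ S, β π ≠ β σ) :
    (∑ π ∈ S, β π * w π) ^ 2 < (∑ π ∈ S, β π ^ 2 * w π) * (∑ π ∈ S, w π) := by
  have key : ∑ p ∈ S ×ˢ S, (w p.1 * w p.2 * (β p.1 - β p.2) ^ 2)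
      = 2 * ((∑ π ∈ S, β π ^ 2 * w π) * (∑ π ∈ S, w π) - (∑ π ∈ S, β π * w π) ^ 2) := by
    rw [Finset.sum_product]
    calc ∑ π ∈ S, ∑ σ ∈ S, w π * w σ * (β π - β σ) ^ 2
        = ∑ π ∈ S, ∑ σ ∈ S, ((β π ^ 2 * w π) * w σ + w π * (β σ ^ 2 * w σ)
            - 2 * ((β π * w π) * (β σ * w σ))) :=
          Finset.sum_congr rfl fun π _ => Finset.sum_congr rfl fun σ _ => by ring
      _ = (∑ π ∈ S, ∑ σ ∈ S, (β π ^ 2 * w π) * w σ)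
            + (∑ π ∈ S, ∑ σ ∈ S, w π * (β σ ^ 2 * w σ))
            - 2 * (∑ π ∈ S, ∑ σ ∈ S, (β π * w π) * (β σ * w σ)) := by
          simp [Finset.sum_add_distrib, Finset.sum_sub_distrib, Finset.mul_sum]
      _ = (∑ π ∈ S, β π ^ 2 * w π) * (∑ π ∈ S, w π)
            + (∑ π ∈ S, w π) * (∑ π ∈ S, β π ^ 2 * w π)
            - 2 * ((∑ π ∈ S, β π * w π) * (∑ π ∈ S, β π * w π)) := by
          rw [← Finset.sum_mul_sum, ← Finset.sum_mul_sum, ← Finset.sum_mul_sum]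
      _ = 2 * ((∑ π ∈ S, β π ^ 2 * w π) * (∑ π ∈ S, w π) - (∑ π ∈ S, β π * w π) ^ 2) := by
          ring
  have hpos : 0 < ∑ p ∈ S ×ˢ S, (w p.1 * w p.2 * (β p.1 - β p.2) ^ 2) := by
    obtain ⟨π, hπ, σ, hσ, hβ⟩ := hne
    refine Finset.sum_pos' (fun p hp => ?_) ⟨(π, σ), Finset.mem_product.2 ⟨hπ, hσ⟩, ?_⟩
    · have h1 := hw p.1 (Finset.mem_product.1 hp).1
      have h2 := hw p.2 (Finset.mem_product.1 hp).2
      positivity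
    · have h1 := hw π hπ
      have h2 := hw σ hσ
      have h3 : β π - β σ ≠ 0 := sub_ne_zero.mpr hβ
      positivity
  rw [key] at hpos
  linarith

private lemma exists_beta_ne {k : ℕ} (hk : 2 ≤ k) (c : Fin k → ℝ) (hc : StrictMono c)
    (v : Fin (k - 1) → ℝ) (hv : v ≠ 0) :
    ∃ π ∈ Pis k, ∃ σ ∈ Pis k,
      (∑ j : Fin (k - 1), v j * c (π j)) ≠ ∑ j : Fin (k - 1), v j * c (σ j) := by
  obtain ⟨j0, hj0⟩ : ∃ j, v j ≠ 0 := Function.ne_iff.mp hv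
  have hkk : k - 1 ≤ k := Nat.sub_le k 1
  set π : Fin (k - 1) → Fin k := Fin.castLE hkk with hπdef
  have hπinj : Function.Injective π := Fin.castLE_injective hkk
  have hm : k - 1 < k := by omega
  set m : Fin k := ⟨k - 1, hm⟩ with hmdef
  have hπm : ∀ j, π j ≠ m := by
    intro j h
    have h1 : (j : ℕ) = k - 1 := congrArg Fin.val h
    have := j.isLt
    omega
  set σ : Fin (k - 1) → Fin k := Function.update π j0 m with hσdef
  have hσinj : Function.Injective σ := by
    intro x y hxy
    rcases eq_or_ne x j0 with hx | hx <;> rcases eq_or_ne y j0 with hy | hy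
    · rw [hx, hy]
    · rw [hσdef, hx, Function.update_self, Function.update_of_ne hy] at hxy
      exact absurd hxy.symm (hπm y)
    · rw [hσdef, hy, Function.update_self, Function.update_of_ne hx] at hxy
      exact absurd hxy (hπm x)
    · rw [hσdef, Function.update_of_ne hx, Function.update_of_ne hy] at hxy
      exact hπinj hxy
  refine ⟨π, Finset.mem_filter.2 ⟨Finset.mem_univ _, hπinj⟩,
    σ, Finset.mem_filter.2 ⟨Finset.mem_univ _, hσinj⟩, ?_⟩
  have h1 : ∑ j : Fin (k - 1), v j * c (π j)
      = v j0 * c (π j0) + ∑ j ∈ Finset.univ.erase j0, v j * c (π j) :=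
    (Finset.add_sum_erase _ _ (Finset.mem_univ j0)).symm
  have h2 : ∑ j : Fin (k - 1), v j * c (σ j)
      = v j0 * c m + ∑ j ∈ Finset.univ.erase j0, v j * c (π j) := by
    rw [← Finset.add_sum_erase _ _ (Finset.mem_univ j0)]
    congr 1
    · rw [hσdef, Function.update_self]
    · exact Finset.sum_congr rfl fun j hj =>
        by rw [hσdef, Function.update_of_ne (Finset.ne_of_mem_erase hj)]
  rw [h1, h2]
  intro h
  have h3 : v j0 * c (π j0) = v j0 * c m := by linarith
  exact hπm j0 (hc.injective (mul_left_cancel₀ hj0 h3))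

private lemma inner_pos {k : ℕ} (hk : 2 ≤ k) (f : (Fin (k - 1) → Fin k) → ℝ) :
    0 < (k.factorial : ℝ)⁻¹ * ∑ π ∈ Pis k, Real.exp (f π) := by
  apply mul_pos
  · have := Nat.factorial_pos k
    positivity
  · exact Finset.sum_pos (fun π _ => Real.exp_pos _) (Pis_nonempty hk)

private lemma contDiff_kappa (b k : ℕ) (hk : 2 ≤ k) (a : Fin b → Fin k → ℝ) :
    ContDiff ℝ 2 (kappa b k a) := by
  unfold kappa
  apply ContDiff.mul contDiff_const
  apply ContDiff.sum
  intro i _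
  apply ContDiff.log
  · apply ContDiff.mul contDiff_const
    apply ContDiff.sum
    intro π _
    apply Real.contDiff_exp.comp
    apply ContDiff.sum
    intro j _
    exact (ContinuousLinearMap.proj j :
      (Fin (k - 1) → ℝ) →L[ℝ] ℝ).contDiff.mul contDiff_const
  · intro t
    exact (inner_pos hk _).ne'

private lemma iteratedFDeriv_two_line {E : Type*} [NormedAddCommGroup E] [NormedSpace ℝ E]
    (f : E → ℝ) (hf : ContDiff ℝ 2 f) (t v : E) :
    iteratedFDeriv ℝ 2 f t ![v, v] = deriv (deriv (fun u : ℝ => f (t + u • v))) 0 := by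
  have hline : ∀ u : ℝ, HasDerivAt (fun s : ℝ => t + s • v) v u := fun u => by
    simpa using ((hasDerivAt_id u).smul_const v).const_add t
  have h1 : ∀ u : ℝ, HasDerivAt (fun s : ℝ => f (t + s • v)) (fderiv ℝ f (t + u • v) v) u :=
    fun u => ((hf.differentiable two_ne_zero _).hasFDerivAt).comp_hasDerivAt u (hline u)
  have hd : deriv (fun s : ℝ => f (t + s • v)) = fun u : ℝ => fderiv ℝ f (t + u • v) v :=
    funext fun u => (h1 u).deriv
  rw [hd]
  have hf' : ContDiff ℝ 1 (fderiv ℝ f) := hf.fderiv_right (by norm_num)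
  have hF : HasFDerivAt (fderiv ℝ f) (fderiv ℝ (fderiv ℝ f) t) t :=
    (hf'.differentiable one_ne_zero t).hasFDerivAt
  have h2 : HasDerivAt (fun u : ℝ => fderiv ℝ f (t + u • v)) (fderiv ℝ (fderiv ℝ f) t v) 0 := by
    have h2' : HasFDerivAt (fderiv ℝ f) (fderiv ℝ (fderiv ℝ f) t) (t + (0 : ℝ) • v) := by
      simpa using hF
    exact h2'.comp_hasDerivAt 0 (hline 0)
  have h3 : HasDerivAt (fun u : ℝ => fderiv ℝ f (t + u • v) v)
      (fderiv ℝ (fderiv ℝ f) t v v) 0 := by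
    have := h2.clm_apply (hasDerivAt_const (0 : ℝ) v)
    simpa using this
  rw [h3.deriv, iteratedFDeriv_two_apply]
  simp

private lemma kappa_line_deriv2 (b k : ℕ) (hb : 1 ≤ b) (hk : 2 ≤ k)
    (a : Fin b → Fin k → ℝ) (ha : ∀ i, StrictMono (a i))
    (t v : Fin (k - 1) → ℝ) (hv : v ≠ 0) (u : ℝ) :
    0 < deriv (deriv (fun s : ℝ => kappa b k a (t + s • v))) u := by
  classical
  set α : Fin b → (Fin (k - 1) → Fin k) → ℝ := fun i π => ∑ j, t j * a i (π j) with hα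
  set β : Fin b → (Fin (k - 1) → Fin k) → ℝ := fun i π => ∑ j, v j * a i (π j) with hβ
  set N0 : Fin b → ℝ → ℝ :=
    fun i u => ∑ π ∈ Pis k, Real.exp (α i π + u * β i π) with hN0
  set N1 : Fin b → ℝ → ℝ :=
    fun i u => ∑ π ∈ Pis k, β i π * Real.exp (α i π + u * β i π) with hN1
  set N2 : Fin b → ℝ → ℝ :=
    fun i u => ∑ π ∈ Pis k, β i π ^ 2 * Real.exp (α i π + u * β i π) with hN2
  have hexp : ∀ (s : ℝ) (i : Fin b) (π : Fin (k - 1) → Fin k),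
      (∑ j : Fin (k - 1), (t + s • v) j * a i (π j)) = α i π + s * β i π := by
    intro s i π
    simp only [hα, hβ, Pi.add_apply, Pi.smul_apply, smul_eq_mul, Finset.mul_sum,
      ← Finset.sum_add_distrib]
    exact Finset.sum_congr rfl fun j _ => by ring
  have hg : (fun s : ℝ => kappa b k a (t + s • v))
      = fun s => (b : ℝ)⁻¹ * ∑ i : Fin b, Real.log ((k.factorial : ℝ)⁻¹ * N0 i s) := by
    funext s
    unfold kappa
    simp only [hexp, hN0]
  have hN0pos : ∀ i (u : ℝ), 0 < N0 i u :=
    fun i u => Finset.sum_pos (fun _ _ => Real.exp_pos _) (Pis_nonempty hk)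
  have hD0 : ∀ i (u : ℝ), HasDerivAt (N0 i) (N1 i u) u := by
    intro i u
    have := hasDerivAt_expsum (Pis k) (α i) (β i) (fun _ => 1) u
    simpa [hN0, hN1] using this
  have hD1 : ∀ i (u : ℝ), HasDerivAt (N1 i) (N2 i u) u := by
    intro i u
    have := hasDerivAt_expsum (Pis k) (α i) (β i) (β i) u
    simpa [hN1, hN2, pow_two] using this
  have hfacne : ((k.factorial : ℝ)⁻¹) ≠ 0 :=
    inv_ne_zero (Nat.cast_ne_zero.2 (Nat.factorial_pos k).ne')
  have hfacpos : (0 : ℝ) < (k.factorial : ℝ)⁻¹ := by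
    have := Nat.factorial_pos k
    positivity
  have hgderiv : ∀ u : ℝ, HasDerivAt (fun s : ℝ => kappa b k a (t + s • v))
      ((b : ℝ)⁻¹ * ∑ i : Fin b, N1 i u / N0 i u) u := by
    intro u
    rw [hg]
    apply HasDerivAt.const_mul
    apply HasDerivAt.fun_sum
    intro i _
    have hlog := (((hD0 i u).const_mul ((k.factorial : ℝ)⁻¹)).log
      (mul_pos hfacpos (hN0pos i u)).ne')
    refine hlog.congr_deriv ?_
    rw [mul_div_mul_left _ _ hfacne]
  have hd1 : deriv (fun s : ℝ => kappa b k a (t + s • v))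
      = fun u : ℝ => (b : ℝ)⁻¹ * ∑ i : Fin b, N1 i u / N0 i u :=
    funext fun u => (hgderiv u).deriv
  rw [hd1]
  have hG1deriv : HasDerivAt (fun u : ℝ => (b : ℝ)⁻¹ * ∑ i : Fin b, N1 i u / N0 i u)
      ((b : ℝ)⁻¹ * ∑ i : Fin b,
        (N2 i u * N0 i u - N1 i u ^ 2) / (N0 i u) ^ 2) u := by
    apply HasDerivAt.const_mul
    apply HasDerivAt.fun_sum
    intro i _
    have := (hD1 i u).div (hD0 i u) (hN0pos i u).ne'
    refine this.congr_deriv ?_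
    ring
  rw [hG1deriv.deriv]
  haveI : Nonempty (Fin b) := ⟨⟨0, by omega⟩⟩
  apply mul_pos
  · have h0b : (0 : ℝ) < (b : ℝ) := by exact_mod_cast hb
    positivity
  · apply Finset.sum_pos _ Finset.univ_nonempty
    intro i _
    apply div_pos _ (pow_pos (hN0pos i u) 2)
    have hvar := variance_pos (Pis k) (fun π => Real.exp (α i π + u * β i π)) (β i)
      (fun π _ => Real.exp_pos _) (exists_beta_ne hk (a i) (ha i) v hv)
    simp only [hN0, hN1, hN2] at *
    linarith

/-- κ is strictly convex on ℝ^{k−1}, its Hessian at every point is positive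
definite (the second-derivative quadratic form is positive on nonzero vectors, i.e. −κ″ is
negative definite), and for each x the map t ↦ tᵀx − κ(t) is strictly concave. -/
theorem stmt_9 (b k : ℕ) (hb : 1 ≤ b) (hk : 2 ≤ k) (a : Fin b → Fin k → ℝ)
    (ha : ∀ i : Fin b, StrictMono (a i)) :
    StrictConvexOn ℝ Set.univ (kappa b k a) ∧
    (∀ t v : Fin (k - 1) → ℝ, v ≠ 0 →
      0 < iteratedFDeriv ℝ 2 (kappa b k a) t ![v, v]) ∧
    (∀ x : Fin (k - 1) → ℝ,
      StrictConcaveOn ℝ Set.univ (fun t : Fin (k - 1) → ℝ =>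
        (∑ j : Fin (k - 1), t j * x j) - kappa b k a t)) := by
  have hκC2 : ContDiff ℝ 2 (kappa b k a) := contDiff_kappa b k hk a
  have hsc : StrictConvexOn ℝ Set.univ (kappa b k a) := by
    refine ⟨convex_univ, fun x _ y _ hxy p q hp hq hpq => ?_⟩
    have hv : y - x ≠ 0 := sub_ne_zero.mpr (Ne.symm hxy)
    have hgsc : StrictConvexOn ℝ Set.univ (fun s : ℝ => kappa b k a (x + s • (y - x))) := by
      apply strictConvexOn_of_deriv2_pos convex_univ
      · apply Continuous.continuousOn
        apply hκC2.continuous.comp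
        continuity
      · intro u _
        exact kappa_line_deriv2 b k hb hk a ha x (y - x) hv u
    have h2 := hgsc.2 (Set.mem_univ (0 : ℝ)) (Set.mem_univ (1 : ℝ)) (by norm_num) hp hq hpq
    simp only [smul_eq_mul, mul_zero, mul_one, zero_add, zero_smul, add_zero, one_smul] at h2
    have e2 : x + (y - x) = y := by abel
    rw [e2] at h2
    have e3 : x + q • (y - x) = p • x + q • y := by
      funext j
      have hp' : p = 1 - q := by linarith
      simp only [Pi.add_apply, Pi.smul_apply, Pi.sub_apply, smul_eq_mul, hp']
      ring
    rw [e3] at h2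
    simpa [smul_eq_mul] using h2
  refine ⟨hsc, ?_, ?_⟩
  · intro t v hv
    rw [iteratedFDeriv_two_line _ hκC2 t v]
    exact kappa_line_deriv2 b k hb hk a ha t v hv 0
  · intro x
    have hlin : ConvexOn ℝ Set.univ
        (fun t : Fin (k - 1) → ℝ => -∑ j : Fin (k - 1), t j * x j) := by
      refine ⟨convex_univ, fun u _ w _ p q hp hq hpq => le_of_eq ?_⟩
      simp only [Pi.add_apply, Pi.smul_apply, smul_eq_mul]
      have hsum : ∑ j : Fin (k - 1), (p * u j + q * w j) * x j
          = p * ∑ j : Fin (k - 1), u j * x j + q * ∑ j : Fin (k - 1), w j * x j := by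
        rw [Finset.mul_sum, Finset.mul_sum, ← Finset.sum_add_distrib]
        exact Finset.sum_congr rfl fun j _ => by ring
      rw [hsum]
      ring
    have h1 := (hsc.add_convexOn hlin).neg
    have e4 : (fun t : Fin (k - 1) → ℝ => (∑ j : Fin (k - 1), t j * x j) - kappa b k a t)
        = -(kappa b k a + fun t : Fin (k - 1) → ℝ => -∑ j : Fin (k - 1), t j * x j) := by
      funext t
      simp only [Pi.neg_apply, Pi.add_apply]
      ring
    rw [e4]
    exact h1
end

section
/- For every x on the topological boundary of Ω, Λ(x) ≥ log k. Consequently, for any c with 0 ≤ c < log k, the level set { x ∈ ℝ^{k−1} : Λ(x) ≤ c } intersected with the closure of Ω is contained in Ω. -/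
open Finset

namespace Stmt10Aux

open Finset

lemma mem_Pis_iff {k : ℕ} {π : Fin (k-1) → Fin k} : π ∈ Pis k ↔ Function.Injective π := by
  simp [Pis]

lemma card_Pis {k : ℕ} (hk : 1 ≤ k) : (Pis k).card = k.factorial := by
  have h1 : (Pis k).card = Fintype.card {f : Fin (k-1) → Fin k // Function.Injective f} := by
    rw [Fintype.card_subtype]; rfl
  rw [h1, Fintype.card_congr (Equiv.subtypeInjectiveEquivEmbedding _ _),
    Fintype.card_embedding_eq]
  simp only [Fintype.card_fin]
  have h2 : k - (k-1) = 1 := by omega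
  have h3 : (k-1) + 1 = k := by omega
  calc k.descFactorial (k-1) = (k - (k-1)) * k.descFactorial (k-1) := by rw [h2, one_mul]
    _ = k.descFactorial ((k-1)+1) := (Nat.descFactorial_succ _ _).symm
    _ = k.factorial := by rw [h3, Nat.descFactorial_self]

lemma Pis_nonempty {k : ℕ} (hk : 1 ≤ k) : (Pis k).Nonempty := by
  rw [← Finset.card_pos, card_Pis hk]; exact k.factorial_pos

lemma k_le_choose : ∀ (k m : ℕ), 1 ≤ m → m < k → k ≤ k.choose m := by
  intro k
  induction k with
  | zero => omega
  | succ n ih =>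
    intro m h1 h2
    rcases eq_or_lt_of_le (Nat.lt_succ_iff.mp h2) with h | h
    · subst h; rw [Nat.choose_succ_self_right]
    · obtain ⟨m', rfl⟩ : ∃ m', m = m' + 1 := ⟨m-1, by omega⟩
      rw [Nat.choose_succ_succ]
      have hA := ih (m'+1) h1 h
      have hpos : 0 < n.choose m' := Nat.choose_pos (by omega)
      simp only [Nat.succ_eq_add_one] at *
      omega

lemma factorial_mul_factorial_le {k m : ℕ} (h1 : 1 ≤ m) (h2 : m < k) :
    m.factorial * (k - m).factorial ≤ (k-1).factorial := by
  have hc := k_le_choose k m h1 h2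
  have he : k.choose m * (m.factorial * (k-m).factorial) = k.factorial := by
    rw [← mul_assoc]; exact Nat.choose_mul_factorial_mul_factorial h2.le
  have hkf : k.factorial = k * (k-1).factorial := by
    conv_lhs => rw [show k = (k-1)+1 by omega]
    rw [Nat.factorial_succ]
    congr 1
    omega
  have h4 : k * (m.factorial * (k-m).factorial) ≤ k * (k-1).factorial := by
    calc k * (m.factorial * (k-m).factorial)
        ≤ k.choose m * (m.factorial * (k-m).factorial) :=
          Nat.mul_le_mul_right _ hc
      _ = k * (k-1).factorial := by rw [he, hkf]
  exact Nat.le_of_mul_le_mul_left h4 (by omega)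

end Stmt10Aux

namespace Stmt10Aux
open Finset

section Count

variable {k : ℕ}

/-- Number of injections achieving the maximal value of a nondegenerate linear assignment
objective is at most (k-1)!. -/
lemma count_max (hk : 2 ≤ k) (u : Fin (k-1) → ℝ) (hu : u ≠ 0) (c : Fin k → ℝ)
    (hc : StrictMono c) (M : ℝ) (hM : ∀ π ∈ Pis k, (∑ j, u j * c (π j)) ≤ M) :
    ((Pis k).filter (fun π => (∑ j, u j * c (π j)) = M)).card ≤ (k-1).factorial := by
  classical
  have hcardι : Fintype.card (Option (Fin (k-1))) = k := by simp; omega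
  set w : Option (Fin (k-1)) → ℝ := fun o => o.elim 0 u with hw
  set G : (Option (Fin (k-1)) ≃ Fin k) → ℝ := fun e => ∑ o : Option (Fin (k-1)), w o * c (e o) with hG
  -- G of any equiv equals the objective of its restriction, which lies in Pis
  have hGrestrict : ∀ e : Option (Fin (k-1)) ≃ Fin k, G e = ∑ j, u j * c (e (some j)) := by
    intro e
    rw [hG]
    simp only [Fintype.sum_option]
    simp [hw]
  have hrestrict_mem : ∀ e : Option (Fin (k-1)) ≃ Fin k, (fun j => e (some j)) ∈ Pis k := by
    intro e
    rw [mem_Pis_iff]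
    intro j j' h
    exact Option.some_injective _ (e.injective h)
  have hGle : ∀ e : Option (Fin (k-1)) ≃ Fin k, G e ≤ M := by
    intro e
    rw [hGrestrict]
    exact hM _ (hrestrict_mem e)
  -- sortedness of maximizers
  have hsorted : ∀ e : Option (Fin (k-1)) ≃ Fin k, G e = M → ∀ o o' : Option (Fin (k-1)), w o < w o' → e o < e o' := by
    intro e he o o' hlt
    by_contra hcon
    have hne : o ≠ o' := fun h => by rw [h] at hlt; exact lt_irrefl _ hlt
    have hlt' : e o' < e o := by
      rcases lt_trichotomy (e o) (e o') with h | h | h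
      · exact absurd h hcon
      · exact absurd (e.injective h) hne
      · exact h
    set e' : Option (Fin (k-1)) ≃ Fin k := (Equiv.swap o o').trans e with he'
    have hswap : G e' = G e + (w o' - w o) * (c (e o) - c (e o')) := by
      have h1 : G e' = ∑ z : Option (Fin (k-1)), w (Equiv.swap o o' z) * c (e z) := by
        rw [hG]
        have := Equiv.sum_comp (Equiv.swap o o')
          (fun z => w (Equiv.swap o o' z) * c (e z))
        rw [← this]
        apply Finset.sum_congr rfl
        intro z _
        simp [Equiv.swap_apply_self, he']
      have h2 : G e' - G e = ∑ z : Option (Fin (k-1)), (w (Equiv.swap o o' z) - w z) * c (e z) := by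
        rw [h1, hG, ← Finset.sum_sub_distrib]
        apply Finset.sum_congr rfl
        intro z _; ring
      have h3 : ∑ z : Option (Fin (k-1)), (w (Equiv.swap o o' z) - w z) * c (e z)
          = ∑ z ∈ ({o, o'} : Finset (Option (Fin (k-1)))), (w (Equiv.swap o o' z) - w z) * c (e z) := by
        symm
        apply Finset.sum_subset (Finset.subset_univ _)
        intro z _ hz
        simp only [Finset.mem_insert, Finset.mem_singleton] at hz
        push_neg at hz
        rw [Equiv.swap_apply_of_ne_of_ne hz.1 hz.2]
        ring
      rw [Finset.sum_pair hne] at h3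
      rw [Equiv.swap_apply_left, Equiv.swap_apply_right] at h3
      have : G e' - G e = (w o' - w o) * (c (e o) - c (e o')) := by
        rw [h2, h3]; ring
      linarith
    have hpos : 0 < (w o' - w o) * (c (e o) - c (e o')) :=
      mul_pos (by linarith) (by have := hc hlt'; linarith)
    have : M < G e' := by rw [hswap, he]; linarith
    exact absurd (hGle e') (not_le.mpr this)
  -- count sorted equivs
  obtain ⟨istar, -, histar⟩ := Finset.exists_max_image (univ : Finset (Option (Fin (k-1)))) w ⟨none, mem_univ _⟩
  set W := w istar with hW
  have hWmax : ∀ o : Option (Fin (k-1)), w o ≤ W := fun o => histar o (mem_univ o)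
  obtain ⟨j0, hj0⟩ := Function.ne_iff.mp hu
  have hexlt : ∃ i1 : Option (Fin (k-1)), w i1 < W := by
    rcases lt_or_ge 0 W with h0 | h0
    · exact ⟨none, by simpa [hw] using h0⟩
    · have hW0 : W = 0 := le_antisymm h0 (by simpa [hw] using hWmax none)
      refine ⟨some j0, ?_⟩
      have h1 : w (some j0) ≤ W := hWmax _
      have h2 : w (some j0) ≠ 0 := by simpa [hw] using hj0
      rw [hW0]; rcases lt_or_eq_of_le (hW0 ▸ h1) with h | h
      · exact h
      · exact absurd h h2
  obtain ⟨i1, hi1⟩ := hexlt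
  set C : Finset (Option (Fin (k-1))) := univ.filter (fun o => w o = W) with hC
  set m := C.card with hm
  have histarC : istar ∈ C := by simp [hC, hW]
  have hi1C : i1 ∉ C := by simp [hC]; exact ne_of_lt hi1
  have hm1 : 1 ≤ m := Finset.card_pos.mpr ⟨istar, histarC⟩
  have hmk : m < k := by
    have : C ⊂ univ := Finset.ssubset_univ_iff.mpr
      (fun h => hi1C (h ▸ mem_univ i1))
    have := Finset.card_lt_card this
    rwa [Finset.card_univ, hcardι] at this
  -- target sets
  set T : Finset (Fin k) := Finset.Ici (⟨k - m, by omega⟩ : Fin k) with hT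
  have hcardT : T.card = m := by
    rw [hT, Fin.card_Ici]; simp; omega
  have hmemT : ∀ t : Fin k, t ∈ T ↔ k - m ≤ (t : ℕ) := by
    intro t
    rw [hT, Finset.mem_Ici, Fin.le_def]
  -- sorted e maps C into T
  have hCimg : ∀ e : Option (Fin (k-1)) ≃ Fin k, (∀ o o' : Option (Fin (k-1)), w o < w o' → e o < e o') →
      ∀ i ∈ C, e i ∈ T := by
    intro e hsrt i hiC
    have hiW : w i = W := by simpa [hC] using hiC
    have himg : (univ \ C).image e ⊆ Finset.Iio (e i) := by
      intro t ht
      obtain ⟨i', hi', rfl⟩ := Finset.mem_image.mp ht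
      rw [Finset.mem_sdiff] at hi'
      have hwi' : w i' < W := by
        rcases lt_or_eq_of_le (hWmax i') with h | h
        · exact h
        · exact absurd (by simp [hC, h]) hi'.2
      rw [Finset.mem_Iio]
      exact hsrt i' i (by rw [hiW]; exact hwi')
    have hcard1 : ((univ \ C).image e).card = k - m := by
      rw [Finset.card_image_of_injective _ e.injective,
        Finset.card_sdiff_of_subset (Finset.subset_univ _), Finset.card_univ, hcardι, ← hm]
    have := Finset.card_le_card himg
    rw [hcard1, Fin.card_Iio] at this
    rw [hmemT]
    omega
  have hCimg_eq : ∀ e : Option (Fin (k-1)) ≃ Fin k, (∀ o o' : Option (Fin (k-1)), w o < w o' → e o < e o') →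
      C.image e = T := by
    intro e hsrt
    apply Finset.eq_of_subset_of_card_le
    · intro t ht
      obtain ⟨i, hiC, rfl⟩ := Finset.mem_image.mp ht
      exact hCimg e hsrt i hiC
    · rw [hcardT, Finset.card_image_of_injective _ e.injective]
  have hCcimg : ∀ e : Option (Fin (k-1)) ≃ Fin k, (∀ o o' : Option (Fin (k-1)), w o < w o' → e o < e o') →
      ∀ i ∈ univ \ C, e i ∈ univ \ T := by
    intro e hsrt i hi
    rw [Finset.mem_sdiff] at hi ⊢
    refine ⟨mem_univ _, fun hT' => ?_⟩
    rw [← hCimg_eq e hsrt] at hT'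
    obtain ⟨i'', hi'', he⟩ := Finset.mem_image.mp hT'
    exact hi.2 (e.injective he ▸ hi'')
  -- the injection into embeddings
  have hcount : Fintype.card {e : Option (Fin (k-1)) ≃ Fin k // ∀ o o' : Option (Fin (k-1)), w o < w o' → e o < e o'}
      ≤ m.factorial * (k - m).factorial := by
    have hinj : Function.Injective
        (fun (e : {e : Option (Fin (k-1)) ≃ Fin k // ∀ o o' : Option (Fin (k-1)), w o < w o' → e o < e o'}) =>
          ((⟨fun i => ⟨e.1 i.1, hCimg e.1 e.2 i.1 i.2⟩,
            by intro i i' h; exact Subtype.ext (e.1.injective (congrArg Subtype.val h))⟩ : (↥C ↪ ↥T)),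
           (⟨fun i => ⟨e.1 i.1, hCcimg e.1 e.2 i.1 i.2⟩,
            by intro i i' h; exact Subtype.ext (e.1.injective (congrArg Subtype.val h))⟩ : (↥(univ \ C) ↪ ↥(univ \ T))))) := by
      intro e1 e2 h
      rw [Prod.mk.injEq] at h
      apply Subtype.ext
      apply Equiv.ext
      intro i
      by_cases hiC : i ∈ C
      · have := congrFun (congrArg (fun f => f.toFun) h.1) ⟨i, hiC⟩
        exact congrArg Subtype.val this
      · have hiC' : i ∈ univ \ C := Finset.mem_sdiff.mpr ⟨mem_univ _, hiC⟩
        have := congrFun (congrArg (fun f => f.toFun) h.2) ⟨i, hiC'⟩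
        exact congrArg Subtype.val this
    have hcard := Fintype.card_le_of_injective _ hinj
    rw [Fintype.card_prod, Fintype.card_embedding_eq, Fintype.card_embedding_eq] at hcard
    simp only [Fintype.card_coe] at hcard
    rw [hcardT, ← hm] at hcard
    have hcardCc : (univ \ C).card = k - m := by
      rw [Finset.card_sdiff_of_subset (Finset.subset_univ _), Finset.card_univ, hcardι, ← hm]
    have hcardTc : (univ \ T).card = k - m := by
      rw [Finset.card_sdiff_of_subset (Finset.subset_univ _), Finset.card_univ, Fintype.card_fin, hcardT]
    rw [hcardCc, hcardTc, Nat.descFactorial_self, Nat.descFactorial_self] at hcard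
    exact hcard
  -- extension of maximizing injections to sorted equivs
  have hext : ∀ π : Fin (k-1) → Fin k, π ∈ Pis k → ∃ e : Option (Fin (k-1)) ≃ Fin k, ∀ j, e (some j) = π j := by
    intro π hπ
    rw [mem_Pis_iff] at hπ
    have hmiss : (univ \ univ.image π).Nonempty := by
      rw [← Finset.card_pos, Finset.card_sdiff_of_subset (Finset.subset_univ _), Finset.card_univ,
        Fintype.card_fin, Finset.card_image_of_injective _ hπ, Finset.card_univ, Fintype.card_fin]
      omega
    obtain ⟨v, hv⟩ := hmiss
    rw [Finset.mem_sdiff] at hv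
    have hvnot : ∀ j, π j ≠ v := by
      intro j h
      exact hv.2 (Finset.mem_image.mpr ⟨j, mem_univ _, h⟩)
    set f : Option (Fin (k-1)) → Fin k := fun o => o.elim v π with hf
    have hfinj : Function.Injective f := by
      intro o o' h
      match o, o' with
      | none, none => rfl
      | none, some j => exact absurd h.symm (hvnot j)
      | some j, none => exact absurd h (hvnot j)
      | some j, some j' => exact congrArg some (hπ h)
    have hfbij : Function.Bijective f :=
      (Fintype.bijective_iff_injective_and_card f).mpr ⟨hfinj, by rw [hcardι, Fintype.card_fin]⟩
    exact ⟨Equiv.ofBijective f hfbij, fun j => rfl⟩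
  -- final injection
  have hfinal : ((Pis k).filter (fun π => (∑ j, u j * c (π j)) = M)).card
      ≤ Fintype.card {e : Option (Fin (k-1)) ≃ Fin k // ∀ o o' : Option (Fin (k-1)), w o < w o' → e o < e o'} := by
    rw [← Fintype.card_coe]
    apply Fintype.card_le_of_injective
      (fun π => ⟨Classical.choose (hext π.1 (Finset.mem_filter.mp π.2).1),
        hsorted _ (by
          rw [hGrestrict]
          have hch := Classical.choose_spec (hext π.1 (Finset.mem_filter.mp π.2).1)
          have : (fun j => (Classical.choose (hext π.1 (Finset.mem_filter.mp π.2).1)) (some j)) = π.1 := funext hch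
          rw [show (∑ j, u j * c ((Classical.choose (hext π.1 (Finset.mem_filter.mp π.2).1)) (some j))) = ∑ j, u j * c (π.1 j) from by
            apply Finset.sum_congr rfl; intro j _; rw [hch j]]
          exact (Finset.mem_filter.mp π.2).2)⟩)
    intro π1 π2 h
    apply Subtype.ext
    have h1 := Classical.choose_spec (hext π1.1 (Finset.mem_filter.mp π1.2).1)
    have h2 := Classical.choose_spec (hext π2.1 (Finset.mem_filter.mp π2.2).1)
    funext j
    rw [← h1 j, ← h2 j]
    rw [Subtype.mk.injEq] at h
    rw [h]
  calc ((Pis k).filter (fun π => (∑ j, u j * c (π j)) = M)).card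
      ≤ m.factorial * (k - m).factorial := hfinal.trans hcount
    _ ≤ (k-1).factorial := factorial_mul_factorial_le hm1 hmk

end Count
end Stmt10Aux

namespace Stmt10Aux
open Finset

variable {b k : ℕ} {a : Fin b → Fin k → ℝ}

lemma cont_inner (v : Fin (k-1) → ℝ) :
    Continuous fun t : Fin (k-1) → ℝ => ∑ j, t j * v j :=
  continuous_finset_sum _ fun j _ => (continuous_apply j).mul continuous_const

lemma sum_exp_pos (hk : 1 ≤ k) (t : Fin (k-1) → ℝ) (i : Fin b) :
    0 < ∑ π ∈ Pis k, Real.exp (∑ j, t j * a i (π j)) :=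
  Finset.sum_pos (fun _ _ => Real.exp_pos _) (Pis_nonempty hk)

lemma kfact_pos : (0:ℝ) < (k.factorial : ℝ) := by exact_mod_cast k.factorial_pos

lemma cont_kappa (hk : 1 ≤ k) : Continuous (kappa b k a) := by
  unfold kappa
  apply continuous_const.mul
  apply continuous_finset_sum
  intro i _
  apply Continuous.log
  · exact continuous_const.mul (continuous_finset_sum _ fun π _ =>
      Real.continuous_exp.comp (cont_inner (fun j => a i (π j))))
  · intro t
    exact ne_of_gt (mul_pos (inv_pos.mpr kfact_pos) (sum_exp_pos hk t i))

lemma cont_lamArg (hk : 1 ≤ k) (y : Fin (k-1) → ℝ) : Continuous (lamArg b k a y) :=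
  (cont_inner y).sub (cont_kappa hk)

lemma lamArg_zero (hk : 1 ≤ k) (y : Fin (k-1) → ℝ) : lamArg b k a y 0 = 0 := by
  unfold lamArg kappa
  have h1 : ∀ i : Fin b, Real.log ((k.factorial : ℝ)⁻¹ *
      ∑ π ∈ Pis k, Real.exp (∑ j, (0 : Fin (k-1) → ℝ) j * a i (π j))) = 0 := by
    intro i
    have : ∀ π ∈ Pis k, Real.exp (∑ j, (0 : Fin (k-1) → ℝ) j * a i (π j)) = 1 := by
      intro π _; simp
    rw [Finset.sum_congr rfl this, Finset.sum_const, card_Pis hk]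
    simp [ne_of_gt (kfact_pos (k := k))]
  rw [Finset.sum_congr rfl (fun i _ => h1 i)]
  simp

set_option maxHeartbeats 1000000 in
lemma kappa_ge (hb : 1 ≤ b) (hk : 1 ≤ k) (t : Fin (k-1) → ℝ)
    (p : Fin b → (Fin (k-1) → Fin k)) (hp : ∀ i, p i ∈ Pis k) :
    (b:ℝ)⁻¹ * (∑ i, ∑ j, t j * a i (p i j)) - Real.log (k.factorial) ≤ kappa b k a t := by
  have hb0 : (0:ℝ) < b := by exact_mod_cast hb
  unfold kappa
  have h1 : ∀ i : Fin b, (∑ j, t j * a i (p i j)) - Real.log (k.factorial)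
      ≤ Real.log ((k.factorial : ℝ)⁻¹ * ∑ π ∈ Pis k, Real.exp (∑ j, t j * a i (π j))) := by
    intro i
    have h2 : Real.exp (∑ j, t j * a i (p i j)) ≤ ∑ π ∈ Pis k, Real.exp (∑ j, t j * a i (π j)) := by
      have h := Finset.single_le_sum (f := fun π => Real.exp (∑ j, t j * a i (π j)))
        (s := Pis k) (fun π _ => (Real.exp_pos _).le) (hp i)
      simpa using h
    have h3 : (k.factorial : ℝ)⁻¹ * Real.exp (∑ j, t j * a i (p i j))
        ≤ (k.factorial : ℝ)⁻¹ * ∑ π ∈ Pis k, Real.exp (∑ j, t j * a i (π j)) :=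
      mul_le_mul_of_nonneg_left h2 (inv_nonneg.mpr kfact_pos.le)
    have h4 := Real.log_le_log (mul_pos (inv_pos.mpr kfact_pos) (Real.exp_pos _)) h3
    have h5 : Real.log ((k.factorial : ℝ)⁻¹ * Real.exp (∑ j, t j * a i (p i j)))
        = -(Real.log (k.factorial)) + ∑ j, t j * a i (p i j) := by
      rw [Real.log_mul (by positivity) (Real.exp_ne_zero _), Real.log_inv, Real.log_exp]
    rw [h5] at h4
    linarith
  have h5 := Finset.sum_le_sum (fun i (_ : i ∈ univ) => h1 i)
  rw [Finset.sum_sub_distrib, Finset.sum_const, Finset.card_univ, Fintype.card_fin] at h5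
  have h6 := mul_le_mul_of_nonneg_left h5 (inv_nonneg.mpr hb0.le)
  calc (b:ℝ)⁻¹ * (∑ i, ∑ j, t j * a i (p i j)) - Real.log (k.factorial)
      = (b:ℝ)⁻¹ * ((∑ i, ∑ j, t j * a i (p i j)) - b • Real.log (k.factorial)) := by
        rw [nsmul_eq_mul, mul_sub, ← mul_assoc, inv_mul_cancel₀ (ne_of_gt hb0), one_mul]
    _ ≤ _ := h6

end Stmt10Aux

namespace Stmt10Aux
open Finset

variable {b k : ℕ} {a : Fin b → Fin k → ℝ}

set_option maxHeartbeats 1000000 in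
lemma no_escape (hb : 1 ≤ b) (hk : 2 ≤ k) (ha : ∀ i, StrictMono (a i))
    (x : Fin (k-1) → ℝ) (c : ℝ) (hcf : ∀ t, lamArg b k a x t ≤ c) (hck : c < Real.log k)
    (u : Fin (k-1) → ℝ) (hu : u ≠ 0)
    (p : Fin b → (Fin (k-1) → Fin k)) (hp : ∀ i, p i ∈ Pis k)
    (hpmax : ∀ (i : Fin b), ∀ π ∈ Pis k, (∑ j, u j * a i (π j)) ≤ ∑ j, u j * a i (p i j))
    (hL : 0 ≤ (∑ j, u j * x j) - (b:ℝ)⁻¹ * ∑ i, ∑ j, u j * a i (p i j)) : False := by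
  have hk1 : 1 ≤ k := by omega
  have hb0 : (0:ℝ) < b := by exact_mod_cast hb
  have hk0 : (0:ℝ) < k := by exact_mod_cast (by omega : 0 < k)
  have hkf : (0:ℝ) < (k.factorial:ℝ) := kfact_pos
  have hkf1 : (0:ℝ) < ((k-1).factorial:ℝ) := by exact_mod_cast (k-1).factorial_pos
  classical
  set M : Fin b → ℝ := fun i => ∑ j, u j * a i (p i j) with hMdef
  have hMsum : (∑ i, M i) = ∑ i, ∑ j, u j * a i (p i j) := rfl
  set A : Fin b → Finset (Fin (k-1) → Fin k) :=
    fun i => (Pis k).filter (fun π => (∑ j, u j * a i (π j)) = M i) with hAdef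
  have hcardA : ∀ i, (A i).card ≤ (k-1).factorial := fun i =>
    count_max hk u hu (a i) (ha i) (M i) (hpmax i)
  have hfaclt : (k-1).factorial < k.factorial :=
    (Nat.factorial_lt (by omega : 0 < k-1)).mpr (by omega)
  have hBne : ∀ i, ((Pis k) \ A i).Nonempty := by
    intro i
    rw [Finset.sdiff_nonempty]
    intro hsub
    have h1 := Finset.card_le_card hsub
    rw [card_Pis hk1] at h1
    have := hcardA i
    omega
  set E : Fin b → ℝ :=
    fun i => ((Pis k) \ A i).sup' (hBne i) (fun π => ∑ j, u j * a i (π j)) with hEdef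
  have hE : ∀ i, E i < M i := by
    intro i
    rw [hEdef]
    rw [Finset.sup'_lt_iff]
    intro π hπ
    rw [Finset.mem_sdiff] at hπ
    rcases lt_or_eq_of_le (hpmax i π hπ.1) with h | h
    · exact h
    · exact absurd (Finset.mem_filter.mpr ⟨hπ.1, h⟩) hπ.2
  have hbne : (univ : Finset (Fin b)).Nonempty := ⟨⟨0, hb⟩, mem_univ _⟩
  set δ : ℝ := univ.inf' hbne (fun i => M i - E i) with hδdef
  have hδ : 0 < δ := by
    rw [hδdef, Finset.lt_inf'_iff]
    exact fun i _ => sub_pos.mpr (hE i)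
  have hδle : ∀ i, E i ≤ M i - δ := by
    intro i
    have h1 : δ ≤ M i - E i := by
      rw [hδdef]; exact Finset.inf'_le _ (mem_univ i)
    linarith
  set r : ℝ := (k.factorial:ℝ) * Real.exp (-c) - ((k-1).factorial:ℝ) with hrdef
  have hexpc : ((k:ℝ))⁻¹ < Real.exp (-c) := by
    have h1 : Real.exp (-Real.log k) < Real.exp (-c) := Real.exp_lt_exp.mpr (by linarith)
    rwa [Real.exp_neg, Real.exp_log hk0] at h1
  have hfacteq : (k.factorial:ℝ) = (k:ℝ) * ((k-1).factorial:ℝ) := by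
    rw [← Nat.cast_mul]
    congr 1
    conv_lhs => rw [show k = (k-1)+1 by omega]
    rw [Nat.factorial_succ]
    congr 1
    omega
  have hr : 0 < r := by
    rw [hrdef]
    have h2 : (k.factorial:ℝ) * ((k:ℝ))⁻¹ = ((k-1).factorial:ℝ) := by
      rw [hfacteq]; field_simp
    nlinarith [hkf]
  set s : ℝ := max ((Real.log ((k.factorial:ℝ)/r) + 1)/δ) 0 with hsdef
  have hs0 : 0 ≤ s := le_max_right _ _
  have hsδ : Real.log ((k.factorial:ℝ)/r) < s * δ := by
    have h1 : (Real.log ((k.factorial:ℝ)/r) + 1)/δ ≤ s := le_max_left _ _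
    have h2 := mul_le_mul_of_nonneg_right h1 hδ.le
    rw [div_mul_cancel₀ _ (ne_of_gt hδ)] at h2
    linarith
  have hexp : (k.factorial:ℝ) * Real.exp (-(s*δ)) < r := by
    have h3 : (k.factorial:ℝ)/r < Real.exp (s*δ) := by
      rw [← Real.exp_log (div_pos hkf hr)]
      exact Real.exp_lt_exp.mpr hsδ
    have h4 : (k.factorial:ℝ) < Real.exp (s*δ) * r := (div_lt_iff₀ hr).mp h3
    have h5 := mul_lt_mul_of_pos_right h4 (inv_pos.mpr (Real.exp_pos (s*δ)))
    rw [Real.exp_neg]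
    calc (k.factorial:ℝ) * (Real.exp (s*δ))⁻¹
        < Real.exp (s*δ) * r * (Real.exp (s*δ))⁻¹ := h5
      _ = r := by field_simp
  set Ac : ℝ := ((k-1).factorial:ℝ) + (k.factorial:ℝ) * Real.exp (-(s*δ)) with hAcdef
  have hAcpos : 0 < Ac := by
    rw [hAcdef]; positivity
  have hAclt : Ac < (k.factorial:ℝ) * Real.exp (-c) := by
    have := hexp
    rw [hrdef] at this
    rw [hAcdef]
    linarith
  have hsum_le : ∀ i : Fin b, (∑ π ∈ Pis k, Real.exp (∑ j, (s • u) j * a i (π j)))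
      ≤ Ac * Real.exp (s * M i) := by
    intro i
    have hsmul : ∀ π : Fin (k-1) → Fin k,
        (∑ j, (s • u) j * a i (π j)) = s * ∑ j, u j * a i (π j) := by
      intro π
      rw [Finset.mul_sum]
      apply Finset.sum_congr rfl
      intro j _
      simp [mul_assoc]
    have hsplit : (∑ π ∈ Pis k, Real.exp (∑ j, (s • u) j * a i (π j)))
        = (∑ π ∈ (Pis k) \ A i, Real.exp (∑ j, (s • u) j * a i (π j)))
          + ∑ π ∈ A i, Real.exp (∑ j, (s • u) j * a i (π j)) := by
      rw [Finset.sum_sdiff (Finset.filter_subset _ _)]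
    have hA_le : (∑ π ∈ A i, Real.exp (∑ j, (s • u) j * a i (π j)))
        ≤ ((k-1).factorial:ℝ) * Real.exp (s * M i) := by
      have h1 : ∀ π ∈ A i, Real.exp (∑ j, (s • u) j * a i (π j)) = Real.exp (s * M i) := by
        intro π hπ
        rw [hsmul π, (Finset.mem_filter.mp hπ).2]
      rw [Finset.sum_congr rfl h1, Finset.sum_const, nsmul_eq_mul]
      apply mul_le_mul_of_nonneg_right _ (Real.exp_pos _).le
      exact_mod_cast hcardA i
    have hB_le : (∑ π ∈ (Pis k) \ A i, Real.exp (∑ j, (s • u) j * a i (π j)))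
        ≤ (k.factorial:ℝ) * (Real.exp (-(s*δ)) * Real.exp (s * M i)) := by
      have h1 : ∀ π ∈ (Pis k) \ A i, Real.exp (∑ j, (s • u) j * a i (π j))
          ≤ Real.exp (-(s*δ)) * Real.exp (s * M i) := by
        intro π hπ
        rw [hsmul π, ← Real.exp_add]
        apply Real.exp_le_exp.mpr
        have h2 : (∑ j, u j * a i (π j)) ≤ M i - δ := by
          refine le_trans ?_ (hδle i)
          rw [hEdef]
          exact Finset.le_sup' (fun π => ∑ j, u j * a i (π j)) hπ
        have h3 := mul_le_mul_of_nonneg_left h2 hs0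
        nlinarith
      calc (∑ π ∈ (Pis k) \ A i, Real.exp (∑ j, (s • u) j * a i (π j)))
          ≤ ((Pis k) \ A i).card • (Real.exp (-(s*δ)) * Real.exp (s * M i)) :=
            Finset.sum_le_card_nsmul _ _ _ h1
        _ ≤ (k.factorial:ℝ) * (Real.exp (-(s*δ)) * Real.exp (s * M i)) := by
            rw [nsmul_eq_mul]
            apply mul_le_mul_of_nonneg_right _ (by positivity)
            have hc1 : ((Pis k) \ A i).card ≤ k.factorial := by
              have h6 := Finset.card_le_card (Finset.sdiff_subset (s := Pis k) (t := A i))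
              rwa [card_Pis hk1] at h6
            exact_mod_cast hc1
    calc (∑ π ∈ Pis k, Real.exp (∑ j, (s • u) j * a i (π j)))
        = (∑ π ∈ (Pis k) \ A i, Real.exp (∑ j, (s • u) j * a i (π j)))
          + ∑ π ∈ A i, Real.exp (∑ j, (s • u) j * a i (π j)) := hsplit
      _ ≤ (k.factorial:ℝ) * (Real.exp (-(s*δ)) * Real.exp (s * M i))
          + ((k-1).factorial:ℝ) * Real.exp (s * M i) := add_le_add hB_le hA_le
      _ = Ac * Real.exp (s * M i) := by rw [hAcdef]; ring
  have hκle : kappa b k a (s • u)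
      ≤ Real.log (Ac / (k.factorial:ℝ)) + s * ((b:ℝ)⁻¹ * ∑ i, M i) := by
    unfold kappa
    have h1 : ∀ i : Fin b, Real.log ((k.factorial:ℝ)⁻¹ *
          ∑ π ∈ Pis k, Real.exp (∑ j, (s • u) j * a i (π j)))
        ≤ Real.log (Ac / (k.factorial:ℝ)) + s * M i := by
      intro i
      have h2 := Real.log_le_log (mul_pos (inv_pos.mpr hkf) (sum_exp_pos hk1 (s • u) i))
        (mul_le_mul_of_nonneg_left (hsum_le i) (inv_nonneg.mpr hkf.le))
      have h3 : (k.factorial:ℝ)⁻¹ * (Ac * Real.exp (s * M i))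
          = (Ac/(k.factorial:ℝ)) * Real.exp (s * M i) := by ring
      rw [h3, Real.log_mul (by positivity) (Real.exp_ne_zero _), Real.log_exp] at h2
      exact h2
    have h4 := Finset.sum_le_sum (fun i (_ : i ∈ univ) => h1 i)
    rw [Finset.sum_add_distrib, Finset.sum_const, Finset.card_univ, Fintype.card_fin,
      ← Finset.mul_sum] at h4
    have h5 := mul_le_mul_of_nonneg_left h4 (inv_nonneg.mpr hb0.le)
    calc (b:ℝ)⁻¹ * ∑ i, Real.log ((k.factorial:ℝ)⁻¹ *
          ∑ π ∈ Pis k, Real.exp (∑ j, (s • u) j * a i (π j)))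
        ≤ (b:ℝ)⁻¹ * (b • Real.log (Ac/(k.factorial:ℝ)) + s * ∑ i, M i) := h5
      _ = Real.log (Ac/(k.factorial:ℝ)) + s * ((b:ℝ)⁻¹ * ∑ i, M i) := by
          rw [nsmul_eq_mul]
          field_simp
  have hinner : (∑ j, (s • u) j * x j) = s * ∑ j, u j * x j := by
    rw [Finset.mul_sum]
    apply Finset.sum_congr rfl
    intro j _
    simp [mul_assoc]
  have hlogdiv : Real.log (Ac / (k.factorial:ℝ)) = Real.log Ac - Real.log (k.factorial:ℝ) :=
    Real.log_div (ne_of_gt hAcpos) (ne_of_gt hkf)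
  have hlam : s * ((∑ j, u j * x j) - (b:ℝ)⁻¹ * ∑ i, M i)
        + (Real.log (k.factorial:ℝ) - Real.log Ac) ≤ lamArg b k a x (s • u) := by
    unfold lamArg
    rw [hinner]
    rw [hlogdiv] at hκle
    have hsd : s * ((∑ j, u j * x j) - (b:ℝ)⁻¹ * ∑ i, M i)
        = s * (∑ j, u j * x j) - s * ((b:ℝ)⁻¹ * ∑ i, M i) := by ring
    linarith
  have hlog2 : c < Real.log (k.factorial:ℝ) - Real.log Ac := by
    have h1 : Ac * Real.exp c < (k.factorial:ℝ) := by
      have h2 : Real.exp (-c) * Real.exp c = 1 := by rw [← Real.exp_add]; simp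
      nlinarith [Real.exp_pos c]
    have h3 : Real.log (Ac * Real.exp c) < Real.log (k.factorial:ℝ) :=
      Real.log_lt_log (by positivity) h1
    rw [Real.log_mul (ne_of_gt hAcpos) (Real.exp_ne_zero _), Real.log_exp] at h3
    linarith
  have hfin := hcf (s • u)
  have hL' : 0 ≤ (∑ j, u j * x j) - (b:ℝ)⁻¹ * ∑ i, M i := by
    rw [hMsum]; exact hL
  have hsL : 0 ≤ s * ((∑ j, u j * x j) - (b:ℝ)⁻¹ * ∑ i, M i) := mul_nonneg hs0 hL'
  linarith

end Stmt10Aux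

namespace Stmt10Aux
open Finset Filter

variable {b k : ℕ} {a : Fin b → Fin k → ℝ}

set_option maxHeartbeats 1000000 in
lemma exists_radius (hb : 1 ≤ b) (hk : 2 ≤ k) (ha : ∀ i, StrictMono (a i))
    (x : Fin (k-1) → ℝ) (c : ℝ) (hcf : ∀ t, lamArg b k a x t ≤ c) (hck : c < Real.log k) :
    ∃ n : ℕ, ∀ y t, ‖y - x‖ ≤ 1/(n+1 : ℝ) → 0 ≤ lamArg b k a y t → ‖t‖ ≤ (n+1 : ℝ) := by
  have hk1 : 1 ≤ k := by omega
  have hb0 : (0:ℝ) < b := by exact_mod_cast hb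
  have hlogkf : (0:ℝ) ≤ Real.log (k.factorial) := by
    apply Real.log_nonneg
    exact_mod_cast Nat.one_le_iff_ne_zero.mpr (Nat.factorial_ne_zero k)
  by_contra hcon
  push_neg at hcon
  choose y t hy hf ht using hcon
  have htpos : ∀ n, 0 < ‖t n‖ := fun n => lt_trans (by positivity) (ht n)
  have hmax : ∀ n (i : Fin b), ∃ π ∈ Pis k,
      ∀ π' ∈ Pis k, (∑ j, (t n) j * a i (π' j)) ≤ ∑ j, (t n) j * a i (π j) :=
    fun n i => Finset.exists_max_image (Pis k) _ (Pis_nonempty hk1)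
  choose P hP1 hP2 using hmax
  set u : ℕ → (Fin (k-1) → ℝ) := fun n => (‖t n‖)⁻¹ • t n with hudef
  have hu1 : ∀ n, u n ∈ Metric.sphere (0 : Fin (k-1) → ℝ) 1 := by
    intro n
    rw [mem_sphere_zero_iff_norm, hudef]
    simp only [norm_smul, norm_inv, norm_norm]
    exact inv_mul_cancel₀ (ne_of_gt (htpos n))
  obtain ⟨v, hvs, φ, hφmono, hφtend⟩ :=
    (isCompact_sphere (0 : Fin (k-1) → ℝ) 1).tendsto_subseq hu1
  obtain ⟨p, hpfib⟩ := Finite.exists_infinite_fiber (fun n => P (φ n))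
  have hfibinf : {n : ℕ | P (φ n) = p}.Infinite := by
    rw [← Set.infinite_coe_iff]
    exact hpfib
  have hgex : ∀ n, ∃ m, m ∈ {n : ℕ | P (φ n) = p} ∧ n < m := fun n => hfibinf.exists_gt n
  choose sg hsg1 hsg2 using hgex
  have hsgtend : Tendsto sg atTop atTop :=
    tendsto_atTop_mono (fun n => (hsg2 n).le) tendsto_id
  have hutend : Tendsto (fun n => u (φ (sg n))) atTop (nhds v) := hφtend.comp hsgtend
  have hψge : ∀ n, (n+1:ℕ) ≤ φ (sg n) := by
    intro n
    calc n+1 ≤ sg n := hsg2 n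
    _ ≤ φ (sg n) := hφmono.le_apply
  have hpPis : ∀ i, p i ∈ Pis k := by
    intro i
    have h1 := hP1 (φ (sg 0)) i
    have h2 : P (φ (sg 0)) = p := hsg1 0
    rwa [h2] at h1
  have hpmax_u : ∀ n (i : Fin b), ∀ π ∈ Pis k,
      (∑ j, (u (φ (sg n))) j * a i (π j)) ≤ ∑ j, (u (φ (sg n))) j * a i (p i j) := by
    intro n i π hπ
    have h1 := hP2 (φ (sg n)) i π hπ
    rw [hsg1 n] at h1
    have h2 : (0:ℝ) ≤ (‖t (φ (sg n))‖)⁻¹ := inv_nonneg.mpr (norm_nonneg _)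
    have h3 := mul_le_mul_of_nonneg_left h1 h2
    calc (∑ j, (u (φ (sg n))) j * a i (π j))
        = (‖t (φ (sg n))‖)⁻¹ * ∑ j, (t (φ (sg n))) j * a i (π j) := by
          rw [Finset.mul_sum]
          exact Finset.sum_congr rfl (fun j _ => by simp [hudef, mul_assoc])
      _ ≤ (‖t (φ (sg n))‖)⁻¹ * ∑ j, (t (φ (sg n))) j * a i (p i j) := h3
      _ = ∑ j, (u (φ (sg n))) j * a i (p i j) := by
          rw [Finset.mul_sum]
          exact Finset.sum_congr rfl (fun j _ => by simp [hudef, mul_assoc])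
  have hcontv : ∀ (w : Fin (k-1) → ℝ), Tendsto (fun n => ∑ j, (u (φ (sg n))) j * w j) atTop
      (nhds (∑ j, v j * w j)) := fun w => ((cont_inner w).tendsto v).comp hutend
  have hpmax_inf : ∀ (i : Fin b), ∀ π ∈ Pis k,
      (∑ j, v j * a i (π j)) ≤ ∑ j, v j * a i (p i j) := by
    intro i π hπ
    exact le_of_tendsto_of_tendsto' (hcontv (fun j => a i (π j))) (hcontv (fun j => a i (p i j)))
      (fun n => hpmax_u n i π hπ)
  have hLcont : Tendsto (fun n => (∑ j, (u (φ (sg n))) j * x j)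
        - (b:ℝ)⁻¹ * ∑ i, ∑ j, (u (φ (sg n))) j * a i (p i j)) atTop
      (nhds ((∑ j, v j * x j) - (b:ℝ)⁻¹ * ∑ i, ∑ j, v j * a i (p i j))) := by
    apply Tendsto.sub (hcontv x)
    exact Tendsto.const_mul _ (tendsto_finset_sum _ (fun i _ => hcontv (fun j => a i (p i j))))
  set C0 : ℝ := ((k-1:ℕ):ℝ) + Real.log (k.factorial) with hC0def
  have hkey : ∀ n : ℕ, -C0/((n:ℝ)+1) ≤ (∑ j, (u (φ (sg n))) j * x j)
      - (b:ℝ)⁻¹ * ∑ i, ∑ j, (u (φ (sg n))) j * a i (p i j) := by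
    intro n
    set N := φ (sg n) with hN
    have h1 : 0 ≤ lamArg b k a (y N) (t N) := hf N
    have h2 := kappa_ge (a := a) hb hk1 (t N) p hpPis
    have h3 : 0 ≤ (∑ j, (t N) j * (y N) j) - (b:ℝ)⁻¹ * (∑ i, ∑ j, (t N) j * a i (p i j))
        + Real.log (k.factorial) := by
      unfold lamArg at h1
      linarith
    have h4 : (∑ j, (t N) j * (y N) j)
        ≤ (∑ j, (t N) j * x j) + ((k-1:ℕ):ℝ) * (‖t N‖ * ‖y N - x‖) := by
      have h5 : ∀ j : Fin (k-1), (t N) j * (y N) j ≤ (t N) j * x j + ‖t N‖ * ‖y N - x‖ := by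
        intro j
        have h6 : (t N) j * (y N) j - (t N) j * x j = (t N) j * ((y N - x) j) := by
          simp only [Pi.sub_apply]
          ring
        have ha1 := norm_le_pi_norm (t N) j
        have ha2 := norm_le_pi_norm (y N - x) j
        rw [Real.norm_eq_abs] at ha1 ha2
        have h7 : (t N) j * ((y N - x) j) ≤ ‖t N‖ * ‖y N - x‖ := by
          calc (t N) j * ((y N - x) j) ≤ |(t N) j * ((y N - x) j)| := le_abs_self _
            _ = |(t N) j| * |(y N - x) j| := abs_mul _ _
            _ ≤ ‖t N‖ * ‖y N - x‖ :=
                mul_le_mul ha1 ha2 (abs_nonneg _) (norm_nonneg _)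
        linarith
      calc (∑ j, (t N) j * (y N) j)
          ≤ ∑ j : Fin (k-1), ((t N) j * x j + ‖t N‖ * ‖y N - x‖) :=
            Finset.sum_le_sum (fun j _ => h5 j)
        _ = (∑ j, (t N) j * x j) + ((k-1:ℕ):ℝ) * (‖t N‖ * ‖y N - x‖) := by
            rw [Finset.sum_add_distrib, Finset.sum_const, Finset.card_univ, Fintype.card_fin,
              nsmul_eq_mul]
    have hhom : ∀ w : Fin (k-1) → ℝ, (∑ j, (t N) j * w j) = ‖t N‖ * ∑ j, (u N) j * w j := by
      intro w
      rw [Finset.mul_sum]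
      apply Finset.sum_congr rfl
      intro j _
      rw [hudef]
      simp only [Pi.smul_apply, smul_eq_mul]
      rw [show ‖t N‖ * ((‖t N‖)⁻¹ * (t N) j * w j) = (‖t N‖ * (‖t N‖)⁻¹) * ((t N) j * w j)
        from by ring, mul_inv_cancel₀ (ne_of_gt (htpos N)), one_mul]
    have h8 : 0 ≤ ‖t N‖ * ((∑ j, (u N) j * x j) - (b:ℝ)⁻¹ * ∑ i, ∑ j, (u N) j * a i (p i j))
        + ((k-1:ℕ):ℝ) * (‖t N‖ * ‖y N - x‖) + Real.log (k.factorial) := by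
      have e1 := hhom x
      have e2 : (∑ i, ∑ j, (t N) j * a i (p i j))
          = ‖t N‖ * ∑ i, ∑ j, (u N) j * a i (p i j) := by
        rw [Finset.mul_sum]
        exact Finset.sum_congr rfl (fun i _ => hhom (fun j => a i (p i j)))
      have h3' : 0 ≤ (∑ j, (t N) j * x j) - (b:ℝ)⁻¹ * (∑ i, ∑ j, (t N) j * a i (p i j))
          + ((k-1:ℕ):ℝ) * (‖t N‖ * ‖y N - x‖) + Real.log (k.factorial) := by linarith
      rw [e1, e2] at h3'
      calc (0:ℝ) ≤ ‖t N‖ * (∑ j, (u N) j * x j)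
            - (b:ℝ)⁻¹ * (‖t N‖ * ∑ i, ∑ j, (u N) j * a i (p i j))
            + ((k-1:ℕ):ℝ) * (‖t N‖ * ‖y N - x‖) + Real.log (k.factorial) := h3'
        _ = ‖t N‖ * ((∑ j, (u N) j * x j) - (b:ℝ)⁻¹ * ∑ i, ∑ j, (u N) j * a i (p i j))
            + ((k-1:ℕ):ℝ) * (‖t N‖ * ‖y N - x‖) + Real.log (k.factorial) := by ring
    set LV : ℝ := (∑ j, (u N) j * x j) - (b:ℝ)⁻¹ * ∑ i, ∑ j, (u N) j * a i (p i j) with hLV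
    have h10 : -(Real.log (k.factorial)) ≤ ‖t N‖ * (LV + ((k-1:ℕ):ℝ) * ‖y N - x‖) := by
      have e3 : ‖t N‖ * (LV + ((k-1:ℕ):ℝ) * ‖y N - x‖)
          = ‖t N‖ * LV + ((k-1:ℕ):ℝ) * (‖t N‖ * ‖y N - x‖) := by ring
      linarith
    have h11 : (-(Real.log (k.factorial)))/‖t N‖ ≤ LV + ((k-1:ℕ):ℝ) * ‖y N - x‖ := by
      rw [div_le_iff₀ (htpos N)]
      rw [mul_comm] at h10
      exact h10
    have h12 : (-(Real.log (k.factorial)))/‖t N‖ = -(Real.log (k.factorial)/‖t N‖) :=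
      neg_div _ _
    have hNn : ((n:ℝ)+1) ≤ ((N:ℕ):ℝ)+1 := by
      have := hψge n
      have : (n+1:ℕ) ≤ N := this
      exact_mod_cast by omega
    have hyb : ‖y N - x‖ ≤ 1/((n:ℝ)+1) := by
      refine le_trans (hy N) ?_
      exact div_le_div_of_nonneg_left (by norm_num) (by positivity) hNn
    have htb : Real.log (k.factorial)/‖t N‖ ≤ Real.log (k.factorial)/((n:ℝ)+1) := by
      apply div_le_div_of_nonneg_left hlogkf (by positivity)
      calc ((n:ℝ)+1) ≤ ((N:ℕ):ℝ)+1 := hNn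
        _ ≤ ‖t N‖ := (ht N).le
    have hyb2 : ((k-1:ℕ):ℝ) * ‖y N - x‖ ≤ ((k-1:ℕ):ℝ) * (1/((n:ℝ)+1)) :=
      mul_le_mul_of_nonneg_left hyb (by positivity)
    have hfinal : -C0/((n:ℝ)+1) ≤ LV := by
      have hr2 : -C0/((n:ℝ)+1)
          = -(((k-1:ℕ):ℝ) * (1/((n:ℝ)+1)) + Real.log (k.factorial)/((n:ℝ)+1)) := by
        rw [hC0def]
        ring
      linarith
    exact hfinal
  have hneg_tend : Tendsto (fun n : ℕ => -C0/((n:ℝ)+1)) atTop (nhds 0) := by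
    have h1 := tendsto_one_div_add_atTop_nhds_zero_nat.const_mul (-C0)
    rw [mul_zero] at h1
    have h2 : (fun n : ℕ => -C0/((n:ℝ)+1)) = fun n : ℕ => -C0 * (1/((n:ℝ)+1)) := by
      funext n
      ring
    rw [h2]
    exact h1
  have hLinf : 0 ≤ (∑ j, v j * x j) - (b:ℝ)⁻¹ * ∑ i, ∑ j, v j * a i (p i j) :=
    le_of_tendsto_of_tendsto' hneg_tend hLcont hkey
  have hvnorm : ‖v‖ = 1 := by rwa [mem_sphere_zero_iff_norm] at hvs
  have hvne : v ≠ 0 := by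
    intro h
    rw [h, norm_zero] at hvnorm
    norm_num at hvnorm
  exact no_escape hb hk ha x c hcf hck v hvne p hpPis hpmax_inf hLinf

end Stmt10Aux

namespace Stmt10Aux
open Finset Filter

variable {b k : ℕ} {a : Fin b → Fin k → ℝ}

set_option maxHeartbeats 1000000 in
lemma interior_mem (hb : 1 ≤ b) (hk : 2 ≤ k) (ha : ∀ i, StrictMono (a i))
    (x : Fin (k-1) → ℝ) (h : Lam b k a x < ((Real.log k : ℝ) : EReal)) :
    x ∈ interior (Omega b k a) := by
  have hk1 : 1 ≤ k := by omega
  obtain ⟨c, hc1, hc2⟩ := EReal.lt_iff_exists_real_btwn.mp h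
  have hck : c < Real.log k := by exact_mod_cast hc2
  have hcf : ∀ t, lamArg b k a x t ≤ c := by
    intro t
    have h1 : ((lamArg b k a x t : ℝ) : EReal) ≤ Lam b k a x := by
      unfold Lam
      exact le_iSup (f := fun t' : Fin (k-1) → ℝ => ((lamArg b k a x t' : ℝ) : EReal)) t
    have h2 := lt_of_le_of_lt h1 hc1
    exact_mod_cast h2.le
  obtain ⟨n, hn⟩ := exists_radius hb hk ha x c hcf hck
  have hsub : Metric.ball x (1/(n+1 : ℝ)) ⊆ Omega b k a := by
    intro z hz
    have hzx : ‖z - x‖ ≤ 1/(n+1 : ℝ) := by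
      rw [Metric.mem_ball, dist_eq_norm] at hz
      exact hz.le
    have hDc : IsClosed {t : Fin (k-1) → ℝ | 0 ≤ lamArg b k a z t} :=
      isClosed_le continuous_const (cont_lamArg hk1 z)
    have hDsub : {t : Fin (k-1) → ℝ | 0 ≤ lamArg b k a z t}
        ⊆ Metric.closedBall 0 (n+1 : ℝ) := by
      intro t htD
      rw [Metric.mem_closedBall, dist_eq_norm, sub_zero]
      exact hn z t hzx htD
    have hDb : Bornology.IsBounded {t : Fin (k-1) → ℝ | 0 ≤ lamArg b k a z t} :=
      (Metric.isBounded_closedBall).subset hDsub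
    have hD0 : (0 : Fin (k-1) → ℝ) ∈ {t : Fin (k-1) → ℝ | 0 ≤ lamArg b k a z t} := by
      simp only [Set.mem_setOf_eq, lamArg_zero hk1 z, le_refl]
    obtain ⟨ts, htsD, hts⟩ := (Metric.isCompact_of_isClosed_isBounded hDc hDb).exists_isMaxOn
      ⟨0, hD0⟩ (cont_lamArg hk1 z).continuousOn
    refine ⟨ts, fun s => ?_⟩
    by_cases hs : 0 ≤ lamArg b k a z s
    · exact hts hs
    · push_neg at hs
      have h0 : lamArg b k a z 0 ≤ lamArg b k a z ts := hts hD0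
      rw [lamArg_zero hk1 z] at h0
      linarith
  exact mem_interior_iff_mem_nhds.mpr
    (Filter.mem_of_superset (Metric.ball_mem_nhds x (by positivity)) hsub)

end Stmt10Aux


open Stmt10Aux in
/-- Λ(x) ≥ log k for every x on the topological boundary of Ω; consequently,
for 0 ≤ c < log k, the level set {Λ ≤ c} intersected with the closure of Ω lies in Ω. -/
theorem stmt_10 (b k : ℕ) (hb : 1 ≤ b) (hk : 2 ≤ k) (a : Fin b → Fin k → ℝ)
    (ha : ∀ i : Fin b, StrictMono (a i)) :
    (∀ x ∈ frontier (Omega b k a), ((Real.log k : ℝ) : EReal) ≤ Lam b k a x) ∧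
    (∀ c : ℝ, 0 ≤ c → c < Real.log k →
      {x : Fin (k - 1) → ℝ | Lam b k a x ≤ ((c : ℝ) : EReal)} ∩ closure (Omega b k a) ⊆
        Omega b k a) := by
  constructor
  · intro x hx
    by_contra hlt
    push_neg at hlt
    have hint := interior_mem hb hk ha x hlt
    exact hx.2 hint
  · intro c hc0 hck x hx
    have h1 : Lam b k a x < ((Real.log k : ℝ) : EReal) :=
      lt_of_le_of_lt hx.1 (by exact_mod_cast hck)
    exact interior_subset (interior_mem hb hk ha x h1)
end
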